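/- arXiv:0709.0424 — 4 statements merged into one kernel-verified Lean document; each statement's English description precedes it below -/
import Mathlib

section
/- The orthogonal complement in 𝔥 of the direct sum 𝔥₁ ∔ 𝔥₂ admits the representation 𝔥 ⊖ (𝔥₁ ∔ 𝔥₂) = { y ∈ 𝔥 : y(x) = 0 for all x ∈ [α_{m−1}, α_m] and y(α_k) = 0 for all k = 1,…,n−1 }. That is, y ∈ 𝔥 satisfies ⟨y, z⟩ = 0 for all z ∈ 𝔥₁ and ⟨y, e_k⟩ = 0 for all k = 1,…,n−1 if and only if y vanishes identically on [α_{m−1}, α_m] and vanishes at every point α_k, k = 1,…,n−1. -/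
open MeasureTheory Set Filter Topology intervalIntegral ENNReal

/-- `Yf g x = ∫₀ˣ g(t) dt` : the element of `W̊₂¹[0,1]` with derivative `g`. -/
noncomputable def Yf (g : ℝ → ℝ) (x : ℝ) : ℝ := ∫ t in (0:ℝ)..x, g t

/-- `g` is the derivative of an element of the Sobolev space `𝔥 = W̊₂¹[0,1]`. -/
def InH (g : ℝ → ℝ) : Prop :=
  MemLp g 2 (volume.restrict (Ioo (0:ℝ) 1)) ∧ Yf g 1 = 0

/-- The derivative of the piecewise linear hat function `e` with nodes `γ < c < δ`
(equal to `(x-γ)/(c-γ)` on `[γ,c]`, `(δ-x)/(δ-c)` on `[c,δ]` and `0` elsewhere). -/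
noncomputable def ekderiv (γ c δ : ℝ) (x : ℝ) : ℝ :=
  if x ∈ Ioc γ c then 1 / (c - γ)
  else if x ∈ Ioc c δ then -(1 / (δ - c))
  else 0

lemma ae_zero_of_setIntegral_Ioc_zero {f : ℝ → ℝ} {p q : ℝ}
    (hint : IntegrableOn f (Ioc p q) volume)
    (hvan : ∀ u v, p ≤ u → u ≤ v → v ≤ q → ∫ t in Ioc u v, f t = 0) :
    ∀ᵐ x ∂(volume.restrict (Ioc p q)), f x = 0 := by
  set μ := volume.restrict (Ioc p q) with hμ
  haveI : IsFiniteMeasure μ := ⟨by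
    rw [Measure.restrict_apply_univ]; exact measure_Ioc_lt_top⟩
  have hf : Integrable f μ := hint
  have claim2 : ∀ u v : ℝ, ∫ x in Ioc u v, f x ∂μ = 0 := by
    intro u v
    rw [hμ, Measure.restrict_restrict measurableSet_Ioc, Ioc_inter_Ioc]
    rcases le_or_gt (u ⊔ p) (v ⊓ q) with hle | hlt
    · exact hvan _ _ le_sup_right hle inf_le_right
    · rw [Ioc_eq_empty (not_lt.mpr hlt.le)]
      simp
  have hfin : ∀ s : Set ℝ, (∫⁻ x in s, ENNReal.ofReal (f x) ∂μ) ≠ ⊤ ∧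
      (∫⁻ x in s, ENNReal.ofReal (-f x) ∂μ) ≠ ⊤ := by
    intro s
    have hb : (∫⁻ x in s, (‖f x‖₊ : ℝ≥0∞) ∂μ) ≠ ⊤ := by
      refine ne_of_lt (lt_of_le_of_lt ?_ hf.2)
      exact lintegral_mono' Measure.restrict_le_self le_rfl
    constructor
    · refine ne_of_lt (lt_of_le_of_lt (lintegral_mono fun x => ?_) hb.lt_top)
      rw [← enorm_eq_nnnorm, ← ofReal_norm]
      exact ENNReal.ofReal_le_ofReal (le_abs_self _)
    · refine ne_of_lt (lt_of_le_of_lt (lintegral_mono fun x => ?_) hb.lt_top)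
      rw [← enorm_eq_nnnorm, ← ofReal_norm]
      exact ENNReal.ofReal_le_ofReal ((neg_le_abs _))
  have hsub : ∀ s : Set ℝ, MeasurableSet s → (∫ x in s, f x ∂μ) = 0 →
      μ.withDensity (fun x => ENNReal.ofReal (f x)) s
        = μ.withDensity (fun x => ENNReal.ofReal (-f x)) s := by
    intro s hs h0
    rw [withDensity_apply _ hs, withDensity_apply _ hs]
    have hfs : Integrable f (μ.restrict s) := hf.restrict
    have hrepr := integral_eq_lintegral_pos_part_sub_lintegral_neg_part hfs
    rw [h0] at hrepr
    have h1 := (hfin s).1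
    have h2 := (hfin s).2
    have : (∫⁻ x in s, ENNReal.ofReal (f x) ∂μ).toReal
        = (∫⁻ x in s, ENNReal.ofReal (-f x) ∂μ).toReal := by linarith
    exact (ENNReal.toReal_eq_toReal_iff' h1 h2).mp this
  have huniv : (∫ x in Set.univ, f x ∂μ) = 0 := by
    rw [Measure.restrict_univ, hμ]
    rcases le_or_gt p q with hpq | hpq
    · exact hvan p q le_rfl hpq le_rfl
    · rw [Ioc_eq_empty (not_lt.mpr hpq.le)]; simp
  haveI i1 : IsFiniteMeasure (μ.withDensity (fun x => ENNReal.ofReal (f x))) :=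
    isFiniteMeasure_withDensity (by simpa using (hfin Set.univ).1)
  have hν : μ.withDensity (fun x => ENNReal.ofReal (f x))
      = μ.withDensity (fun x => ENNReal.ofReal (-f x)) := by
    refine Measure.ext_of_Ioc_finite _ _ ?_ fun u v _ => ?_
    · exact hsub Set.univ MeasurableSet.univ huniv
    · exact hsub _ measurableSet_Ioc (claim2 u v)
  have hzero : ∀ s : Set ℝ, MeasurableSet s → μ s < ⊤ → (∫ x in s, f x ∂μ) = 0 := by
    intro s hs _
    have hfs : Integrable f (μ.restrict s) := hf.restrict
    have hrepr := integral_eq_lintegral_pos_part_sub_lintegral_neg_part hfs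
    have heq : μ.withDensity (fun x => ENNReal.ofReal (f x)) s
        = μ.withDensity (fun x => ENNReal.ofReal (-f x)) s := by rw [hν]
    rw [withDensity_apply _ hs, withDensity_apply _ hs] at heq
    rw [hrepr, heq, sub_self]
  have := ae_eq_zero_of_forall_setIntegral_eq_of_sigmaFinite
    (μ := μ) (f := f) (fun s _ _ => hf.restrict) hzero
  filter_upwards [this] with x hx using hx

lemma II {g : ℝ → ℝ} (hg : IntegrableOn g (Icc 0 1) volume) {u v : ℝ}
    (hu : 0 ≤ u) (hu1 : u ≤ 1) (hv : 0 ≤ v) (hv1 : v ≤ 1) :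
    IntervalIntegrable g volume u v := by
  refine (hg.mono_set fun x hx => ?_).intervalIntegrable
  exact ⟨le_trans (le_inf hu hv) hx.1, le_trans hx.2 (sup_le hu1 hv1)⟩

lemma Yf_diff {g : ℝ → ℝ} (hg : IntegrableOn g (Icc 0 1) volume) {u v : ℝ}
    (hu : 0 ≤ u) (huv : u ≤ v) (hv1 : v ≤ 1) :
    ∫ t in Ioc u v, g t = Yf g v - Yf g u := by
  have h1 : Yf g u + ∫ t in u..v, g t = Yf g v :=
    integral_add_adjacent_intervals (II hg le_rfl zero_le_one hu (huv.trans hv1))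
      (II hg hu (huv.trans hv1) (hu.trans huv) hv1)
  rw [← integral_of_le huv]
  linarith

lemma ek_split (g : ℝ → ℝ) (γ c δ : ℝ) :
    (fun t => g t * ekderiv γ c δ t)
      = fun t => (Ioc γ c).indicator (fun t => g t * (1 / (c - γ))) t
          + (Ioc c δ).indicator (fun t => g t * (-(1 / (δ - c)))) t := by
  funext t
  by_cases h1 : t ∈ Ioc γ c
  · have h2 : t ∉ Ioc c δ := fun h => absurd h1.2 (not_le.mpr h.1)
    simp [ekderiv, h1, h2]
  · by_cases h2 : t ∈ Ioc c δ
    · simp [ekderiv, h1, h2]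
    · simp [ekderiv, h1, h2]

lemma hat_integral {g : ℝ → ℝ} (hg : IntegrableOn g (Icc 0 1) volume)
    {γ c δ : ℝ} (h0 : 0 ≤ γ) (h1 : γ < c) (h2 : c < δ) (h3 : δ ≤ 1) :
    ∫ t in (0:ℝ)..1, g t * ekderiv γ c δ t
      = (Yf g c - Yf g γ) * (1 / (c - γ)) - (Yf g δ - Yf g c) * (1 / (δ - c)) := by
  have hc1 : c ≤ 1 := (h2.trans_le h3).le
  have hγ1 : γ ≤ 1 := h1.le.trans hc1
  have h0c : 0 ≤ c := h0.trans h1.le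
  have h0δ : 0 ≤ δ := h0c.trans h2.le
  have hint1 : IntegrableOn (fun t => g t * (1 / (c - γ))) (Ioc γ c) volume := by
    refine Integrable.mul_const (hg.mono_set fun x hx => ?_) _
    exact ⟨h0.trans hx.1.le, hx.2.trans hc1⟩
  have hint2 : IntegrableOn (fun t => g t * (-(1 / (δ - c)))) (Ioc c δ) volume := by
    refine Integrable.mul_const (hg.mono_set fun x hx => ?_) _
    exact ⟨h0c.trans hx.1.le, hx.2.trans h3⟩
  have hsub1 : Ioc γ c ⊆ Ioc 0 1 := Ioc_subset_Ioc h0 hc1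
  have hsub2 : Ioc c δ ⊆ Ioc 0 1 := Ioc_subset_Ioc h0c h3
  have hI1 : Integrable ((Ioc γ c).indicator (fun t => g t * (1 / (c - γ))))
      (volume.restrict (Ioc 0 1)) := by
    rw [integrable_indicator_iff measurableSet_Ioc, IntegrableOn,
      Measure.restrict_restrict measurableSet_Ioc,
      inter_eq_self_of_subset_left hsub1]
    exact hint1
  have hI2 : Integrable ((Ioc c δ).indicator (fun t => g t * (-(1 / (δ - c)))))
      (volume.restrict (Ioc 0 1)) := by
    rw [integrable_indicator_iff measurableSet_Ioc, IntegrableOn,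
      Measure.restrict_restrict measurableSet_Ioc,
      inter_eq_self_of_subset_left hsub2]
    exact hint2
  rw [integral_of_le zero_le_one, ek_split g γ c δ]
  rw [MeasureTheory.integral_add hI1 hI2,
    MeasureTheory.integral_indicator measurableSet_Ioc,
    MeasureTheory.integral_indicator measurableSet_Ioc,
    Measure.restrict_restrict measurableSet_Ioc,
    Measure.restrict_restrict measurableSet_Ioc,
    inter_eq_self_of_subset_left hsub1, inter_eq_self_of_subset_left hsub2,
    MeasureTheory.integral_mul_const, MeasureTheory.integral_mul_const,
    Yf_diff hg h0 h1.le hc1, Yf_diff hg h0c h2.le h3]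
  ring

lemma InH.integrableOnIcc {g : ℝ → ℝ} (hg : InH g) : IntegrableOn g (Icc 0 1) volume := by
  haveI : IsFiniteMeasure (volume.restrict (Ioo (0:ℝ) 1)) := ⟨by
    rw [Measure.restrict_apply_univ]; exact measure_Ioo_lt_top⟩
  have hgIoo : IntegrableOn g (Ioo 0 1) volume := hg.1.integrable one_le_two
  exact (integrableOn_Icc_iff_integrableOn_Ioo).mpr hgIoo

set_option maxHeartbeats 1600000 in
theorem statement3
    (n m : ℕ) (hn : 2 ≤ n) (hm1 : 1 ≤ m) (hmn : m ≤ n)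
    (a : ℕ → ℝ) (α : ℕ → ℝ)
    (ha : ∀ k, 1 ≤ k → k ≤ n → 0 < a k)
    (hsum : ∑ k ∈ Finset.Icc 1 n, a k = 1)
    (hα0 : α 0 = 0)
    (hα : ∀ k, 1 ≤ k → k ≤ n → α k = α (k - 1) + a k)
    (γ δ : ℕ → ℝ)
    (hγ : ∀ k, 1 ≤ k → k ≤ n - 1 →
      γ k = if k = m then α m - a m * a n else α (k - 1))
    (hδ : ∀ k, 1 ≤ k → k ≤ n - 1 →
      δ k = if k + 1 = m then α (m - 1) + a m * a 1 else α (k + 1))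
    -- `y = Yf g` is an arbitrary element of `𝔥`
    (g : ℝ → ℝ) (hg : InH g) :
    -- `y ⊥ 𝔥₁` and `y ⊥ e_k` for `k = 1,…,n-1`
    ((∀ h : ℝ → ℝ, InH h →
        (∀ x ∈ Icc (0:ℝ) 1, x ∉ Icc (α (m - 1)) (α m) → Yf h x = 0) →
        ∫ t in (0:ℝ)..1, g t * h t = 0) ∧
      (∀ k, 1 ≤ k → k ≤ n - 1 →
        ∫ t in (0:ℝ)..1, g t * ekderiv (γ k) (α k) (δ k) t = 0))
    ↔
    -- iff `y` vanishes identically on `[α_{m-1}, α_m]` and at every `α_k`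
    ((∀ x ∈ Icc (α (m - 1)) (α m), Yf g x = 0) ∧
      (∀ k, 1 ≤ k → k ≤ n - 1 → Yf g (α k) = 0)) := by
  classical
  have hIcc : IntegrableOn g (Icc 0 1) volume := hg.integrableOnIcc
  -- basic facts about α
  have hαsum : ∀ k, k ≤ n → α k = ∑ j ∈ Finset.Icc 1 k, a j := by
    intro k hk
    induction k with
    | zero => simpa using hα0
    | succ i ih =>
      rw [hα (i + 1) (by omega) hk]
      simp only [Nat.add_sub_cancel]
      rw [ih (by omega), Finset.sum_Icc_succ_top (by omega : 1 ≤ i + 1)]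
  have han1 : α n = 1 := by rw [hαsum n le_rfl, hsum]
  have hstep : ∀ k, 1 ≤ k → k ≤ n → α (k - 1) < α k := by
    intro k h1 h2
    rw [hα k h1 h2]
    linarith [ha k h1 h2]
  have hmono : ∀ k, k ≤ n → ∀ j, j ≤ k → α j ≤ α k := by
    intro k hk
    induction k with
    | zero => intro j hj; interval_cases j; exact le_rfl
    | succ i ih =>
      intro j hj
      rcases Nat.lt_or_ge j (i + 1) with hlt | hge
      · have h2 := hstep (i + 1) (by omega) hk
        simp only [Nat.add_sub_cancel] at h2
        exact (ih (by omega) j (by omega)).trans h2.le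
      · have : j = i + 1 := by omega
        subst this; exact le_rfl
  have hα_nonneg : ∀ k, k ≤ n → 0 ≤ α k := by
    intro k hk
    have := hmono k hk 0 (Nat.zero_le _)
    rwa [hα0] at this
  have hα_le1 : ∀ k, k ≤ n → α k ≤ 1 := by
    intro k hk
    have := hmono n le_rfl k hk
    rwa [han1] at this
  have hpairs : ∀ j i, 1 ≤ j → j ≤ n → 1 ≤ i → i ≤ n → j ≠ i → a j + a i ≤ 1 := by
    intro j i hj1 hjn hi1 hin hne
    have hsub : ({j, i} : Finset ℕ) ⊆ Finset.Icc 1 n := by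
      intro x hx
      simp only [Finset.mem_insert, Finset.mem_singleton] at hx
      rcases hx with rfl | rfl <;> (rw [Finset.mem_Icc]; omega)
    calc a j + a i = ∑ x ∈ ({j, i} : Finset ℕ), a x := (Finset.sum_pair hne).symm
      _ ≤ ∑ x ∈ Finset.Icc 1 n, a x := Finset.sum_le_sum_of_subset_of_nonneg hsub
          (fun x hx _ => (ha x (Finset.mem_Icc.mp hx).1 (Finset.mem_Icc.mp hx).2).le)
      _ = 1 := hsum
  have han_lt : a n < 1 := by
    have h := hpairs n 1 (by omega) le_rfl (by omega) (by omega) (by omega)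
    linarith [ha 1 le_rfl (by omega)]
  have ha1_lt : a 1 < 1 := by
    have h := hpairs 1 n le_rfl (by omega) (by omega) le_rfl (by omega)
    linarith [ha n (by omega) le_rfl]
  have ham := ha m hm1 hmn
  have han := ha n (by omega) le_rfl
  have ha1' := ha 1 le_rfl (by omega)
  have hqp : α m - α (m - 1) = a m := by rw [hα m hm1 hmn]; ring
  have h0p : 0 ≤ α (m - 1) := hα_nonneg (m - 1) (by omega)
  have hpq : α (m - 1) < α m := hstep m hm1 hmn
  have hq1 : α m ≤ 1 := hα_le1 m hmn
  have y0 : Yf g 0 = 0 := by simp [Yf]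
  have yα0 : Yf g (α 0) = 0 := by rw [hα0]; exact y0
  have hgq2 : Yf g 1 = 0 := hg.2
  -- positions of the hat nodes
  have hpos : ∀ k, 1 ≤ k → k ≤ n - 1 → 0 ≤ γ k ∧ γ k < α k ∧ α k < δ k ∧ δ k ≤ 1 := by
    intro k h1 h2
    have hkn : k ≤ n := by omega
    have hαk1_0 : 0 ≤ α (k - 1) := hα_nonneg (k - 1) (by omega)
    refine ⟨?_, ?_, ?_, ?_⟩
    · rw [hγ k h1 h2]
      split_ifs with hkm
      · have h3 := hα m hm1 hmn
        nlinarith [mul_pos ham (by linarith : (0:ℝ) < 1 - a n)]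
      · exact hαk1_0
    · rw [hγ k h1 h2]
      split_ifs with hkm
      · rw [hkm]; linarith [mul_pos ham han]
      · exact hstep k h1 hkn
    · rw [hδ k h1 h2]
      split_ifs with hk1m
      · have hkm1 : α k = α (m - 1) := by rw [show m - 1 = k by omega]
        rw [hkm1]
        linarith [mul_pos ham ha1']
      · have h3 := hstep (k + 1) (by omega) (by omega)
        simpa using h3
    · rw [hδ k h1 h2]
      split_ifs with hk1m
      · have h4 := hα m hm1 hmn
        nlinarith [mul_pos ham (by linarith : (0:ℝ) < 1 - a 1), hα_le1 m hmn]
      · exact hα_le1 (k + 1) (by omega)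
  have hatval : ∀ k, 1 ≤ k → k ≤ n - 1 →
      ∫ t in (0:ℝ)..1, g t * ekderiv (γ k) (α k) (δ k) t
        = (Yf g (α k) - Yf g (γ k)) * (1 / (α k - γ k))
          - (Yf g (δ k) - Yf g (α k)) * (1 / (δ k - α k)) := by
    intro k h1 h2
    obtain ⟨c1, c2, c3, c4⟩ := hpos k h1 h2
    exact hat_integral hIcc c1 c2 c3 c4
  have hamn1 : a m * a n < a m := by
    calc a m * a n < a m * 1 := mul_lt_mul_of_pos_left han_lt ham
      _ = a m := mul_one _
  have ham11 : a m * a 1 < a m := by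
    calc a m * a 1 < a m * 1 := mul_lt_mul_of_pos_left ha1_lt ham
      _ = a m := mul_one _
  have hsubpq : Ioc (α (m-1)) (α m) ⊆ Icc 0 1 :=
    fun x hx => ⟨h0p.trans hx.1.le, hx.2.trans hq1⟩
  have hsubpq' : Ioc (α (m-1)) (α m) ⊆ Ioc 0 1 := Ioc_subset_Ioc h0p hq1
  have hp1 : α (m - 1) ≤ 1 := hpq.le.trans hq1
  have hq0 : 0 ≤ α m := h0p.trans hpq.le
  constructor
  · -- forward direction
    rintro ⟨hO1, hO2⟩
    have hrel : ∀ k, 1 ≤ k → k ≤ n - 1 →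
        (Yf g (α k) - Yf g (γ k)) * (1 / (α k - γ k))
          = (Yf g (δ k) - Yf g (α k)) * (1 / (δ k - α k)) := by
      intro k h1 h2
      have h := (hatval k h1 h2).symm.trans (hO2 k h1 h2)
      linarith [h]
    obtain ⟨c, hcdef⟩ : ∃ c : ℝ, c = (Yf g (α m) - Yf g (α (m-1))) / a m := ⟨_, rfl⟩
    have hcty : c * (α m - α (m-1)) = Yf g (α m) - Yf g (α (m-1)) := by
      rw [hqp, hcdef]; field_simp
    have hGinte : IntegrableOn (fun t => g t - c) (Ioc (α (m-1)) (α m)) volume :=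
      (hIcc.mono_set hsubpq).sub ((integrableOn_const_iff).mpr (Or.inr measure_Ioc_lt_top))
    have hintzero : ∫ t in Ioc (α (m-1)) (α m), (g t - c) = 0 := by
      rw [MeasureTheory.integral_sub (hIcc.mono_set hsubpq)
        ((integrableOn_const_iff).mpr (Or.inr measure_Ioc_lt_top)),
        Yf_diff hIcc h0p hpq.le hq1, MeasureTheory.setIntegral_const,
        Real.volume_real_Ioc, max_eq_left (by linarith), smul_eq_mul]
      linarith [hcty]
    obtain ⟨h₀, hh0⟩ : ∃ h₀ : ℝ → ℝ,
        h₀ = (Ioc (α (m-1)) (α m)).indicator (fun t => g t - c) := ⟨_, rfl⟩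
    have hYh0 : ∀ x, 0 ≤ x → (x ≤ α (m-1) ∨ α m ≤ x) → Yf h₀ x = 0 := by
      intro x hx hcase
      have hrepr : Yf h₀ x = ∫ t in Ioc (α (m-1)) (α m) ∩ Ioc 0 x, (g t - c) := by
        rw [Yf, integral_of_le hx, hh0, MeasureTheory.integral_indicator measurableSet_Ioc,
          Measure.restrict_restrict measurableSet_Ioc]
      rw [hrepr]
      rcases hcase with hxp | hqx
      · rw [Ioc_inter_Ioc, sup_eq_left.mpr h0p,
          Ioc_eq_empty (not_lt.mpr (le_trans inf_le_right hxp))]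
        simp
      · rw [Ioc_inter_Ioc, sup_eq_left.mpr h0p, inf_eq_left.mpr hqx]
        exact hintzero
    have hInHh0 : InH h₀ := by
      constructor
      · rw [hh0]
        exact (hg.1.sub (memLp_const c)).indicator measurableSet_Ioc
      · exact hYh0 1 zero_le_one (Or.inr hq1)
    have hvanh0 : ∀ x ∈ Icc (0:ℝ) 1, x ∉ Icc (α (m-1)) (α m) → Yf h₀ x = 0 := by
      intro x hx hnot
      rw [mem_Icc, not_and_or] at hnot
      rcases hnot with hcase | hcase
      · exact hYh0 x hx.1 (Or.inl (not_le.mp hcase).le)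
      · exact hYh0 x hx.1 (Or.inr (not_le.mp hcase).le)
    have horto := hO1 h₀ hInHh0 hvanh0
    have hsplit : ∫ t in (0:ℝ)..1, g t * h₀ t
        = ∫ t in Ioc (α (m-1)) (α m), g t * (g t - c) := by
      rw [integral_of_le zero_le_one]
      have hptw : (fun t => g t * h₀ t)
          = (Ioc (α (m-1)) (α m)).indicator (fun t => g t * (g t - c)) := by
        funext t
        by_cases ht : t ∈ Ioc (α (m-1)) (α m) <;> simp [hh0, indicator, ht]
      rw [hptw, MeasureTheory.integral_indicator measurableSet_Ioc,
        Measure.restrict_restrict measurableSet_Ioc, inter_eq_self_of_subset_left hsubpq']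
    have hreseq : volume.restrict (Ioc (α (m-1)) (α m))
        = (volume.restrict (Ioo (0:ℝ) 1)).restrict (Ioc (α (m-1)) (α m)) := by
      rw [Measure.restrict_restrict measurableSet_Ioc]
      refine (Measure.restrict_congr_set ?_).symm
      rw [ae_eq_set]
      constructor
      · rw [diff_eq_empty.mpr inter_subset_left]
        exact measure_empty
      · refine measure_mono_null (t := {(1:ℝ)}) (fun x hx => ?_) Real.volume_singleton
        rw [mem_diff, mem_inter_iff] at hx
        have hx1 := hx.1
        have hx2 : x ∉ Ioo (0:ℝ) 1 := fun h => hx.2 ⟨hx1, h⟩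
        rw [mem_Ioo, not_and_or] at hx2
        rw [mem_singleton_iff]
        rcases hx2 with hcase | hcase
        · exact absurd (lt_of_le_of_lt h0p hx1.1) hcase
        · exact le_antisymm (hx1.2.trans hq1) (not_lt.mp hcase)
    have hmemG : MemLp (fun t => g t - c) 2 (volume.restrict (Ioc (α (m-1)) (α m))) := by
      rw [hreseq]; exact (hg.1.sub (memLp_const c)).restrict _
    have hGsq : Integrable (fun t => (g t - c)^2)
        (volume.restrict (Ioc (α (m-1)) (α m))) := hmemG.integrable_sq
    have hiden : ∫ t in Ioc (α (m-1)) (α m), g t * (g t - c)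
        = (∫ t in Ioc (α (m-1)) (α m), (g t - c)^2)
          + c * ∫ t in Ioc (α (m-1)) (α m), (g t - c) := by
      rw [← MeasureTheory.integral_const_mul,
        ← MeasureTheory.integral_add hGsq (hGinte.const_mul c)]
      refine integral_congr_ae (Filter.Eventually.of_forall fun t => by ring)
    have hioczero : ∫ t in Ioc (α (m-1)) (α m), g t * (g t - c) = 0 := by
      rw [← hsplit]; exact horto
    have hsqzero : ∫ t in Ioc (α (m-1)) (α m), (g t - c)^2 = 0 := by
      rw [hioczero, hintzero] at hiden; linarith
    have haeconst : ∀ᵐ t ∂volume.restrict (Ioc (α (m-1)) (α m)), g t = c := by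
      have hpos2 := (integral_eq_zero_iff_of_nonneg_ae
        (Filter.Eventually.of_forall fun t => sq_nonneg (g t - c)) hGsq).mp hsqzero
      filter_upwards [hpos2] with t ht
      have h2 : (g t - c)^2 = 0 := ht
      have h3 := pow_eq_zero_iff (n := 2) (by norm_num) |>.mp h2
      linarith
    have haffine : ∀ x ∈ Icc (α (m-1)) (α m),
        Yf g x = Yf g (α (m-1)) + c * (x - α (m-1)) := by
      intro x hx
      have h1 : ∫ t in Ioc (α (m-1)) x, g t = Yf g x - Yf g (α (m-1)) :=
        Yf_diff hIcc h0p hx.1 (hx.2.trans hq1)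
      have h2 : g =ᵐ[volume.restrict (Ioc (α (m-1)) x)] (fun _ => c) :=
        ae_restrict_of_ae_restrict_of_subset (Ioc_subset_Ioc_right hx.2) haeconst
      have h3 : ∫ t in Ioc (α (m-1)) x, g t = c * (x - α (m-1)) := by
        rw [integral_congr_ae h2, MeasureTheory.setIntegral_const,
          Real.volume_real_Ioc, max_eq_left (by linarith [hx.1]), smul_eq_mul, mul_comm]
      linarith
    -- the chain of nodal relations
    have base : Yf g (α m) - Yf g (α (m - 1)) = c * a m := by
      have h := haffine (α m) ⟨hpq.le, le_rfl⟩
      rw [h, hqp]; ring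
    have hcross : ∀ k, 1 ≤ k → k ≤ n - 1 → k ≠ m → k + 1 ≠ m →
        (Yf g (α k) - Yf g (α (k-1))) * a (k+1)
          = (Yf g (α (k+1)) - Yf g (α k)) * a k := by
      intro k h1 h2 hkm hk1m
      have hkn : k ≤ n := by omega
      have hk1n : k + 1 ≤ n := by omega
      have e1 : α k - α (k-1) = a k := by rw [hα k h1 hkn]; ring
      have e2 : α (k+1) - α k = a (k+1) := by
        have h3 := hα (k+1) (by omega) hk1n
        simp only [Nat.add_sub_cancel] at h3
        rw [h3]; ring
      have hr := hrel k h1 h2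
      rw [hγ k h1 h2, if_neg hkm, hδ k h1 h2, if_neg hk1m, e1, e2,
        mul_one_div, mul_one_div] at hr
      exact (div_eq_div_iff (ha k h1 hkn).ne' (ha (k+1) (by omega) hk1n).ne').mp hr
    have hkm_case : m ≤ n - 1 → Yf g (α (m+1)) - Yf g (α m) = c * a (m+1) := by
      intro hmn1
      have hr := hrel m hm1 hmn1
      rw [hγ m hm1 hmn1, if_pos rfl, hδ m hm1 hmn1, if_neg (by omega)] at hr
      have hprod : 0 < a m * a n := mul_pos ham han
      have hγmem : α m - a m * a n ∈ Icc (α (m-1)) (α m) := by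
        constructor
        · linarith only [hqp, hamn1]
        · linarith only [mul_pos ham han]
      have hY1 := haffine _ hγmem
      have hY2 := haffine (α m) ⟨hpq.le, le_rfl⟩
      have e2 : α (m+1) - α m = a (m+1) := by
        have h3 := hα (m+1) (by omega) (by omega)
        simp only [Nat.add_sub_cancel] at h3
        rw [h3]; ring
      have enum : Yf g (α m) - Yf g (α m - a m * a n) = c * (a m * a n) := by
        rw [hY1, hY2]; ring
      rw [enum, e2, show α m - (α m - a m * a n) = a m * a n by ring,
        mul_one_div, mul_div_cancel_right₀ _ hprod.ne', mul_one_div] at hr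
      exact (div_eq_iff (ha (m+1) (by omega) (by omega)).ne').mp hr.symm
    have hkm1_case : ∀ k, 1 ≤ k → k ≤ n - 1 → k + 1 = m →
        Yf g (α k) - Yf g (α (k-1)) = c * a k := by
      intro k h1 h2 hk1m
      have hkn : k ≤ n := by omega
      have hr := hrel k h1 h2
      rw [hγ k h1 h2, if_neg (by omega), hδ k h1 h2, if_pos hk1m] at hr
      have ekm : α (m-1) = α k := by rw [show m - 1 = k by omega]
      rw [ekm] at hr
      have hprod : 0 < a m * a 1 := mul_pos ham ha1'
      have hδmem : α k + a m * a 1 ∈ Icc (α (m-1)) (α m) := by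
        rw [ekm]
        constructor
        · linarith only [mul_pos ham ha1']
        · have h3 := hα m hm1 hmn
          rw [show m - 1 = k by omega] at h3
          linarith only [h3, ham11]
      have hYδ := haffine _ hδmem
      rw [ekm] at hYδ
      have enum : Yf g (α k + a m * a 1) - Yf g (α k) = c * (a m * a 1) := by
        rw [hYδ]; ring
      have e1 : α k - α (k-1) = a k := by rw [hα k h1 hkn]; ring
      rw [enum, e1, show α k + a m * a 1 - α k = a m * a 1 by ring,
        mul_one_div, mul_one_div, mul_div_cancel_right₀ _ hprod.ne'] at hr
      exact (div_eq_iff (ha k h1 hkn).ne').mp hr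
    have Sdown : ∀ d k, k + d = m → 1 ≤ k → Yf g (α k) - Yf g (α (k-1)) = c * a k := by
      intro d
      induction d with
      | zero =>
        intro k hk h1
        have : k = m := by omega
        subst this; exact base
      | succ i ih =>
        intro k hk h1
        have hkn1 : k ≤ n - 1 := by omega
        by_cases hk1m : k + 1 = m
        · exact hkm1_case k h1 hkn1 hk1m
        · have hS1 := ih (k+1) (by omega) (by omega)
          simp only [Nat.add_sub_cancel] at hS1
          have hc2 := hcross k h1 hkn1 (by omega) hk1m
          have hak1 := ha (k+1) (by omega) (by omega)
          have h' : (Yf g (α k) - Yf g (α (k-1))) * a (k+1) = (c * a k) * a (k+1) := by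
            rw [hc2, hS1]; ring
          exact mul_right_cancel₀ hak1.ne' h'
    have Sup : ∀ k, m ≤ k → k ≤ n → Yf g (α k) - Yf g (α (k-1)) = c * a k := by
      intro k hk
      induction k, hk using Nat.le_induction with
      | base => intro _; exact base
      | succ k hk ih =>
        intro hk1n
        have hkn1 : k ≤ n - 1 := by omega
        simp only [Nat.add_sub_cancel]
        by_cases hkm : k = m
        · subst hkm
          exact hkm_case hkn1
        · have hSk := ih (by omega)
          have hc2 := hcross k (by omega) hkn1 hkm (by omega)
          have hak := ha k (by omega) (by omega)
          have h' : (Yf g (α (k+1)) - Yf g (α k)) * a k = (c * a (k+1)) * a k := by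
            rw [← hc2, hSk]; ring
          exact mul_right_cancel₀ hak.ne' h'
    have Sall : ∀ k, 1 ≤ k → k ≤ n → Yf g (α k) - Yf g (α (k-1)) = c * a k := by
      intro k h1 h2
      rcases le_or_gt k m with h | h
      · exact Sdown (m - k) k (by omega) h1
      · exact Sup k h.le h2
    have htel : ∑ k ∈ Finset.Icc 1 n, (Yf g (α k) - Yf g (α (k-1)))
        = Yf g (α n) - Yf g (α 0) := by
      rw [← Finset.Ico_add_one_right_eq_Icc, Finset.sum_Ico_eq_sum_range]
      simp only [Nat.add_sub_cancel, Nat.succ_sub_one]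
      have hcongr : ∀ i ∈ Finset.range n,
          Yf g (α (1 + i)) - Yf g (α (1 + i - 1))
            = (fun j => Yf g (α j)) (i + 1) - (fun j => Yf g (α j)) i := by
        intro i _
        simp [Nat.add_comm 1 i]
      rw [Finset.sum_congr rfl hcongr, Finset.sum_range_sub (fun j => Yf g (α j)) n]
    have hczero : c = 0 := by
      have h1 : ∑ k ∈ Finset.Icc 1 n, (Yf g (α k) - Yf g (α (k-1)))
          = ∑ k ∈ Finset.Icc 1 n, c * a k :=
        Finset.sum_congr rfl fun k hk => by
          rw [Finset.mem_Icc] at hk; exact Sall k hk.1 hk.2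
      rw [htel, ← Finset.mul_sum, hsum, mul_one, han1, hgq2, yα0] at h1
      linarith
    have hnodes0 : ∀ k, k ≤ n → Yf g (α k) = 0 := by
      intro k
      induction k with
      | zero => intro _; exact yα0
      | succ i ih =>
        intro hin
        have hP := Sall (i+1) (by omega) hin
        rw [hczero, zero_mul] at hP
        simp only [Nat.add_sub_cancel] at hP
        have := ih (by omega)
        linarith
    constructor
    · intro x hx
      rw [haffine x hx, hczero, zero_mul, add_zero]
      exact hnodes0 (m-1) (by omega)
    · intro k h1 h2
      exact hnodes0 k (by omega)
  · -- backward direction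
    rintro ⟨hv, hnodes⟩
    have Ynode : ∀ k, k ≤ n → Yf g (α k) = 0 := by
      intro k hk
      rcases Nat.eq_zero_or_pos k with rfl | hk1
      · exact yα0
      rcases eq_or_lt_of_le hk with rfl | hk2
      · rw [han1]; exact hgq2
      · exact hnodes k hk1 (by omega)
    constructor
    · intro h hInH hvanish
      have hIh : IntegrableOn h (Icc 0 1) volume := hInH.integrableOnIcc
      have hg0 : ∀ᵐ x ∂volume.restrict (Ioc (α (m-1)) (α m)), g x = 0 := by
        refine ae_zero_of_setIntegral_Ioc_zero (hIcc.mono_set hsubpq) ?_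
        intro u v hu huv hvq
        rw [Yf_diff hIcc (h0p.trans hu) huv (hvq.trans hq1),
          hv v ⟨hu.trans huv, hvq⟩, hv u ⟨hu, huv.trans hvq⟩, sub_zero]
      have hconth : ContinuousOn (Yf h) (Icc 0 1) := by
        have h1 : IntegrableOn h (uIcc 0 1) volume := by
          rwa [uIcc_of_le (zero_le_one)]
        have h2 := intervalIntegral.continuousOn_primitive_interval h1
        rw [uIcc_of_le (zero_le_one)] at h2
        exact h2
      have hYhp0 : ∀ x, 0 ≤ x → x ≤ α (m-1) → Yf h x = 0 := by
        intro x hx hxp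
        rcases lt_or_eq_of_le hxp with hlt | heq
        · refine hvanish x ⟨hx, by linarith⟩ ?_
          rw [mem_Icc]; push_neg; intro h'; linarith
        · rcases eq_or_lt_of_le h0p with hp0 | hp0
          · rw [heq, ← hp0]
            simp [Yf]
          · have hmemcl : α (m-1) ∈ closure (Ico 0 (α (m-1))) := by
              rw [closure_Ico hp0.ne]
              exact ⟨h0p, le_rfl⟩
            have hnb : (𝓝[Ico 0 (α (m-1))] (α (m-1))).NeBot :=
              mem_closure_iff_nhdsWithin_neBot.mp hmemcl
            have ht1 : Filter.Tendsto (Yf h) (𝓝[Ico 0 (α (m-1))] (α (m-1)))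
                (𝓝 (Yf h (α (m-1)))) :=
              (hconth (α (m-1)) ⟨h0p, hp1⟩).mono
                (fun z hz => ⟨hz.1, hz.2.le.trans hp1⟩)
            have hEq : Yf h =ᶠ[𝓝[Ico 0 (α (m-1))] (α (m-1))] (fun _ => 0) := by
              filter_upwards [self_mem_nhdsWithin] with z hz
              refine hvanish z ⟨hz.1, hz.2.le.trans hp1⟩ ?_
              rw [mem_Icc]; push_neg; intro h'; linarith [hz.2]
            have ht2 : Filter.Tendsto (Yf h) (𝓝[Ico 0 (α (m-1))] (α (m-1))) (𝓝 0) :=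
              (Filter.tendsto_congr' hEq).mpr tendsto_const_nhds
            rw [heq]
            exact tendsto_nhds_unique ht1 ht2
      have hYhq0 : ∀ x, α m ≤ x → x ≤ 1 → Yf h x = 0 := by
        intro x hqx hx1
        rcases lt_or_eq_of_le hqx with hlt | heq
        · refine hvanish x ⟨hq0.trans hqx, hx1⟩ ?_
          rw [mem_Icc]; push_neg; intro _; linarith
        · rcases eq_or_lt_of_le hq1 with hq1' | hq1'
          · rw [← heq, hq1']
            exact hInH.2
          · have hmemcl : α m ∈ closure (Ioc (α m) 1) := by
              rw [closure_Ioc hq1'.ne]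
              exact ⟨le_rfl, hq1⟩
            have hnb : (𝓝[Ioc (α m) 1] (α m)).NeBot :=
              mem_closure_iff_nhdsWithin_neBot.mp hmemcl
            have ht1 : Filter.Tendsto (Yf h) (𝓝[Ioc (α m) 1] (α m))
                (𝓝 (Yf h (α m))) :=
              (hconth (α m) ⟨hq0, hq1⟩).mono
                (fun z hz => ⟨hq0.trans hz.1.le, hz.2⟩)
            have hEq : Yf h =ᶠ[𝓝[Ioc (α m) 1] (α m)] (fun _ => 0) := by
              filter_upwards [self_mem_nhdsWithin] with z hz
              refine hvanish z ⟨hq0.trans hz.1.le, hz.2⟩ ?_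
              rw [mem_Icc]; push_neg; intro _; linarith [hz.1]
            have ht2 : Filter.Tendsto (Yf h) (𝓝[Ioc (α m) 1] (α m)) (𝓝 0) :=
              (Filter.tendsto_congr' hEq).mpr tendsto_const_nhds
            rw [← heq]
            exact tendsto_nhds_unique ht1 ht2
      have hh0a : ∀ᵐ x ∂volume.restrict (Ioc (0:ℝ) (α (m-1))), h x = 0 := by
        refine ae_zero_of_setIntegral_Ioc_zero
          (hIh.mono_set (fun x hx => ⟨hx.1.le, hx.2.trans hp1⟩)) ?_
        intro u v hu huv hvp
        rw [Yf_diff hIh hu huv (hvp.trans hp1), hYhp0 v (hu.trans huv) hvp,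
          hYhp0 u hu (huv.trans hvp), sub_zero]
      have hh0b : ∀ᵐ x ∂volume.restrict (Ioc (α m) 1), h x = 0 := by
        refine ae_zero_of_setIntegral_Ioc_zero
          (hIh.mono_set (fun x hx => ⟨hq0.trans hx.1.le, hx.2⟩)) ?_
        intro u v hu huv hv1
        rw [Yf_diff hIh (hq0.trans hu) huv hv1, hYhq0 v (hu.trans huv) hv1,
          hYhq0 u hu (huv.trans hv1), sub_zero]
      have hun : ∀ {s t : Set ℝ} {P : ℝ → Prop}, (∀ᵐ x ∂volume.restrict s, P x) →
          (∀ᵐ x ∂volume.restrict t, P x) → ∀ᵐ x ∂volume.restrict (s ∪ t), P x := by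
        intro s t P hs ht
        rw [ae_iff] at hs ht ⊢
        have h2 := (Measure.le_iff'.mp (Measure.restrict_union_le (μ := volume) s t))
          {x | ¬ P x}
        rw [Measure.add_apply, hs, ht, add_zero] at h2
        exact le_zero_iff.mp h2
      have hprod0 : ∀ᵐ x ∂volume.restrict (Ioc (0:ℝ) 1), g x * h x = 0 := by
        have e : Ioc (0:ℝ) 1
            = (Ioc 0 (α (m-1)) ∪ Ioc (α (m-1)) (α m)) ∪ Ioc (α m) 1 := by
          rw [Ioc_union_Ioc_eq_Ioc h0p hpq.le, Ioc_union_Ioc_eq_Ioc hq0 hq1]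
        rw [e]
        refine hun (hun ?_ ?_) ?_
        · filter_upwards [hh0a] with x hx; rw [hx, mul_zero]
        · filter_upwards [hg0] with x hx; rw [hx, zero_mul]
        · filter_upwards [hh0b] with x hx; rw [hx, mul_zero]
      rw [integral_of_le zero_le_one]
      exact integral_eq_zero_of_ae (by filter_upwards [hprod0] with x hx using hx)
    · intro k h1 h2
      rw [hatval k h1 h2]
      have hYγ : Yf g (γ k) = 0 := by
        rw [hγ k h1 h2]
        split_ifs with hkm
        · refine hv _ ⟨?_, ?_⟩
          · linarith only [hqp, hamn1]
          · linarith only [mul_pos ham han]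
        · exact Ynode (k-1) (by omega)
      have hYδ : Yf g (δ k) = 0 := by
        rw [hδ k h1 h2]
        split_ifs with hk1m
        · refine hv _ ⟨?_, ?_⟩
          · linarith only [mul_pos ham ha1']
          · have h3 := hα m hm1 hmn
            linarith only [h3, ham11]
        · exact Ynode (k+1) (by omega)
      rw [hYγ, hYδ, hnodes k h1 h2]
      ring
end

section
/- For every λ ∈ ℝ, every y ∈ 𝔥₁ ∔ 𝔥₂ and every z ∈ 𝔥 orthogonal to 𝔥₁ ∔ 𝔥₂ one has q_λ(y + z) = q_λ(y) + ‖z‖²_𝔥, i.e. ∫₀¹((y+z)′² + λ·P·(((y+z)²)′)) dx = ∫₀¹(y′² + λ·P·((y²)′)) dx + ∫₀¹ z′² dx. -/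
open MeasureTheory Set Filter Topology

/-- The quadratic form `q_λ(y) = ∫₀¹ (y'² + λ·P·((y²)')) dx` for `y = Yf g`,
using `(y²)' = 2·y·y'`. -/
noncomputable def qform (P : ℝ → ℝ) (lam : ℝ) (g : ℝ → ℝ) : ℝ :=
  (∫ t in (0:ℝ)..1, (g t) ^ 2)
    + lam * ∫ t in (0:ℝ)..1, P t * (2 * Yf g t * g t)

namespace Stmt5Aux

instance : IsFiniteMeasure (volume.restrict (Ioo (0:ℝ) 1)) :=
  ⟨by rw [Measure.restrict_apply_univ, Real.volume_Ioo]; norm_num⟩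

lemma L2mul {μ : Measure ℝ} {f g : ℝ → ℝ} (hf : MemLp f 2 μ) (hg : MemLp g 2 μ) :
    Integrable (fun t => f t * g t) μ := by
  rw [← memLp_one_iff_integrable]
  have h : (fun t => f t * g t) = f • g := rfl
  rw [h]
  exact hg.smul hf

lemma ekderiv_eq (γ c δ : ℝ) : ekderiv γ c δ = fun x =>
    (Ioc γ c).indicator (fun _ => 1 / (c - γ)) x
      + (Ioc c δ).indicator (fun _ => -(1 / (δ - c))) x := by
  funext x
  unfold ekderiv
  by_cases h1 : x ∈ Ioc γ c <;> by_cases h2 : x ∈ Ioc c δ <;>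
    simp [h1, h2, Set.indicator_apply]
  exact absurd h2.1 (not_lt.2 h1.2)

lemma ekderiv_memL2 {μ : Measure ℝ} [IsFiniteMeasure μ] (γ c δ : ℝ) :
    MemLp (ekderiv γ c δ) 2 μ := by
  rw [ekderiv_eq]
  exact ((memLp_const (p := 2) (μ := μ) (1 / (c - γ))).indicator (s := Ioc γ c) measurableSet_Ioc).add
    ((memLp_const (p := 2) (μ := μ) (-(1 / (δ - c)))).indicator (s := Ioc c δ) measurableSet_Ioc)

lemma swap_aux {p q : ℝ} {f g : ℝ → ℝ}
    (hf : IntegrableOn f (Ioc p q)) (hg : IntegrableOn g (Ioc p q)) :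
    ∫ t in Ioc p q, ((∫ s in Ioc p t, f s) * g t)
      = ∫ s in Ioc p q, (f s * ∫ t in Ioc s q, g t) := by
  have hK : Integrable (fun z : ℝ × ℝ => if z.2 ≤ z.1 then g z.1 * f z.2 else 0)
      (((volume.restrict (Ioc p q))).prod (volume.restrict (Ioc p q))) := by
    have hbase : Integrable (fun z : ℝ × ℝ => g z.1 * f z.2)
        (((volume.restrict (Ioc p q))).prod (volume.restrict (Ioc p q))) := hg.mul_prod hf
    have := hbase.indicator (s := {z : ℝ × ℝ | z.2 ≤ z.1})
      (measurableSet_le measurable_snd measurable_fst)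
    refine this.congr (Filter.Eventually.of_forall fun z => ?_); simp [Set.indicator_apply]
  have h1 : ∫ t in Ioc p q, ((∫ s in Ioc p t, f s) * g t)
      = ∫ t in Ioc p q, ∫ s in Ioc p q, (if s ≤ t then g t * f s else 0) := by
    refine setIntegral_congr_fun measurableSet_Ioc (fun t ht => ?_)
    have : ∫ s in Ioc p q, (if s ≤ t then g t * f s else 0)
        = ∫ s in Ioc p q, (Iic t).indicator (fun s => g t * f s) s := by
      refine setIntegral_congr_fun measurableSet_Ioc (fun s _ => ?_)
      simp [Set.indicator_apply, Set.mem_Iic]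
    rw [this, setIntegral_indicator measurableSet_Iic, Ioc_inter_Iic,
      min_eq_right ht.2, integral_const_mul, mul_comm]
  have h2 : ∀ s ∈ Ioc p q, ∫ t in Ioc p q, (if s ≤ t then g t * f s else 0)
      = f s * ∫ t in Ioc s q, g t := by
    intro s hs
    have e1 : ∫ t in Ioc p q, (if s ≤ t then g t * f s else 0)
        = ∫ t in Ioc p q, (Ici s).indicator (fun t => g t * f s) t := by
      refine setIntegral_congr_fun measurableSet_Ioc (fun t _ => ?_)
      simp [Set.indicator_apply, Set.mem_Ici]
    have e2 : Ioc p q ∩ Ici s = Icc s q := by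
      ext t
      constructor
      · rintro ⟨⟨_, h2⟩, h3⟩; exact ⟨h3, h2⟩
      · rintro ⟨h1', h2'⟩; exact ⟨⟨lt_of_lt_of_le hs.1 h1', h2'⟩, h1'⟩
    rw [e1, setIntegral_indicator measurableSet_Ici, e2, integral_Icc_eq_integral_Ioc,
      integral_mul_const, mul_comm]
  rw [h1, integral_integral_swap hK]
  exact setIntegral_congr_fun measurableSet_Ioc h2

end Stmt5Aux

namespace Part2

open Stmt5Aux

lemma intOn_Ioc {f : ℝ → ℝ} (hf : MemLp f 2 (volume.restrict (Ioo (0:ℝ) 1)))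
    {p q : ℝ} (hp : 0 ≤ p) (hq : q ≤ 1) : IntegrableOn f (Ioc p q) := by
  rw [integrableOn_Ioc_iff_integrableOn_Ioo]
  have hbase : IntegrableOn f (Ioo 0 1) := hf.integrable one_le_two
  exact hbase.mono_set (fun x hx => ⟨lt_of_le_of_lt hp hx.1, lt_of_lt_of_le hx.2 hq⟩)

lemma intervalInt {f : ℝ → ℝ} (hf : MemLp f 2 (volume.restrict (Ioo (0:ℝ) 1)))
    {p q : ℝ} (hp : 0 ≤ p) (hpq : p ≤ q) (hq : q ≤ 1) : IntervalIntegrable f volume p q := by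
  rw [intervalIntegrable_iff_integrableOn_Ioc_of_le hpq]
  exact intOn_Ioc hf hp hq

lemma Yf_diff {f : ℝ → ℝ} (hf : MemLp f 2 (volume.restrict (Ioo (0:ℝ) 1)))
    {p q : ℝ} (hp : 0 ≤ p) (hpq : p ≤ q) (hq : q ≤ 1) :
    Yf f q = Yf f p + ∫ t in Ioc p q, f t := by
  have h1 := intervalInt hf le_rfl hp (le_trans hpq hq)
  have h2 := intervalInt hf hp hpq hq
  have h3 := intervalIntegral.integral_add_adjacent_intervals h1 h2
  unfold Yf
  rw [← h3, intervalIntegral.integral_of_le hpq]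

lemma Yf_cont {f : ℝ → ℝ} (hf : MemLp f 2 (volume.restrict (Ioo (0:ℝ) 1))) :
    ContinuousOn (Yf f) (Icc 0 1) := by
  have h : IntegrableOn f (uIcc (0:ℝ) 1) := by
    rw [uIcc_of_le zero_le_one, integrableOn_Icc_iff_integrableOn_Ioo]
    exact hf.integrable one_le_two
  have := intervalIntegral.continuousOn_primitive_interval h
  rwa [uIcc_of_le zero_le_one] at this

lemma memL2_mul_cont {u f : ℝ → ℝ} (hu : ContinuousOn u (Icc 0 1))
    (hf : MemLp f 2 (volume.restrict (Ioo (0:ℝ) 1))) :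
    MemLp (fun t => u t * f t) 2 (volume.restrict (Ioo (0:ℝ) 1)) := by
  obtain ⟨C, hC⟩ := isCompact_Icc.exists_bound_of_continuousOn hu
  refine MemLp.of_le_mul (c := C) hf
    (((hu.mono Ioo_subset_Icc_self).aestronglyMeasurable measurableSet_Ioo).mul hf.1) ?_
  refine (ae_restrict_mem measurableSet_Ioo).mono (fun x hx => ?_)
  have := hC x (Ioo_subset_Icc_self hx)
  rw [norm_mul]
  exact mul_le_mul_of_nonneg_right this (norm_nonneg _)

lemma parts {p q : ℝ} (hpq : p ≤ q) {f g : ℝ → ℝ}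
    (hf : IntegrableOn f (Ioc p q)) (hg : IntegrableOn g (Ioc p q)) :
    (∫ t in Ioc p q, ((∫ s in Ioc p t, f s) * g t + (∫ s in Ioc p t, g s) * f t))
      = (∫ s in Ioc p q, f s) * (∫ s in Ioc p q, g s) := by
  have hfI : IntegrableOn f (Icc p q) := (integrableOn_Icc_iff_integrableOn_Ioc (μ := volume)).2 hf
  have hgI : IntegrableOn g (Icc p q) := (integrableOn_Icc_iff_integrableOn_Ioc (μ := volume)).2 hg
  have hFcont := intervalIntegral.continuousOn_primitive (a := p) (b := q) hfI
  have hGcont := intervalIntegral.continuousOn_primitive (a := p) (b := q) hgI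
  obtain ⟨C1, hC1⟩ := isCompact_Icc.exists_bound_of_continuousOn hFcont
  obtain ⟨C2, hC2⟩ := isCompact_Icc.exists_bound_of_continuousOn hGcont
  have hFm : AEStronglyMeasurable (fun t => ∫ s in Ioc p t, f s) (volume.restrict (Ioc p q)) :=
    (hFcont.mono Ioc_subset_Icc_self).aestronglyMeasurable measurableSet_Ioc
  have hGm : AEStronglyMeasurable (fun t => ∫ s in Ioc p t, g s) (volume.restrict (Ioc p q)) :=
    (hGcont.mono Ioc_subset_Icc_self).aestronglyMeasurable measurableSet_Ioc
  have hb1 : ∀ᵐ t ∂(volume.restrict (Ioc p q)), ‖∫ s in Ioc p t, f s‖ ≤ C1 :=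
    (ae_restrict_mem measurableSet_Ioc).mono (fun t ht => hC1 t (Ioc_subset_Icc_self ht))
  have hb2 : ∀ᵐ t ∂(volume.restrict (Ioc p q)), ‖∫ s in Ioc p t, g s‖ ≤ C2 :=
    (ae_restrict_mem measurableSet_Ioc).mono (fun t ht => hC2 t (Ioc_subset_Icc_self ht))
  have hi1 : Integrable (fun t => (∫ s in Ioc p t, f s) * g t) (volume.restrict (Ioc p q)) :=
    hg.bdd_mul hFm hb1
  have hi2 : Integrable (fun t => (∫ s in Ioc p t, g s) * f t) (volume.restrict (Ioc p q)) :=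
    hf.bdd_mul hGm hb2
  rw [integral_add hi1 hi2, swap_aux hf hg]
  have e1 : EqOn (fun s => f s * ∫ t in Ioc s q, g t)
      (fun s => f s * (∫ t in Ioc p q, g t) - (∫ t in Ioc p s, g t) * f s) (Ioc p q) := by
    intro s hs
    have : ∫ t in Ioc p q, g t = (∫ t in Ioc p s, g t) + ∫ t in Ioc s q, g t := by
      rw [← setIntegral_union (Ioc_disjoint_Ioc_of_le le_rfl) measurableSet_Ioc
        (hg.mono_set (Ioc_subset_Ioc le_rfl hs.2)) (hg.mono_set (Ioc_subset_Ioc hs.1.le le_rfl)),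
        Ioc_union_Ioc_eq_Ioc hs.1.le hs.2]
    simp only
    rw [this]; ring
  rw [setIntegral_congr_fun measurableSet_Ioc e1,
    integral_sub (hf.mul_const _) hi2, integral_mul_const]
  ring

lemma key {u v : ℝ → ℝ} (hu : MemLp u 2 (volume.restrict (Ioo (0:ℝ) 1)))
    (hv : MemLp v 2 (volume.restrict (Ioo (0:ℝ) 1)))
    {p q : ℝ} (hp : 0 ≤ p) (hpq : p ≤ q) (hq : q ≤ 1) :
    ∫ t in Ioc p q, (Yf u t * v t + Yf v t * u t)
      = Yf u q * Yf v q - Yf u p * Yf v p := by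
  have hfI := intOn_Ioc hu hp hq
  have hgI := intOn_Ioc hv hp hq
  have hint1 : IntegrableOn (fun t => Yf u t * v t) (Ioc p q) :=
    intOn_Ioc (memL2_mul_cont (Yf_cont hu) hv) hp hq
  have hint2 : IntegrableOn (fun t => Yf v t * u t) (Ioc p q) :=
    intOn_Ioc (memL2_mul_cont (Yf_cont hv) hu) hp hq
  have hA := parts hpq hfI hgI
  have e1 : EqOn (fun t => ((∫ s in Ioc p t, u s) * v t + (∫ s in Ioc p t, v s) * u t))
      (fun t => ((Yf u t * v t + Yf v t * u t) - (Yf u p * v t + Yf v p * u t))) (Ioc p q) := by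
    intro t ht
    have d1 := Yf_diff hu hp ht.1.le (le_trans ht.2 hq)
    have d2 := Yf_diff hv hp ht.1.le (le_trans ht.2 hq)
    simp only
    rw [d1, d2]; ring
  have d3 := Yf_diff hu hp hpq hq
  have d4 := Yf_diff hv hp hpq hq
  have e3 : ∫ t in Ioc p q, u t = Yf u q - Yf u p := by rw [d3]; ring
  have e4 : ∫ t in Ioc p q, v t = Yf v q - Yf v p := by rw [d4]; ring
  rw [setIntegral_congr_fun measurableSet_Ioc e1, e3, e4] at hA
  have hadd1 : Integrable (fun t => Yf u t * v t + Yf v t * u t)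
      (volume.restrict (Ioc p q)) := hint1.add hint2
  have hadd2 : Integrable (fun t => Yf u p * v t + Yf v p * u t)
      (volume.restrict (Ioc p q)) := (hgI.const_mul _).add (hfI.const_mul _)
  have h6 : ∫ t in Ioc p q, ((Yf u t * v t + Yf v t * u t) - (Yf u p * v t + Yf v p * u t))
      = (∫ t in Ioc p q, (Yf u t * v t + Yf v t * u t))
        - ∫ t in Ioc p q, (Yf u p * v t + Yf v p * u t) := integral_sub hadd1 hadd2
  have h5 : ∫ t in Ioc p q, (Yf u p * v t + Yf v p * u t)
      = Yf u p * (Yf v q - Yf v p) + Yf v p * (Yf u q - Yf u p) := by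
    rw [integral_add (hgI.const_mul _) (hfI.const_mul _), integral_const_mul, integral_const_mul,
      e3, e4]
  linear_combination hA + h5 - h6

lemma key2 {v : ℝ → ℝ} (hv : MemLp v 2 (volume.restrict (Ioo (0:ℝ) 1)))
    {p q : ℝ} (hp : 0 ≤ p) (hpq : p ≤ q) (hq : q ≤ 1) :
    ∫ t in Ioc p q, (Yf v t * v t)
      = (Yf v q * Yf v q - Yf v p * Yf v p) / 2 := by
  have hA := key hv hv hp hpq hq
  have hint : IntegrableOn (fun t => Yf v t * v t) (Ioc p q) :=
    intOn_Ioc (memL2_mul_cont (Yf_cont hv) hv) hp hq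
  have : ∫ t in Ioc p q, (Yf v t * v t + Yf v t * v t)
      = 2 * ∫ t in Ioc p q, (Yf v t * v t) := by
    rw [integral_add hint hint]; ring
  rw [this] at hA
  linarith

lemma affine_ae {c aa : ℝ} (haa : 0 < aa) {Q : ℝ → Prop}
    (hQ : ∀ᵐ t ∂(volume.restrict (Ioo (0:ℝ) 1)), Q (c + aa * t)) :
    ∀ᵐ x ∂volume, x ∈ Ioo c (c + aa) → Q x := by
  rw [ae_restrict_iff' measurableSet_Ioo] at hQ
  rw [ae_iff] at hQ ⊢
  set M := {t | ¬(t ∈ Ioo (0:ℝ) 1 → Q (c + aa * t))} with hM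
  have hsub : {x | ¬(x ∈ Ioo c (c + aa) → Q x)} ⊆ (fun x => aa⁻¹ * (x - c)) ⁻¹' M := by
    intro x hx
    simp only [mem_setOf_eq, Classical.not_imp] at hx
    obtain ⟨hx1, hx2⟩ := hx
    have hxc : 0 < x - c := by linarith [hx1.1]
    have ht : aa⁻¹ * (x - c) ∈ Ioo (0:ℝ) 1 := by
      constructor
      · positivity
      · rw [inv_mul_lt_iff₀ haa, mul_one]
        linarith [hx1.2]
    simp only [hM, mem_preimage, mem_setOf_eq, Classical.not_imp]
    refine ⟨ht, ?_⟩
    have hxx : c + aa * (aa⁻¹ * (x - c)) = x := by field_simp; ring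
    rwa [hxx]
  refine measure_mono_null hsub ?_
  have e1 : (fun x : ℝ => aa⁻¹ * (x - c)) ⁻¹' M
      = (fun x : ℝ => -c + x) ⁻¹' ((fun y : ℝ => aa⁻¹ * y) ⁻¹' M) := by
    ext x; simp [mem_preimage, neg_add_eq_sub]
  rw [e1, measure_preimage_add, Real.volume_preimage_mul_left (inv_ne_zero (ne_of_gt haa)), hQ,
    mul_zero]

end Part2

open Stmt5Aux Part2
set_option maxHeartbeats 1000000 in

theorem statement5
    (n m : ℕ) (hn : 2 ≤ n) (hm1 : 1 ≤ m) (hmn : m ≤ n)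
    (a β d : ℕ → ℝ) (α : ℕ → ℝ)
    (ha : ∀ k, 1 ≤ k → k ≤ n → 0 < a k)
    (hsum : ∑ k ∈ Finset.Icc 1 n, a k = 1)
    (hα0 : α 0 = 0)
    (hα : ∀ k, 1 ≤ k → k ≤ n → α k = α (k - 1) + a k)
    (hd : ∀ k, 1 ≤ k → k ≤ n → k ≠ m → d k = 0)
    (hdm : d m ≠ 0)
    (hcontr : a m * |d m| < 1)
    (P : ℝ → ℝ)
    (hP : MemLp P 2 (volume.restrict (Ioo (0:ℝ) 1)))
    (hss : ∀ k, 1 ≤ k → k ≤ n →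
      ∀ᵐ t ∂(volume.restrict (Ioo (0:ℝ) 1)),
        P (α (k - 1) + a k * t) = β k + d k * P t)
    (γ δ : ℕ → ℝ)
    (hγ : ∀ k, 1 ≤ k → k ≤ n - 1 →
      γ k = if k = m then α m - a m * a n else α (k - 1))
    (hδ : ∀ k, 1 ≤ k → k ≤ n - 1 →
      δ k = if k + 1 = m then α (m - 1) + a m * a 1 else α (k + 1))
    (lam : ℝ)
    -- `y = y₁ + Σ c_k e_k ∈ 𝔥₁ ∔ 𝔥₂`, represented by its derivative `g`
    (g₁ : ℝ → ℝ) (hg₁ : InH g₁)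
    (hg₁supp : ∀ x ∈ Icc (0:ℝ) 1, x ∉ Icc (α (m - 1)) (α m) → Yf g₁ x = 0)
    (c : ℕ → ℝ)
    (g : ℝ → ℝ)
    (hg : g = fun t => g₁ t +
      ∑ k ∈ Finset.Icc 1 (n - 1), c k * ekderiv (γ k) (α k) (δ k) t)
    -- `z = Yf h ∈ 𝔥` is orthogonal to `𝔥₁ ∔ 𝔥₂`
    (h : ℝ → ℝ) (hh : InH h)
    (hperp₁ : ∀ w : ℝ → ℝ, InH w →
      (∀ x ∈ Icc (0:ℝ) 1, x ∉ Icc (α (m - 1)) (α m) → Yf w x = 0) →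
      ∫ t in (0:ℝ)..1, h t * w t = 0)
    (hperp₂ : ∀ k, 1 ≤ k → k ≤ n - 1 →
      ∫ t in (0:ℝ)..1, h t * ekderiv (γ k) (α k) (δ k) t = 0) :
    -- `q_λ(y + z) = q_λ(y) + ‖z‖²`
    qform P lam (fun t => g t + h t)
      = qform P lam g + ∫ t in (0:ℝ)..1, (h t) ^ 2 := by
  classical
  have han1 : (1:ℕ) ≤ n := le_trans one_le_two hn
  -- basic facts about α
  have hαsum : ∀ k, k ≤ n → α k = ∑ j ∈ Finset.Icc 1 k, a j := by
    intro k hk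
    induction k with
    | zero => simpa using hα0
    | succ i ih =>
      have h1 := hα (i+1) (by omega) hk
      simp only [Nat.add_sub_cancel] at h1
      rw [h1, ih (by omega), Finset.sum_Icc_succ_top (by omega)]
  have hαn : α n = 1 := by rw [hαsum n le_rfl, hsum]
  have hstep : ∀ k, 1 ≤ k → k ≤ n → α (k-1) < α k := by
    intro k h1 h2; rw [hα k h1 h2]; linarith [ha k h1 h2]
  have hmono : ∀ j k, j ≤ k → k ≤ n → α j ≤ α k := by
    intro j k hjk hkn
    induction k with
    | zero => have : j = 0 := Nat.le_zero.mp hjk; simp [this]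
    | succ i ih =>
      rcases Nat.lt_or_ge j (i+1) with hj | hj
      · have h1 : α j ≤ α i := ih (by omega) (by omega)
        have h2 := hstep (i+1) (by omega) hkn
        simp only [Nat.add_sub_cancel] at h2
        linarith
      · have : j = i+1 := le_antisymm hjk hj
        simp [this]
  have hα0le : ∀ k, k ≤ n → 0 ≤ α k := by
    intro k hk
    have := hmono 0 k (Nat.zero_le k) hk; rwa [hα0] at this
  have hαle1 : ∀ k, k ≤ n → α k ≤ 1 := by
    intro k hk
    have := hmono k n hk le_rfl; rwa [hαn] at this
  have halel : ∀ k, 1 ≤ k → k ≤ n → a k ≤ 1 := by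
    intro k h1 h2
    rw [← hsum]
    exact Finset.single_le_sum
      (fun j hj => (ha j (Finset.mem_Icc.mp hj).1 (Finset.mem_Icc.mp hj).2).le)
      (Finset.mem_Icc.mpr ⟨h1, h2⟩)
  have hm1le : m - 1 ≤ n := by omega
  have hpq0 : α (m-1) < α m := hstep m hm1 hmn
  have hp0 : 0 ≤ α (m-1) := hα0le _ hm1le
  have hq1 : α m ≤ 1 := hαle1 _ hmn
  have ham : α m = α (m-1) + a m := hα m hm1 hmn
  have ham' : 0 < a m := ha m hm1 hmn
  -- memberships
  have hg1mem := hg₁.1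
  have hhmem := hh.1
  have hgmem : MemLp g 2 (volume.restrict (Ioo (0:ℝ) 1)) := by
    rw [hg]
    refine hg1mem.add ?_
    have := memLp_finset_sum (μ := volume.restrict (Ioo (0:ℝ) 1)) (Finset.Icc 1 (n-1))
      (f := fun k t => c k * ekderiv (γ k) (α k) (δ k) t)
      (fun k _ => (Stmt5Aux.ekderiv_memL2 _ _ _).const_mul _)
    simpa using this
  have cvI : ∀ f : ℝ → ℝ, (∫ t in (0:ℝ)..1, f t) = ∫ t in Ioc (0:ℝ) 1, f t := fun f =>
    intervalIntegral.integral_of_le zero_le_one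
  -- P is a.e. constant on the intervals away from m
  have hPconst : ∀ k, 1 ≤ k → k ≤ n → k ≠ m →
      ∀ᵐ x ∂volume, x ∈ Ioo (α (k-1)) (α k) → P x = β k := by
    intro k h1 h2 hne
    have hzero := hd k h1 h2 hne
    have hQ : ∀ᵐ t ∂(volume.restrict (Ioo (0:ℝ) 1)), P (α (k-1) + a k * t) = β k := by
      filter_upwards [hss k h1 h2] with t ht
      rw [ht, hzero]; ring
    have := Part2.affine_ae (Q := fun x => P x = β k) (ha k h1 h2) hQ
    rwa [← hα k h1 h2] at this
  -- the slope constant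
  set c₀ : ℝ := (Yf h (α m) - Yf h (α (m-1))) / (a m) with hc₀
  have hc0am : c₀ * a m = Yf h (α m) - Yf h (α (m-1)) := by
    rw [hc₀]; field_simp
  have hIsub : Ioo (α (m-1)) (α m) ⊆ Ioo (0:ℝ) 1 := fun x hx =>
    ⟨lt_of_le_of_lt hp0 hx.1, lt_of_lt_of_le hx.2 hq1⟩
  have hhInt : IntegrableOn h (Ioo (0:ℝ) 1) := hhmem.integrable one_le_two
  have hIm_int : ∫ t in Ioo (α (m-1)) (α m), h t = Yf h (α m) - Yf h (α (m-1)) := by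
    have h1 := Part2.Yf_diff hhmem hp0 hpq0.le hq1
    rw [integral_Ioc_eq_integral_Ioo] at h1
    linarith
  have hvol : (volume (Ioo (α (m-1)) (α m))).toReal = a m := by
    rw [Real.volume_Ioo, ENNReal.toReal_ofReal (by linarith), ham]; ring
  have hconst : ∀ᵐ x ∂volume, x ∈ Ioo (α (m-1)) (α m) → h x = c₀ := by
    set w : ℝ → ℝ := (Ioo (α (m-1)) (α m)).indicator (fun t => h t - c₀) with hw
    have hwmem : MemLp w 2 (volume.restrict (Ioo (0:ℝ) 1)) :=
      (hhmem.sub (memLp_const c₀)).indicator measurableSet_Ioo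
    have hsubI : IntegrableOn (fun t => h t - c₀) (Ioo (α (m-1)) (α m)) := by
      refine (hhInt.mono_set hIsub).sub (integrableOn_const ?_)
      rw [Real.volume_Ioo]; exact ENNReal.ofReal_ne_top
    have hfull : ∫ t in Ioo (α (m-1)) (α m), (h t - c₀) = 0 := by
      rw [integral_sub (hhInt.mono_set hIsub) (integrableOn_const (by
        rw [Real.volume_Ioo]; exact ENNReal.ofReal_ne_top)), hIm_int, setIntegral_const, measureReal_def,
        smul_eq_mul, hvol]
      linarith [hc0am]
    have hYw : ∀ x, 0 ≤ x → x ≤ 1 → Yf w x = ∫ t in Ioc 0 x ∩ Ioo (α (m-1)) (α m), (h t - c₀) := by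
      intro x h0x hx1
      rw [hw]
      unfold Yf
      rw [intervalIntegral.integral_of_le h0x, setIntegral_indicator measurableSet_Ioo]
    have hYw1 : Yf w 1 = 0 := by
      rw [hYw 1 zero_le_one le_rfl]
      have e : Ioc (0:ℝ) 1 ∩ Ioo (α (m-1)) (α m) = Ioo (α (m-1)) (α m) :=
        inter_eq_right.mpr (fun x hx =>
          ⟨lt_of_le_of_lt hp0 hx.1, le_of_lt (lt_of_lt_of_le hx.2 hq1)⟩)
      rw [e, hfull]
    have hsupp : ∀ x ∈ Icc (0:ℝ) 1, x ∉ Icc (α (m-1)) (α m) → Yf w x = 0 := by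
      intro x hx hnx
      rw [hYw x hx.1 hx.2]
      simp only [mem_Icc, not_and_or, not_le] at hnx
      rcases hnx with h' | h'
      · have e : Ioc (0:ℝ) x ∩ Ioo (α (m-1)) (α m) = ∅ := by
          rw [eq_empty_iff_forall_notMem]
          rintro y ⟨hy1, hy2⟩
          have := hy1.2
          have := hy2.1
          linarith
        rw [e]; simp
      · have e : Ioc (0:ℝ) x ∩ Ioo (α (m-1)) (α m) = Ioo (α (m-1)) (α m) := by
          refine inter_eq_right.mpr (fun y hy => ⟨lt_of_le_of_lt hp0 hy.1, ?_⟩)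
          linarith [hy.2]
        rw [e, hfull]
    have h0 := hperp₁ w ⟨hwmem, hYw1⟩ hsupp
    rw [cvI] at h0
    have hprod : ∀ t, h t * w t
        = (Ioo (α (m-1)) (α m)).indicator (fun t => h t * (h t - c₀)) t := by
      intro t
      by_cases ht : t ∈ Ioo (α (m-1)) (α m) <;> simp [hw, Set.indicator_apply, ht]
    simp only [hprod] at h0
    rw [setIntegral_indicator measurableSet_Ioo] at h0
    have e : Ioc (0:ℝ) 1 ∩ Ioo (α (m-1)) (α m) = Ioo (α (m-1)) (α m) :=
      inter_eq_right.mpr (fun x hx =>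
        ⟨lt_of_le_of_lt hp0 hx.1, le_of_lt (lt_of_lt_of_le hx.2 hq1)⟩)
    rw [e] at h0
    -- now conclude (h - c₀)² has zero integral
    have hhm' : MemLp h 2 (volume.restrict (Ioo (α (m-1)) (α m))) :=
      hhmem.mono_measure (Measure.restrict_mono hIsub le_rfl)
    haveI : IsFiniteMeasure (volume.restrict (Ioo (α (m-1)) (α m))) :=
      ⟨by rw [Measure.restrict_apply_univ, Real.volume_Ioo]; exact ENNReal.ofReal_lt_top⟩
    have hsqint : Integrable (fun t => (h t - c₀)^2)
        (volume.restrict (Ioo (α (m-1)) (α m))) := by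
      have hx1 : MemLp (fun t => h t - c₀) 2 (volume.restrict (Ioo (α (m-1)) (α m))) :=
        hhm'.sub (memLp_const c₀)
      have hx2 : Integrable (fun t => (h t - c₀) * (h t - c₀))
          (volume.restrict (Ioo (α (m-1)) (α m))) := Stmt5Aux.L2mul hx1 hx1
      have e2 : ∀ t : ℝ, (h t - c₀)^2 = (h t - c₀) * (h t - c₀) := fun t => by ring
      simpa only [e2] using hx2
    have hsq : ∫ t in Ioo (α (m-1)) (α m), (h t - c₀)^2 = 0 := by
      have e2 : ∀ t, (h t - c₀)^2 = h t * (h t - c₀) - c₀ * (h t - c₀) := fun t => by ring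
      simp only [e2]
      have hx1 : MemLp (fun t => h t - c₀) 2 (volume.restrict (Ioo (α (m-1)) (α m))) :=
        hhm'.sub (memLp_const c₀)
      have hx2 : Integrable (fun t => h t * (h t - c₀))
          (volume.restrict (Ioo (α (m-1)) (α m))) := Stmt5Aux.L2mul hhm' hx1
      rw [integral_sub hx2 (hsubI.const_mul c₀), h0, integral_const_mul, hfull]
      ring
    have hae := (integral_eq_zero_iff_of_nonneg (fun t => sq_nonneg _) hsqint).mp hsq
    have hae2 : ∀ᵐ t ∂(volume.restrict (Ioo (α (m-1)) (α m))), h t = c₀ := by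
      filter_upwards [hae] with t ht
      have : (h t - c₀)^2 = 0 := ht
      have := pow_eq_zero_iff (n := 2) (by norm_num) |>.mp this
      linarith
    exact (ae_restrict_iff' measurableSet_Ioo).mp hae2
  -- integral of h against a hat derivative
  have hhIoc : ∀ p q : ℝ, 0 ≤ p → q ≤ 1 → IntegrableOn h (Ioc p q) := fun p q hp hq =>
    Part2.intOn_Ioc hhmem hp hq
  have hekint : ∀ γ' c' δ' : ℝ, 0 ≤ γ' → γ' < c' → c' < δ' → δ' ≤ 1 →
      (∫ t in (0:ℝ)..1, h t * ekderiv γ' c' δ' t)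
        = (Yf h c' - Yf h γ') * (1/(c'-γ')) - (Yf h δ' - Yf h c') * (1/(δ'-c')) := by
    intro γ' c' δ' h0 h1 h2 h3
    rw [cvI]
    have hsplit : ∀ t, h t * ekderiv γ' c' δ' t
        = (Ioc γ' c').indicator (fun s => h s * (1/(c'-γ'))) t
          + (Ioc c' δ').indicator (fun s => h s * (-(1/(δ'-c')))) t := by
      intro t
      rw [Stmt5Aux.ekderiv_eq]
      by_cases ht1 : t ∈ Ioc γ' c'
      · by_cases ht2 : t ∈ Ioc c' δ'
        · exact absurd ht2.1 (not_lt.2 ht1.2)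
        · simp [Set.indicator_apply, ht1, ht2]
      · by_cases ht2 : t ∈ Ioc c' δ'
        · simp [Set.indicator_apply, ht1, ht2]
        · simp [Set.indicator_apply, ht1, ht2]
    simp only [hsplit]
    have hi1 : Integrable ((Ioc γ' c').indicator (fun s => h s * (1/(c'-γ'))))
        (volume.restrict (Ioc (0:ℝ) 1)) :=
      (((hhIoc 0 1 le_rfl le_rfl).mul_const _).indicator measurableSet_Ioc)
    have hi2 : Integrable ((Ioc c' δ').indicator (fun s => h s * (-(1/(δ'-c')))))
        (volume.restrict (Ioc (0:ℝ) 1)) :=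
      (((hhIoc 0 1 le_rfl le_rfl).mul_const _).indicator measurableSet_Ioc)
    rw [integral_add hi1 hi2, setIntegral_indicator measurableSet_Ioc,
      setIntegral_indicator measurableSet_Ioc]
    have e1 : Ioc (0:ℝ) 1 ∩ Ioc γ' c' = Ioc γ' c' := inter_eq_right.mpr
      (fun x hx => ⟨lt_of_le_of_lt h0 hx.1, le_trans hx.2 (by linarith)⟩)
    have e2 : Ioc (0:ℝ) 1 ∩ Ioc c' δ' = Ioc c' δ' := inter_eq_right.mpr
      (fun x hx => ⟨lt_of_le_of_lt (by linarith) hx.1, le_trans hx.2 h3⟩)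
    rw [e1, e2, integral_mul_const, integral_mul_const]
    have d1 := Part2.Yf_diff hhmem h0 h1.le (by linarith)
    have d2 := Part2.Yf_diff hhmem (by linarith : (0:ℝ) ≤ c') h2.le h3
    rw [show ∫ t in Ioc γ' c', h t = Yf h c' - Yf h γ' by linarith,
      show ∫ t in Ioc c' δ', h t = Yf h δ' - Yf h c' by linarith]
    ring
  -- bounds for the hat nodes
  have hranges : ∀ k, 1 ≤ k → k ≤ n - 1 → 0 ≤ γ k ∧ γ k < α k ∧ α k < δ k ∧ δ k ≤ 1 := by
    intro k h1 h2
    have hkn : k ≤ n := by omega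
    have hk1n : k + 1 ≤ n := by omega
    have haan : 0 < a n := ha n han1 le_rfl
    have ha1 : 0 < a 1 := ha 1 le_rfl han1
    have hann : a n ≤ 1 := halel n han1 le_rfl
    have ha11 : a 1 ≤ 1 := halel 1 le_rfl han1
    have hstepk : α (k-1) < α k := hstep k h1 hkn
    have hstepk1 : α k < α (k+1) := by
      have := hstep (k+1) (by omega) hk1n
      simpa using this
    rw [hγ k h1 h2, hδ k h1 h2]
    refine ⟨?_, ?_, ?_, ?_⟩
    · split_ifs with hkm
      · subst hkm
        have : a k * a n ≤ a k := by nlinarith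
        linarith
      · exact hα0le (k-1) (by omega)
    · split_ifs with hkm
      · subst hkm
        have : 0 < a k * a n := mul_pos ham' haan
        linarith
      · exact hstepk
    · split_ifs with hkm
      · have hk : k = m - 1 := by omega
        have : α (m-1) = α k := by rw [hk]
        have hpos : 0 < a m * a 1 := mul_pos ham' ha1
        linarith
      · exact hstepk1
    · split_ifs with hkm
      · have : a m * a 1 ≤ a m := by nlinarith
        linarith
      · exact hαle1 (k+1) hk1n
  -- the orthogonality conditions for the hats
  have hcond : ∀ k, 1 ≤ k → k ≤ n - 1 →
      (Yf h (α k) - Yf h (γ k)) * (1/(α k - γ k))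
        = (Yf h (δ k) - Yf h (α k)) * (1/(δ k - α k)) := by
    intro k h1 h2
    obtain ⟨hb1, hb2, hb3, hb4⟩ := hranges k h1 h2
    have := hperp₂ k h1 h2
    rw [hekint (γ k) (α k) (δ k) hb1 hb2 hb3 hb4] at this
    linarith
  -- integral of h over subintervals of I_m
  have hsubint : ∀ p q : ℝ, α (m-1) ≤ p → p ≤ q → q ≤ α m →
      Yf h q - Yf h p = c₀ * (q - p) := by
    intro p q h1 h2 h3
    have hd := Part2.Yf_diff hhmem (le_trans hp0 h1) h2 (le_trans h3 hq1)
    rw [integral_Ioc_eq_integral_Ioo] at hd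
    have hcongr : ∫ t in Ioo p q, h t = ∫ t in Ioo p q, c₀ := by
      refine setIntegral_congr_ae measurableSet_Ioo ?_
      filter_upwards [hconst] with x hx hxm
      exact hx ⟨lt_of_le_of_lt h1 hxm.1, lt_of_lt_of_le hxm.2 h3⟩
    rw [hcongr, setIntegral_const, measureReal_def, Real.volume_Ioo,
      ENNReal.toReal_ofReal (by linarith), smul_eq_mul] at hd
    rw [hd]; ring
  have hml : Yf h (α m) - Yf h (α (m-1)) = c₀ * a m := by
    rw [← hc0am]
  -- the up-step
  have hupstep : ∀ k, m ≤ k → k ≤ n - 1 →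
      (Yf h (α k) - Yf h (α (k-1)) = c₀ * a k) →
      Yf h (α (k+1)) - Yf h (α k) = c₀ * a (k+1) := by
    intro k hk1 hk2 hprev
    have h1k : 1 ≤ k := le_trans hm1 hk1
    have hc := hcond k h1k hk2
    rw [hγ k h1k hk2, hδ k h1k hk2, if_neg (by omega : ¬ k + 1 = m)] at hc
    have hα1 : α (k+1) = α k + a (k+1) := by
      have := hα (k+1) (by omega) (by omega)
      simpa using this
    have hap : 0 < a (k+1) := ha (k+1) (by omega) (by omega)
    by_cases hkm : k = m
    · rw [if_pos hkm] at hc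
      subst hkm
      have haan : 0 < a n := ha n han1 le_rfl
      have hann : a n ≤ 1 := halel n han1 le_rfl
      have hγm0 : α (k-1) ≤ α k - a k * a n := by nlinarith
      have h5 := hsubint (α k - a k * a n) (α k) hγm0 (by nlinarith) le_rfl
      rw [h5] at hc
      have h6 : α k - (α k - a k * a n) ≠ 0 := by
        have : 0 < a k * a n := mul_pos ham' haan
        intro hcon; rw [sub_sub_cancel] at hcon; linarith
      rw [hα1] at hc
      field_simp at hc
      rw [add_sub_cancel_left, eq_div_iff (ne_of_gt hap)] at hc
      rw [hα1]
      linarith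
    · rw [if_neg hkm] at hc
      have e1 : α k - α (k-1) = a k := by rw [hα k h1k (by omega)]; ring
      rw [hprev, e1, hα1] at hc
      have hak : a k ≠ 0 := ne_of_gt (ha k h1k (by omega))
      field_simp at hc
      rw [add_sub_cancel_left, eq_div_iff (ne_of_gt hap)] at hc
      rw [hα1]
      linarith
  -- the down-step
  have hdownstep : ∀ k, 1 ≤ k → k + 1 ≤ m →
      (Yf h (α (k+1)) - Yf h (α k) = c₀ * a (k+1)) →
      Yf h (α k) - Yf h (α (k-1)) = c₀ * a k := by
    intro k hk1 hk2 hprev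
    have hkn1 : k ≤ n - 1 := by omega
    have hc := hcond k hk1 hkn1
    rw [hγ k hk1 hkn1, hδ k hk1 hkn1, if_neg (by omega : ¬ k = m)] at hc
    have e1 : α k - α (k-1) = a k := by rw [hα k hk1 (by omega)]; ring
    have hak : 0 < a k := ha k hk1 (by omega)
    by_cases hkm : k + 1 = m
    · rw [if_pos hkm] at hc
      have ha1 : 0 < a 1 := ha 1 le_rfl han1
      have ha11 : a 1 ≤ 1 := halel 1 le_rfl han1
      have hkm1 : α k = α (m-1) := by rw [show m - 1 = k from by omega]
      have h5 := hsubint (α (m-1)) (α (m-1) + a m * a 1) le_rfl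
        (by nlinarith) (by nlinarith [ham])
      have h6 : α (m-1) + a m * a 1 - α (m-1) = a m * a 1 := by ring
      rw [h6] at h5
      have h5' : Yf h (α (m-1) + a m * a 1) - Yf h (α k) = c₀ * (a m * a 1) := by
        rw [hkm1]; exact h5
      have h7 : α (m-1) + a m * a 1 - α k = a m * a 1 := by rw [hkm1]; ring
      rw [h5', h7, e1] at hc
      have hma1 : a m * a 1 ≠ 0 := ne_of_gt (mul_pos ham' ha1)
      have h8 : (c₀ * (a m * a 1)) * (1/(a m * a 1)) = c₀ := by field_simp
      rw [h8] at hc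
      have hak' : a k ≠ 0 := ne_of_gt hak
      field_simp at hc
      linarith
    · rw [if_neg hkm] at hc
      have e2 : α (k+1) = α k + a (k+1) := by
        have := hα (k+1) (by omega) (by omega)
        simpa using this
      rw [hprev, e1, e2] at hc
      have hak' : a k ≠ 0 := ne_of_gt hak
      have hak1 : a (k+1) ≠ 0 := ne_of_gt (ha (k+1) (by omega) (by omega))
      field_simp at hc
      rw [add_sub_cancel_left, mul_div_assoc, div_self hak1, mul_one] at hc
      linarith
  -- the full chain
  have hchain : ∀ k, 1 ≤ k → k ≤ n → Yf h (α k) - Yf h (α (k-1)) = c₀ * a k := by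
    have hup : ∀ j, m + j ≤ n →
        Yf h (α (m+j)) - Yf h (α (m+j-1)) = c₀ * a (m+j) := by
      intro j
      induction j with
      | zero => intro _; simpa using hml
      | succ i ih =>
        intro hle
        have hk := hupstep (m+i) (by omega) (by omega) (ih (by omega))
        have e : m + (i+1) = (m+i) + 1 := by omega
        rw [e]
        simpa using hk
    have hdown : ∀ j, j < m →
        Yf h (α (m-j)) - Yf h (α (m-j-1)) = c₀ * a (m-j) := by
      intro j
      induction j with
      | zero => intro _; simpa using hml
      | succ i ih =>
        intro hlt
        have ihm := ih (by omega)
        have hkk : (m - (i+1)) + 1 = m - i := by omega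
        have hprev : Yf h (α ((m-(i+1))+1)) - Yf h (α (m-(i+1)))
            = c₀ * a ((m-(i+1))+1) := by
          rw [hkk]
          have e2 : m - i - 1 = m - (i+1) := by omega
          rw [← e2]
          exact ihm
        have hd := hdownstep (m-(i+1)) (by omega) (by omega) hprev
        simpa using hd
    intro k h1 h2
    rcases le_or_gt m k with hmk | hmk
    · have := hup (k - m) (by omega)
      rw [show m + (k - m) = k from by omega] at this
      exact this
    · have := hdown (m - k) (by omega)
      rw [show m - (m - k) = k from by omega] at this
      exact this
  have hYf0 : Yf h 0 = 0 := intervalIntegral.integral_same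
  have hnodes : ∀ k, k ≤ n → Yf h (α k) = c₀ * α k := by
    intro k
    induction k with
    | zero => intro _; rw [hα0]; simpa using hYf0
    | succ i ih =>
      intro h2
      have h3 := hchain (i+1) (by omega) h2
      simp only [Nat.add_sub_cancel] at h3
      have h4 := hα (i+1) (by omega) h2
      simp only [Nat.add_sub_cancel] at h4
      linear_combination h3 + ih (by omega) - c₀ * h4
  have hc0 : c₀ = 0 := by
    have := hnodes n le_rfl
    rw [hαn, hh.2] at this
    linarith
  have hallnodes : ∀ k, k ≤ n → Yf h (α k) = 0 := by
    intro k hk; rw [hnodes k hk, hc0, zero_mul]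
  have hconst0 : ∀ᵐ x ∂volume, x ∈ Ioo (α (m-1)) (α m) → h x = 0 := by
    filter_upwards [hconst] with x hx hxm
    rw [hx hxm, hc0]
  have hYh_Im : ∀ x, α (m-1) ≤ x → x ≤ α m → Yf h x = 0 := by
    intro x h1 h2
    have h3 := hsubint (α (m-1)) x le_rfl h1 h2
    have h4 := hallnodes (m-1) hm1le
    rw [hc0, zero_mul] at h3
    linarith
  -- products of L² functions are integrable on (0,1]
  have hImul : ∀ f f' : ℝ → ℝ, MemLp f 2 (volume.restrict (Ioo (0:ℝ) 1)) →
      MemLp f' 2 (volume.restrict (Ioo (0:ℝ) 1)) →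
      IntegrableOn (fun t => f t * f' t) (Ioc (0:ℝ) 1) := by
    intro f f' hf hf'
    rw [integrableOn_Ioc_iff_integrableOn_Ioo]
    exact Stmt5Aux.L2mul hf hf'
  -- orthogonality of h and g
  have horto : ∫ t in Ioc (0:ℝ) 1, h t * g t = 0 := by
    have e : ∀ t, h t * g t = h t * g₁ t
        + ∑ k ∈ Finset.Icc 1 (n-1), c k * (h t * ekderiv (γ k) (α k) (δ k) t) := by
      intro t
      rw [hg]
      simp only [mul_add, Finset.mul_sum]
      congr 1
      exact Finset.sum_congr rfl (fun k _ => by ring)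
    have hintk : ∀ k ∈ Finset.Icc 1 (n-1), Integrable
        (fun t => c k * (h t * ekderiv (γ k) (α k) (δ k) t))
        (volume.restrict (Ioc (0:ℝ) 1)) := fun k _ =>
      (hImul h _ hhmem (Stmt5Aux.ekderiv_memL2 _ _ _)).const_mul _
    simp only [e]
    rw [integral_add (hImul h g₁ hhmem hg1mem) (integrable_finset_sum _ hintk),
      integral_finset_sum _ hintk]
    have e1 : ∫ t in Ioc (0:ℝ) 1, h t * g₁ t = 0 := by
      rw [← cvI]; exact hperp₁ g₁ hg₁ hg₁supp
    rw [e1, zero_add]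
    refine Finset.sum_eq_zero (fun k hk => ?_)
    rw [integral_const_mul]
    have hk' := Finset.mem_Icc.mp hk
    rw [← cvI, hperp₂ k hk'.1 hk'.2, mul_zero]
  -- membership facts for the products with primitives
  have hYgcont := Part2.Yf_cont hgmem
  have hYhcont := Part2.Yf_cont hhmem
  have hW1 : MemLp (fun t => Yf g t * h t) 2 (volume.restrict (Ioo (0:ℝ) 1)) :=
    Part2.memL2_mul_cont hYgcont hhmem
  have hW2 : MemLp (fun t => Yf h t * g t) 2 (volume.restrict (Ioo (0:ℝ) 1)) :=
    Part2.memL2_mul_cont hYhcont hgmem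
  have hW3 : MemLp (fun t => Yf h t * h t) 2 (volume.restrict (Ioo (0:ℝ) 1)) :=
    Part2.memL2_mul_cont hYhcont hhmem
  have hWmem : MemLp (fun t => Yf g t * h t + Yf h t * g t + Yf h t * h t) 2
      (volume.restrict (Ioo (0:ℝ) 1)) := (hW1.add hW2).add hW3
  have hPWIoo : IntegrableOn
      (fun t => P t * (Yf g t * h t + Yf h t * g t + Yf h t * h t)) (Ioo (0:ℝ) 1) :=
    Stmt5Aux.L2mul hP hWmem
  -- the integral of W over each subinterval vanishes
  have hWint : ∀ k, 1 ≤ k → k ≤ n →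
      ∫ t in Ioc (α (k-1)) (α k), (Yf g t * h t + Yf h t * g t + Yf h t * h t) = 0 := by
    intro k h1 h2
    have hpk : 0 ≤ α (k-1) := hα0le _ (by omega)
    have hqk : α k ≤ 1 := hαle1 _ h2
    have hpq : α (k-1) ≤ α k := (hstep k h1 h2).le
    have k1 := Part2.key hgmem hhmem hpk hpq hqk
    have k2 := Part2.key2 hhmem hpk hpq hqk
    have hi1 : IntegrableOn (fun t => Yf g t * h t + Yf h t * g t)
        (Ioc (α (k-1)) (α k)) := Part2.intOn_Ioc (hW1.add hW2) hpk hqk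
    have hi2 : IntegrableOn (fun t => Yf h t * h t) (Ioc (α (k-1)) (α k)) :=
      Part2.intOn_Ioc hW3 hpk hqk
    have hsplit : ∫ t in Ioc (α (k-1)) (α k),
        ((Yf g t * h t + Yf h t * g t) + Yf h t * h t)
        = (∫ t in Ioc (α (k-1)) (α k), (Yf g t * h t + Yf h t * g t))
          + ∫ t in Ioc (α (k-1)) (α k), (Yf h t * h t) := integral_add hi1 hi2
    rw [hsplit, k1, k2, hallnodes k h2, hallnodes (k-1) (by omega)]
    ring
  -- the integral of P·W over each subinterval vanishes
  have hPWk : ∀ k, 1 ≤ k → k ≤ n →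
      ∫ t in Ioc (α (k-1)) (α k),
        P t * (Yf g t * h t + Yf h t * g t + Yf h t * h t) = 0 := by
    intro k h1 h2
    rw [integral_Ioc_eq_integral_Ioo]
    by_cases hkm : k = m
    · subst hkm
      have hz : ∀ᵐ x ∂volume, x ∈ Ioo (α (k-1)) (α k) →
          P x * (Yf g x * h x + Yf h x * g x + Yf h x * h x) = 0 := by
        filter_upwards [hconst0] with x hx hxm
        rw [hx hxm, hYh_Im x hxm.1.le hxm.2.le]
        ring
      exact (setIntegral_congr_ae measurableSet_Ioo hz).trans (by simp)
    · have hb := hPconst k h1 h2 hkm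
      have hcg : ∫ t in Ioo (α (k-1)) (α k),
          P t * (Yf g t * h t + Yf h t * g t + Yf h t * h t)
          = ∫ t in Ioo (α (k-1)) (α k),
            β k * (Yf g t * h t + Yf h t * g t + Yf h t * h t) := by
        refine setIntegral_congr_ae measurableSet_Ioo ?_
        filter_upwards [hb] with x hx hxm
        rw [hx hxm]
      rw [hcg, integral_const_mul, ← integral_Ioc_eq_integral_Ioo, hWint k h1 h2, mul_zero]
  -- the total integral of P·W vanishes
  have hPW : ∫ t in Ioc (0:ℝ) 1,
      P t * (Yf g t * h t + Yf h t * g t + Yf h t * h t) = 0 := by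
    have hint : ∀ j, j < n → IntervalIntegrable
        (fun t => P t * (Yf g t * h t + Yf h t * g t + Yf h t * h t))
        volume (α j) (α (j+1)) := by
      intro j hj
      rw [intervalIntegrable_iff_integrableOn_Ioc_of_le (hmono j (j+1) (by omega) (by omega)),
        integrableOn_Ioc_iff_integrableOn_Ioo]
      exact hPWIoo.mono_set (fun x hx =>
        ⟨lt_of_le_of_lt (hα0le j (by omega)) hx.1, lt_of_lt_of_le hx.2 (hαle1 (j+1) hj)⟩)
    have hsum' := intervalIntegral.sum_integral_adjacent_intervals hint
    rw [hα0, hαn] at hsum'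
    have hz : ∀ j ∈ Finset.range n, (∫ t in (α j)..(α (j+1)),
        P t * (Yf g t * h t + Yf h t * g t + Yf h t * h t)) = 0 := by
      intro j hj
      have hj' := Finset.mem_range.mp hj
      rw [intervalIntegral.integral_of_le (hmono j (j+1) (by omega) (by omega))]
      have := hPWk (j+1) (by omega) (by omega)
      simpa using this
    rw [Finset.sum_eq_zero hz] at hsum'
    rw [← intervalIntegral.integral_of_le zero_le_one, ← hsum']
  -- additivity of the primitive
  have hYadd : ∀ t, 0 ≤ t → t ≤ 1 → Yf (fun s => g s + h s) t = Yf g t + Yf h t := by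
    intro t h0 h1
    unfold Yf
    exact intervalIntegral.integral_add (Part2.intervalInt hgmem le_rfl h0 h1)
      (Part2.intervalInt hhmem le_rfl h0 h1)
  -- integrable squares
  have hg2 : IntegrableOn (fun t => (g t)^2) (Ioc (0:ℝ) 1) := by
    have := hImul g g hgmem hgmem
    simpa only [← pow_two] using this
  have hh2 : IntegrableOn (fun t => (h t)^2) (Ioc (0:ℝ) 1) := by
    have := hImul h h hhmem hhmem
    simpa only [← pow_two] using this
  have hhg : IntegrableOn (fun t => h t * g t) (Ioc (0:ℝ) 1) := hImul h g hhmem hgmem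
  have hsq : ∫ t in Ioc (0:ℝ) 1, (g t + h t)^2
      = (∫ t in Ioc (0:ℝ) 1, (g t)^2) + ∫ t in Ioc (0:ℝ) 1, (h t)^2 := by
    have e : ∀ t : ℝ, (g t + h t)^2 = (g t)^2 + (2*(h t * g t) + (h t)^2) :=
      fun t => by ring
    simp only [e]
    have hi : Integrable (fun t => 2*(h t * g t) + (h t)^2)
        (volume.restrict (Ioc (0:ℝ) 1)) := (hhg.const_mul 2).add hh2
    rw [integral_add hg2 hi, integral_add (hhg.const_mul 2) hh2,
      integral_const_mul, horto]
    ring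
  -- the second integrals
  have hPgmem : MemLp (fun t => 2 * Yf g t * g t) 2 (volume.restrict (Ioo (0:ℝ) 1)) := by
    have hcont : ContinuousOn (fun t => 2 * Yf g t) (Icc (0:ℝ) 1) :=
      continuousOn_const.mul hYgcont
    exact Part2.memL2_mul_cont hcont hgmem
  have hPg : Integrable (fun t => P t * (2 * Yf g t * g t))
      (volume.restrict (Ioc (0:ℝ) 1)) := hImul P _ hP hPgmem
  have hPWIoc : IntegrableOn
      (fun t => P t * (Yf g t * h t + Yf h t * g t + Yf h t * h t))
      (Ioc (0:ℝ) 1) := (integrableOn_Ioc_iff_integrableOn_Ioo (μ := volume)).2 hPWIoo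
  have hsecond : ∫ t in Ioc (0:ℝ) 1, P t * (2 * Yf (fun t => g t + h t) t * (g t + h t))
      = (∫ t in Ioc (0:ℝ) 1, P t * (2 * Yf g t * g t))
        + 2 * ∫ t in Ioc (0:ℝ) 1,
            P t * (Yf g t * h t + Yf h t * g t + Yf h t * h t) := by
    have e : EqOn (fun t => P t * (2 * Yf (fun t => g t + h t) t * (g t + h t)))
        (fun t => P t * (2 * Yf g t * g t)
          + 2 * (P t * (Yf g t * h t + Yf h t * g t + Yf h t * h t))) (Ioc (0:ℝ) 1) := by
      intro t ht
      simp only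
      rw [hYadd t ht.1.le ht.2]
      ring
    rw [setIntegral_congr_fun measurableSet_Ioc e,
      integral_add hPg (hPWIoc.const_mul 2), integral_const_mul]
  -- final assembly
  show (∫ t in (0:ℝ)..1, (g t + h t)^2)
      + lam * ∫ t in (0:ℝ)..1, P t * (2 * Yf (fun t => g t + h t) t * (g t + h t))
    = ((∫ t in (0:ℝ)..1, (g t)^2)
      + lam * ∫ t in (0:ℝ)..1, P t * (2 * Yf g t * g t)) + ∫ t in (0:ℝ)..1, (h t)^2
  rw [cvI (fun t => (g t + h t)^2),
    cvI (fun t => P t * (2 * Yf (fun t => g t + h t) t * (g t + h t))),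
    cvI (fun t => (g t)^2), cvI (fun t => P t * (2 * Yf g t * g t)),
    cvI (fun t => (h t)^2), hsq, hsecond, hPW]
  ring
end

section
/- Let λ ∈ ℝ and let y ∈ 𝔥 satisfy y(x) = 0 for all x ∉ [α_{m−1}, α_m]. Define Uy : [0,1] → ℝ by (Uy)(x) = y(α_{m−1} + a_m·x)/√(a_m). Then Uy ∈ 𝔥, ‖Uy‖_𝔥 = ‖y‖_𝔥, and q_λ(y) = q_{a_m d_m λ}(Uy), i.e. ∫₀¹(y′² + λ·P·((y²)′)) dx = ∫₀¹((Uy)′² + a_m d_m λ·P·(((Uy)²)′)) dx. -/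
open MeasureTheory Set Filter Topology

lemma ofReal_max_zero (x : ℝ) : ENNReal.ofReal x = ENNReal.ofReal (max x 0) := by
  rcases le_total x 0 with h | h
  · simp [ENNReal.ofReal_eq_zero.mpr h, max_eq_right h]
  · rw [max_eq_left h]

lemma lint_lt_top {μ : Measure ℝ} {f : ℝ → ℝ} (hfi : Integrable f μ) :
    ∫⁻ x, ENNReal.ofReal (f x) ∂μ < ⊤ := by
  refine lt_of_le_of_lt (lintegral_mono fun x => ?_) hfi.2
  rw [← ofReal_norm_eq_enorm]
  exact ENNReal.ofReal_le_ofReal (le_abs_self _)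

lemma aeZero_of_subintervals (f : ℝ → ℝ) (u v : ℝ)
    (hf : IntegrableOn f (Ioc u v) volume)
    (h : ∀ s t, u ≤ s → s ≤ t → t ≤ v → ∫ x in Ioc s t, f x = 0) :
    ∀ᵐ x ∂(volume.restrict (Ioc u v)), f x = 0 := by
  set μ := volume.restrict (Ioc u v) with hμ
  have hfi : Integrable f μ := hf
  set p : ℝ → ℝ := fun x => max (f x) 0 with hp
  set q : ℝ → ℝ := fun x => max (-f x) 0 with hq
  have hpi : Integrable p μ := hfi.pos_part
  have hqi : Integrable q μ := hfi.neg_part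
  have hpq : ∀ x, p x - q x = f x := fun x => max_zero_sub_eq_self (f x)
  have hIoc : ∀ s t : ℝ, ∫ x in Ioc s t, f x ∂μ = 0 := by
    intro s t
    rw [hμ, Measure.restrict_restrict measurableSet_Ioc, Ioc_inter_Ioc]
    rcases le_or_gt (max s u) (min t v) with hle | hlt
    · exact h (max s u) (min t v) (le_max_right _ _) hle (min_le_right _ _)
    · rw [Ioc_eq_empty (not_lt.mpr hlt.le), Measure.restrict_empty, integral_zero_measure]
  set ν₁ := μ.withDensity (fun x => ENNReal.ofReal (f x)) with hν₁
  set ν₂ := μ.withDensity (fun x => ENNReal.ofReal (-f x)) with hν₂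
  have e₁ : ∀ A : Set ℝ, MeasurableSet A → ν₁ A = ENNReal.ofReal (∫ x in A, p x ∂μ) := by
    intro A hA
    rw [hν₁, withDensity_apply _ hA,
      ofReal_integral_eq_lintegral_ofReal (hpi.restrict)
        (Filter.Eventually.of_forall fun x => le_max_right _ _)]
    exact lintegral_congr fun x => ofReal_max_zero (f x)
  have e₂ : ∀ A : Set ℝ, MeasurableSet A → ν₂ A = ENNReal.ofReal (∫ x in A, q x ∂μ) := by
    intro A hA
    rw [hν₂, withDensity_apply _ hA,
      ofReal_integral_eq_lintegral_ofReal (hqi.restrict)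
        (Filter.Eventually.of_forall fun x => le_max_right _ _)]
    exact lintegral_congr fun x => ofReal_max_zero (-f x)
  have hext : ν₁ = ν₂ := by
    refine Measure.ext_of_Ioc' ν₁ ν₂ (fun s t _ => ?_) (fun s t _ => ?_)
    · rw [hν₁, withDensity_apply _ measurableSet_Ioc]
      exact ne_of_lt (lt_of_le_of_lt (lintegral_mono' Measure.restrict_le_self le_rfl)
        (lint_lt_top hfi))
    · rw [e₁ _ measurableSet_Ioc, e₂ _ measurableSet_Ioc]
      congr 1
      have hsub : ∫ x in Ioc s t, (p x - q x) ∂μ = 0 := by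
        rw [integral_congr_ae (Filter.Eventually.of_forall fun x => hpq x)]
        · exact hIoc s t
      rw [integral_sub hpi.restrict hqi.restrict] at hsub
      linarith
  have hset : ∀ A : Set ℝ, MeasurableSet A → ∫ x in A, f x ∂μ = 0 := by
    intro A hA
    have h12 : ∫ x in A, p x ∂μ = ∫ x in A, q x ∂μ := by
      have := hext ▸ (e₁ A hA)
      rw [e₂ A hA] at this
      have hp0 : 0 ≤ ∫ x in A, p x ∂μ := integral_nonneg fun x => le_max_right _ _
      have hq0 : 0 ≤ ∫ x in A, q x ∂μ := integral_nonneg fun x => le_max_right _ _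
      exact ((ENNReal.ofReal_eq_ofReal_iff hq0 hp0).mp this).symm
    have : ∫ x in A, (p x - q x) ∂μ = 0 := by
      rw [integral_sub hpi.restrict hqi.restrict, h12, sub_self]
    rw [← integral_congr_ae (Filter.Eventually.of_forall fun x => (hpq x).symm)] at this
    exact this
  haveI : IsFiniteMeasure μ := by
    constructor
    rw [hμ, Measure.restrict_apply_univ]
    exact measure_Ioc_lt_top
  exact ae_eq_zero_of_forall_setIntegral_eq_of_sigmaFinite
    (fun s hs _ => hfi.restrict) (fun s hs _ => hset s hs)

lemma fubini_FF (f : ℝ → ℝ) {u v : ℝ} (hf : IntegrableOn f (Ioc u v) volume) :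
    ∫ x in Ioc u v, (∫ t in Ioc u x, f t) * f x = (∫ t in Ioc u v, f t) ^ 2 / 2 := by
  set ν := volume.restrict (Ioc u v) with hν
  have hfi : Integrable f ν := hf
  set H : ℝ × ℝ → ℝ := fun p => f p.1 * f p.2 with hH
  have hHi : Integrable H (ν.prod ν) := hfi.mul_prod hfi
  set A : Set (ℝ × ℝ) := {p | p.2 ≤ p.1} with hA
  have hAm : MeasurableSet A := measurableSet_le measurable_snd measurable_fst
  have htot : ∫ p, H p ∂(ν.prod ν) = (∫ t, f t ∂ν) ^ 2 := by
    rw [hH, integral_prod_mul f f, sq]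
  have hdiag : (ν.prod ν) {p : ℝ × ℝ | p.1 = p.2} = 0 := by
    have hm : MeasurableSet {p : ℝ × ℝ | p.1 = p.2} :=
      measurableSet_eq_fun measurable_fst measurable_snd
    rw [Measure.prod_apply hm]
    have : ∀ x : ℝ, ν (Prod.mk x ⁻¹' {p : ℝ × ℝ | p.1 = p.2}) = 0 := by
      intro x
      have : Prod.mk x ⁻¹' {p : ℝ × ℝ | p.1 = p.2} = {x} := by
        ext y; simp [eq_comm]
      rw [this]
      exact measure_singleton x
    simp [this]
  have hcompl : ∫ p in Aᶜ, H p ∂(ν.prod ν) = ∫ p in {p : ℝ × ℝ | p.1 ≤ p.2}, H p ∂(ν.prod ν) := by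
    refine setIntegral_congr_set (MeasureTheory.ae_eq_set.mpr ⟨?_, ?_⟩)
    · refine measure_mono_null (fun p hp => ?_) hdiag
      rcases hp with ⟨h1, h2⟩
      simp only [hA, mem_compl_iff, mem_setOf_eq, not_le, not_lt] at h1 h2 ⊢
      linarith
    · refine measure_mono_null (fun p hp => ?_) hdiag
      rcases hp with ⟨h1, h2⟩
      simp only [hA, mem_compl_iff, mem_setOf_eq, not_le, not_lt, not_not] at h1 h2 ⊢
      linarith
  have hswap : ∫ p in {p : ℝ × ℝ | p.1 ≤ p.2}, H p ∂(ν.prod ν) = ∫ p in A, H p ∂(ν.prod ν) := by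
    have hmp : MeasurePreserving (Prod.swap : ℝ × ℝ → ℝ × ℝ) (ν.prod ν) (ν.prod ν) :=
      Measure.measurePreserving_swap
    have hemb : MeasurableEmbedding (Prod.swap : ℝ × ℝ → ℝ × ℝ) :=
      MeasurableEquiv.prodComm.measurableEmbedding
    have := hmp.setIntegral_preimage_emb hemb H A
    have hpre : (Prod.swap : ℝ × ℝ → ℝ × ℝ) ⁻¹' A = {p : ℝ × ℝ | p.1 ≤ p.2} := by
      ext ⟨x, y⟩; simp [hA]
    rw [hpre] at this
    rw [← this]
    refine setIntegral_congr_fun (measurableSet_le measurable_fst measurable_snd) ?_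
    intro p _
    simp [hH, mul_comm]
  have h2A : 2 * ∫ p in A, H p ∂(ν.prod ν) = (∫ t, f t ∂ν) ^ 2 := by
    have := integral_add_compl hAm hHi
    rw [← htot, ← this, hcompl, hswap]; ring
  have hfub : ∫ p in A, H p ∂(ν.prod ν)
      = ∫ x, (∫ t, (Iic x).indicator f t ∂ν) * f x ∂ν := by
    rw [← integral_indicator hAm]
    have hind : Integrable (A.indicator H) (ν.prod ν) := hHi.indicator hAm
    rw [MeasureTheory.integral_prod _ hind]
    refine integral_congr_ae (Filter.Eventually.of_forall fun x => ?_)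
    have hy : ∀ y : ℝ, A.indicator H (x, y) = ((Iic x).indicator f y) * f x := by
      intro y
      by_cases hxy : y ≤ x
      · rw [indicator_of_mem (by simpa [hA] using hxy), indicator_of_mem (by simpa using hxy)]
        simp [hH, mul_comm]
      · rw [indicator_of_notMem (by simpa [hA] using hxy),
          indicator_of_notMem (by simpa using hxy)]
        simp
    calc ∫ y, A.indicator H (x, y) ∂ν = ∫ y, ((Iic x).indicator f y) * f x ∂ν :=
          integral_congr_ae (Filter.Eventually.of_forall hy)
      _ = (∫ t, (Iic x).indicator f t ∂ν) * f x := by rw [integral_mul_const]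
  have hinner : ∀ x ∈ Ioc u v, (∫ t, (Iic x).indicator f t ∂ν) = ∫ t in Ioc u x, f t := by
    intro x hx
    rw [integral_indicator measurableSet_Iic, hν,
      Measure.restrict_restrict measurableSet_Iic]
    congr 1
    rw [Iic_inter_Ioc_of_le hx.2]
  have hfin : ∫ x, (∫ t, (Iic x).indicator f t ∂ν) * f x ∂ν
      = ∫ x in Ioc u v, (∫ t in Ioc u x, f t) * f x := by
    rw [hν]
    refine setIntegral_congr_fun measurableSet_Ioc fun x hx => ?_
    rw [hinner x hx]
  rw [← hfin, ← hfub]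
  rw [show (∫ t in Ioc u v, f t) = ∫ t, f t ∂ν from rfl]
  linarith

set_option maxHeartbeats 1000000 in
theorem statement6
    (n m : ℕ) (hn : 2 ≤ n) (hm1 : 1 ≤ m) (hmn : m ≤ n)
    (a β d : ℕ → ℝ) (α : ℕ → ℝ)
    (ha : ∀ k, 1 ≤ k → k ≤ n → 0 < a k)
    (hsum : ∑ k ∈ Finset.Icc 1 n, a k = 1)
    (hα0 : α 0 = 0)
    (hα : ∀ k, 1 ≤ k → k ≤ n → α k = α (k - 1) + a k)
    (hd : ∀ k, 1 ≤ k → k ≤ n → k ≠ m → d k = 0)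
    (hdm : d m ≠ 0)
    (hcontr : a m * |d m| < 1)
    (P : ℝ → ℝ)
    (hP : MemLp P 2 (volume.restrict (Ioo (0:ℝ) 1)))
    (hss : ∀ k, 1 ≤ k → k ≤ n →
      ∀ᵐ t ∂(volume.restrict (Ioo (0:ℝ) 1)),
        P (α (k - 1) + a k * t) = β k + d k * P t)
    (lam : ℝ)
    -- `y = Yf g ∈ 𝔥` vanishes outside `[α_{m-1}, α_m]`
    (g : ℝ → ℝ) (hg : InH g)
    (hgsupp : ∀ x ∈ Icc (0:ℝ) 1, x ∉ Icc (α (m - 1)) (α m) → Yf g x = 0)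
    -- `gU` is the derivative of `Uy`, `(Uy)(x) = y(α_{m-1} + a_m·x)/√a_m`
    (gU : ℝ → ℝ)
    (hgU : gU = fun x => Real.sqrt (a m) * g (α (m - 1) + a m * x)) :
    -- `Uy ∈ 𝔥` (with derivative `gU`), `‖Uy‖ = ‖y‖` and `q_λ(y) = q_{a_m d_m λ}(Uy)`
    (∀ x ∈ Icc (0:ℝ) 1,
      Yf g (α (m - 1) + a m * x) / Real.sqrt (a m) = Yf gU x) ∧
    InH gU ∧
    (∫ t in (0:ℝ)..1, (gU t) ^ 2) = (∫ t in (0:ℝ)..1, (g t) ^ 2) ∧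
    qform P lam g = qform P (a m * d m * lam) gU := by
  obtain ⟨hgL2, hg1⟩ := hg
  set b := a m with hbdef
  set c := α (m - 1) with hcdef
  have hb : 0 < b := ha m hm1 hmn
  have hsb : 0 < Real.sqrt b := Real.sqrt_pos.mpr hb
  have hαm : α m = c + b := hα m hm1 hmn
  rw [hαm] at hgsupp
  -- partial sums and bounds
  have hαsum : ∀ k, k ≤ n → α k = ∑ j ∈ Finset.Icc 1 k, a j := by
    intro k
    induction k with
    | zero => intro _; simpa using hα0
    | succ k ih =>
      intro hk
      rw [hα (k+1) (Nat.le_add_left 1 k) hk, Finset.sum_Icc_succ_top (Nat.le_add_left 1 k)]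
      simp only [Nat.add_sub_cancel]
      rw [ih (le_trans (Nat.le_succ k) hk)]
  have hm1n : m - 1 ≤ n := le_trans (Nat.sub_le m 1) hmn
  have hc0 : 0 ≤ c := by
    rw [hcdef, hαsum (m-1) hm1n]
    exact Finset.sum_nonneg fun j hj =>
      (ha j (Finset.mem_Icc.mp hj).1 ((Finset.mem_Icc.mp hj).2.trans hm1n)).le
  have hcb1 : c + b ≤ 1 := by
    rw [← hαm, hαsum m hmn, ← hsum]
    refine Finset.sum_le_sum_of_subset_of_nonneg (Finset.Icc_subset_Icc_right hmn) ?_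
    intro j hj _
    exact (ha j (Finset.mem_Icc.mp hj).1 (Finset.mem_Icc.mp hj).2).le
  have hc1 : c < 1 := by linarith
  have hcb0 : 0 < c + b := by linarith
  -- measure glossary
  set μ01 := volume.restrict (Ioo (0:ℝ) 1) with hμ01
  haveI : IsFiniteMeasure μ01 := by
    constructor
    rw [hμ01, Measure.restrict_apply_univ]
    exact measure_Ioo_lt_top
  have hrIoc : μ01 = volume.restrict (Ioc (0:ℝ) 1) :=
    Measure.restrict_congr_set Ioo_ae_eq_Ioc
  have hrIcc : μ01 = volume.restrict (Icc (0:ℝ) 1) :=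
    Measure.restrict_congr_set Ioo_ae_eq_Icc
  have hI01 : ∀ h : ℝ → ℝ, (∫ t in (0:ℝ)..1, h t) = ∫ t, h t ∂μ01 := by
    intro h
    rw [intervalIntegral.integral_of_le zero_le_one, hrIoc]
  have hii : ∀ (h : ℝ → ℝ), Integrable h μ01 → ∀ u v : ℝ, 0 ≤ u → u ≤ v → v ≤ 1 →
      IntervalIntegrable h volume u v := by
    intro h hh u v hu huv hv
    rw [intervalIntegrable_iff']
    have : IntegrableOn h (Icc 0 1) volume := by rw [IntegrableOn, ← hrIcc]; exact hh
    refine this.mono_set ?_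
    rw [uIcc_of_le huv]
    exact Icc_subset_Icc hu hv
  -- measurable representative
  have hgsm := hgL2.aestronglyMeasurable
  set g' := hgsm.mk g with hg'def
  have hg'm : StronglyMeasurable g' := hgsm.stronglyMeasurable_mk
  have hgg' : g =ᵐ[μ01] g' := hgsm.ae_eq_mk
  set G := (Ioo (0:ℝ) 1).indicator g' with hGdef
  have hGm : Measurable G := hg'm.measurable.indicator measurableSet_Ioo
  have hgG : ∀ᵐ x ∂(volume : Measure ℝ), x ∈ Ioo (0:ℝ) 1 → g x = G x := by
    have := (ae_restrict_iff' measurableSet_Ioo).mp hgg'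
    filter_upwards [this] with x hx hxm
    rw [hx hxm, hGdef, indicator_of_mem hxm]
  have hgGr : g =ᵐ[μ01] G := by
    filter_upwards [hgg', ae_restrict_mem measurableSet_Ioo] with x h1 h2
    rw [h1, hGdef, indicator_of_mem h2]
  have hGL2 : MemLp G 2 μ01 := hgL2.ae_eq hgGr
  have hGint01 : Integrable G μ01 := hGL2.integrable one_le_two
  have hGint : Integrable G volume := by
    rw [hGdef, integrable_indicator_iff measurableSet_Ioo]
    exact (hgL2.ae_eq hgg').integrable one_le_two
  -- the primitive
  set F : ℝ → ℝ := fun x => ∫ t in (0:ℝ)..x, G t with hFdef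
  have hGii : ∀ u v : ℝ, IntervalIntegrable G volume u v := fun u v => hGint.intervalIntegrable
  have hFcont : Continuous F := intervalIntegral.continuous_primitive hGii 0
  have hFdiff : ∀ u v : ℝ, (∫ t in u..v, G t) = F v - F u := by
    intro u v
    have := intervalIntegral.integral_add_adjacent_intervals (hGii 0 u) (hGii u v)
    simp only [hFdef]
    linarith
  have hne1 : ∀ᵐ t ∂(volume : Measure ℝ), t ≠ 1 := by
    have h1 : volume ({1} : Set ℝ) = 0 := measure_singleton 1
    rw [ae_iff]
    simpa only [not_not, Set.setOf_eq_eq_singleton] using h1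
  -- interval integrals of g and G agree within [0,1]
  have hgGI : ∀ u v : ℝ, 0 ≤ u → u ≤ 1 → 0 ≤ v → v ≤ 1 →
      (∫ t in u..v, g t) = ∫ t in u..v, G t := by
    intro u v hu hu1 hv hv1
    refine intervalIntegral.integral_congr_ae ?_
    filter_upwards [hgG, hne1] with t h1 h2 ht
    obtain ⟨h3, h4⟩ := ht
    refine h1 ⟨lt_of_le_of_lt (le_min hu hv) h3, ?_⟩
    exact lt_of_le_of_ne (le_trans h4 (max_le hu1 hv1)) h2
  have hYF : ∀ x ∈ Icc (0:ℝ) 1, Yf g x = F x := by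
    intro x hx
    show (∫ t in (0:ℝ)..x, g t) = F x
    rw [hgGI 0 x le_rfl zero_le_one hx.1 hx.2]
  -- F vanishes on [0,c] and [c+b,1]
  have hFlt : ∀ x, 0 ≤ x → x < c → F x = 0 := by
    intro x hx hxc
    rw [← hYF x ⟨hx, by linarith⟩]
    exact hgsupp x ⟨hx, by linarith⟩ (fun hmem => absurd hmem.1 (not_le.mpr hxc))
  have hFgt : ∀ x, c + b < x → x ≤ 1 → F x = 0 := by
    intro x hx hx1
    rw [← hYF x ⟨by linarith, hx1⟩]
    exact hgsupp x ⟨by linarith, hx1⟩ (fun hmem => absurd hmem.2 (not_le.mpr hx))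
  have hFc : F c = 0 := by
    rcases eq_or_lt_of_le hc0 with hcc | hcc
    · rw [← hcc]
      simp [hFdef]
    · have hlim : Tendsto F (nhdsWithin c (Iio c)) (nhds (F c)) :=
        (hFcont.tendsto c).mono_left nhdsWithin_le_nhds
      have heq : ∀ᶠ x in nhdsWithin c (Iio c), F x = (0:ℝ) := by
        filter_upwards [Ioo_mem_nhdsLT hcc] with x hx
        exact hFlt x hx.1.le hx.2
      have hlim0 : Tendsto F (nhdsWithin c (Iio c)) (nhds (0:ℝ)) := by
        rw [Filter.tendsto_congr' heq]
        exact tendsto_const_nhds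
      exact tendsto_nhds_unique hlim hlim0
  have hFcb : F (c + b) = 0 := by
    rcases eq_or_lt_of_le hcb1 with hcc | hcc
    · rw [hcc, ← hYF 1 ⟨zero_le_one, le_rfl⟩]
      exact hg1
    · have hlim : Tendsto F (nhdsWithin (c+b) (Ioi (c+b))) (nhds (F (c+b))) :=
        (hFcont.tendsto (c+b)).mono_left nhdsWithin_le_nhds
      have heq : ∀ᶠ x in nhdsWithin (c+b) (Ioi (c+b)), F x = (0:ℝ) := by
        filter_upwards [Ioo_mem_nhdsGT hcc] with x hx
        exact hFgt x hx.1 hx.2.le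
      have hlim0 : Tendsto F (nhdsWithin (c+b) (Ioi (c+b))) (nhds (0:ℝ)) := by
        rw [Filter.tendsto_congr' heq]
        exact tendsto_const_nhds
      exact tendsto_nhds_unique hlim hlim0
  have hF0 : ∀ x, 0 ≤ x → x ≤ c → F x = 0 := by
    intro x hx hxc
    rcases eq_or_lt_of_le hxc with h | h
    · rw [h]; exact hFc
    · exact hFlt x hx h
  have hF1 : ∀ x, c + b ≤ x → x ≤ 1 → F x = 0 := by
    intro x hx hx1
    rcases eq_or_lt_of_le hx with h | h
    · rw [← h]; exact hFcb
    · exact hFgt x h hx1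
  -- G vanishes a.e. off (c, c+b)
  have hGleft : ∀ᵐ x ∂(volume : Measure ℝ), x ∈ Ioc 0 c → G x = 0 := by
    refine (ae_restrict_iff' measurableSet_Ioc).mp ?_
    refine aeZero_of_subintervals G 0 c (hGint.integrableOn) (fun s t hs hst htc => ?_)
    rw [← intervalIntegral.integral_of_le hst, hFdiff,
      hF0 t (hs.trans hst) htc, hF0 s hs (hst.trans htc), sub_zero]
  have hGright : ∀ᵐ x ∂(volume : Measure ℝ), x ∈ Ioc (c+b) 1 → G x = 0 := by
    refine (ae_restrict_iff' measurableSet_Ioc).mp ?_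
    refine aeZero_of_subintervals G (c+b) 1 (hGint.integrableOn) (fun s t hs hst ht1 => ?_)
    rw [← intervalIntegral.integral_of_le hst, hFdiff,
      hF1 t (hs.trans hst) ht1, hF1 s hs (hst.trans ht1), sub_zero]
  -- the affine map and measure transfer
  have hφm : Measurable (fun t : ℝ => c + b * t) :=
    measurable_const.add (measurable_const_mul b)
  have hmapvol : Measure.map (fun t : ℝ => c + b * t) volume
      = ENNReal.ofReal b⁻¹ • volume := by
    have h2 : (fun t : ℝ => c + b * t) = (fun x : ℝ => c + x) ∘ (fun x : ℝ => b * x) := rfl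
    rw [h2, ← Measure.map_map (measurable_const_add c) (measurable_const_mul b)]
    rw [Real.map_volume_mul_left hb.ne', Measure.map_smul,
      (measurePreserving_add_left volume c).map_eq, abs_of_pos (inv_pos.mpr hb)]
  have hφpre : (fun t : ℝ => c + b * t) ⁻¹' (Ioo c (c+b)) = Ioo (0:ℝ) 1 := by
    ext t
    simp only [mem_preimage, mem_Ioo]
    constructor
    · rintro ⟨h1, h2⟩
      constructor <;> nlinarith
    · rintro ⟨h1, h2⟩
      constructor <;> nlinarith
  have hmap : Measure.map (fun t : ℝ => c + b * t) μ01
      = ENNReal.ofReal b⁻¹ • volume.restrict (Ioo c (c + b)) := by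
    rw [hμ01, ← hφpre, ← Measure.restrict_map hφm measurableSet_Ioo, hmapvol,
      Measure.restrict_smul]
  have hsubcc : Ioo c (c+b) ⊆ Ioo (0:ℝ) 1 :=
    fun x hx => ⟨lt_of_le_of_lt hc0 hx.1, lt_of_lt_of_le hx.2 hcb1⟩
  have hres : volume.restrict (Ioo c (c+b)) ≤ μ01 := by
    rw [hμ01]; exact Measure.restrict_mono hsubcc le_rfl
  have hsmul_ne : (ENNReal.ofReal b⁻¹) ≠ ⊤ := ENNReal.ofReal_ne_top
  have htmem : ∀ h : ℝ → ℝ, MemLp h 2 μ01 → MemLp (h ∘ (fun t : ℝ => c + b * t)) 2 μ01 := by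
    intro h hh
    have h1 : MemLp h 2 (volume.restrict (Ioo c (c+b))) := hh.mono_measure hres
    have h2 : MemLp h 2 (Measure.map (fun t : ℝ => c + b * t) μ01) := by
      rw [hmap]; exact h1.smul_measure hsmul_ne
    exact (memLp_map_measure_iff h2.aestronglyMeasurable hφm.aemeasurable).mp h2
  have htint : ∀ h : ℝ → ℝ, Integrable h μ01 →
      Integrable (h ∘ (fun t : ℝ => c + b * t)) μ01 := by
    intro h hh
    have h1 : Integrable h (volume.restrict (Ioo c (c+b))) := hh.mono_measure hres
    have h2 : Integrable h (Measure.map (fun t : ℝ => c + b * t) μ01) := by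
      rw [hmap]; exact h1.smul_measure hsmul_ne
    exact (integrable_map_measure h2.aestronglyMeasurable hφm.aemeasurable).mp h2
  have hpull : ∀ p : ℝ → Prop, (∀ᵐ x ∂(volume : Measure ℝ), p x) →
      (∀ᵐ t ∂(volume : Measure ℝ), p (c + b * t)) := by
    intro p hp
    have h1 : ∀ᵐ x ∂(Measure.map (fun t : ℝ => c + b * t) volume), p x := by
      rw [hmapvol]
      exact Measure.ae_smul_measure hp _
    exact ae_of_ae_map hφm.aemeasurable h1
  -- Part 1
  have hsbinv : Real.sqrt b * b⁻¹ = (Real.sqrt b)⁻¹ := by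
    field_simp
    exact Real.sq_sqrt hb.le
  have hYgU : ∀ x ∈ Icc (0:ℝ) 1, Yf g (c + b * x) / Real.sqrt b = Yf gU x := by
    intro x hx
    have hmem : c + b * x ∈ Icc (0:ℝ) 1 :=
      ⟨by nlinarith [hx.1], by nlinarith [hx.2]⟩
    have h1 : Yf gU x = Real.sqrt b * ∫ t in (0:ℝ)..x, g (c + b * t) := by
      rw [hgU, Yf]
      exact intervalIntegral.integral_const_mul _ _
    have h2 : (∫ t in (0:ℝ)..x, g (c + b * t))
        = b⁻¹ • ∫ s in (c + b * 0)..(c + b * x), g s :=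
      intervalIntegral.integral_comp_add_mul g hb.ne' c
    have h3 : (∫ s in (c + b * 0)..(c + b * x), g s) = F (c + b * x) := by
      rw [mul_zero, add_zero, hgGI c (c + b*x) hc0 hc1.le hmem.1 hmem.2, hFdiff, hFc, sub_zero]
    rw [h1, h2, h3, hYF _ hmem, smul_eq_mul, ← mul_assoc, hsbinv, div_eq_inv_mul]
  -- Part 2
  have hgUL2 : MemLp gU 2 μ01 := by
    have := (htmem g hgL2).const_mul (Real.sqrt b)
    rw [hgU]
    exact this
  have hYgU1 : Yf gU 1 = 0 := by
    rw [← hYgU 1 ⟨zero_le_one, le_rfl⟩, mul_one, hYF (c+b) ⟨hcb0.le, hcb1⟩,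
      hFcb, zero_div]
  -- Part 3
  have hsqint : Integrable (fun t => g t ^ 2) μ01 := hgL2.integrable_sq
  have i1 := hii _ hsqint 0 c le_rfl hc0 hc1.le
  have i2 := hii _ hsqint c (c+b) hc0 (by linarith) hcb1
  have i3 := hii _ hsqint (c+b) 1 hcb0.le hcb1 le_rfl
  have hz1 : (∫ t in (0:ℝ)..c, g t ^ 2) = 0 := by
    have heq : (∫ t in (0:ℝ)..c, g t ^ 2) = ∫ t in (0:ℝ)..c, (0:ℝ) := by
      refine intervalIntegral.integral_congr_ae ?_
      filter_upwards [hgG, hGleft] with t h1 h2 ht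
      rw [Set.uIoc_of_le hc0] at ht
      have hti : t ∈ Ioo (0:ℝ) 1 := ⟨ht.1, lt_of_le_of_lt ht.2 hc1⟩
      simp [h1 hti, h2 ht]
    rw [heq]; simp
  have hz3 : (∫ t in (c+b)..1, g t ^ 2) = 0 := by
    have heq : (∫ t in (c+b)..1, g t ^ 2) = ∫ t in (c+b)..1, (0:ℝ) := by
      refine intervalIntegral.integral_congr_ae ?_
      filter_upwards [hgG, hGright, hne1] with t h1 h2 h3 ht
      rw [Set.uIoc_of_le hcb1] at ht
      have hti : t ∈ Ioo (0:ℝ) 1 := ⟨lt_trans hcb0 ht.1, lt_of_le_of_ne ht.2 h3⟩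
      simp [h1 hti, h2 ht]
    rw [heq]; simp
  have hmid : (∫ t in c..(c+b), g t ^ 2) = ∫ t in (0:ℝ)..1, g t ^ 2 := by
    have hadd1 := intervalIntegral.integral_add_adjacent_intervals i1 i2
    have hadd2 := intervalIntegral.integral_add_adjacent_intervals (i1.trans i2) i3
    rw [← hadd2, ← hadd1, hz1, hz3]
    ring
  have hpart3 : (∫ t in (0:ℝ)..1, gU t ^ 2) = ∫ t in (0:ℝ)..1, g t ^ 2 := by
    have h1 : ∀ t : ℝ, gU t ^ 2 = b * ((fun s => g s ^ 2) (c + b * t)) := by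
      intro t
      rw [hgU]
      simp only [mul_pow]
      rw [Real.sq_sqrt hb.le]
    have h2 : (∫ t in (0:ℝ)..1, gU t ^ 2)
        = ∫ t in (0:ℝ)..1, b * ((fun s => g s ^ 2) (c + b * t)) :=
      intervalIntegral.integral_congr (fun t _ => h1 t)
    rw [h2, intervalIntegral.integral_const_mul,
      intervalIntegral.integral_comp_add_mul (fun s => g s ^ 2) hb.ne' c]
    simp only [mul_zero, add_zero, mul_one, smul_eq_mul]
    rw [← mul_assoc, mul_inv_cancel₀ hb.ne', one_mul]
    exact hmid
  -- integrability package for Part 4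
  have h112 : (1:ENNReal)/1 = 1/2 + 1/2 := by
    rw [ENNReal.div_add_div_same, one_add_one_eq_two,
      ENNReal.div_self two_ne_zero ENNReal.ofNat_ne_top, one_div_one]
  have hPG : Integrable (fun s => P s * G s) μ01 := (hGL2.smul hP (r := 1)).integrable le_rfl
  have habsG : Integrable (fun s => |G s|) volume := hGint.abs
  have hFbd : ∀ x : ℝ, |F x| ≤ ∫ s, |G s| ∂volume := by
    intro x
    rcases le_total 0 x with h | h
    · calc |F x| ≤ ∫ s in (0:ℝ)..x, |G s| :=
            intervalIntegral.abs_integral_le_integral_abs h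
        _ = ∫ s in Ioc 0 x, |G s| := intervalIntegral.integral_of_le h
        _ ≤ ∫ s, |G s| ∂volume :=
            setIntegral_le_integral habsG
              (Filter.Eventually.of_forall fun s => abs_nonneg _)
    · have hFx : F x = - ∫ s in x..(0:ℝ), G s := by
        rw [hFdef, ← intervalIntegral.integral_symm]
      calc |F x| = |∫ s in x..(0:ℝ), G s| := by rw [hFx, abs_neg]
        _ ≤ ∫ s in x..(0:ℝ), |G s| := intervalIntegral.abs_integral_le_integral_abs h
        _ = ∫ s in Ioc x 0, |G s| := intervalIntegral.integral_of_le h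
        _ ≤ ∫ s, |G s| ∂volume :=
            setIntegral_le_integral habsG
              (Filter.Eventually.of_forall fun s => abs_nonneg _)
  have hC : ∀ x : ℝ, ‖2 * F x‖ ≤ 2 * ∫ s, |G s| ∂volume := by
    intro x
    rw [Real.norm_eq_abs, abs_mul, abs_two]
    have := hFbd x
    linarith
  have haff : Continuous (fun t : ℝ => 2 * F (c + b * t)) :=
    continuous_const.mul (hFcont.comp (continuous_const.add (continuous_const.mul continuous_id)))
  have hK : Integrable (fun s => (2 * F s) * (P s * G s)) μ01 :=
    hPG.bdd_mul ((continuous_const.mul hFcont).aestronglyMeasurable) (Filter.Eventually.of_forall hC)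
  have hW1 : Integrable (fun t => (2 * F (c + b * t)) * G (c + b * t)) μ01 :=
    (htint G hGint01).bdd_mul haff.aestronglyMeasurable (Filter.Eventually.of_forall fun x => hC (c + b * x))
  have hPGφ : Integrable (fun t => P t * G (c + b * t)) μ01 :=
    ((htmem G hGL2).smul hP (r := 1)).integrable le_rfl
  have hW2 : Integrable (fun t => (2 * F (c + b * t)) * (P t * G (c + b * t))) μ01 :=
    hPGφ.bdd_mul haff.aestronglyMeasurable (Filter.Eventually.of_forall fun x => hC (c + b * x))
  set W2int := ∫ t in (0:ℝ)..1, (2 * F (c + b * t)) * (P t * G (c + b * t)) with hW2def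
  -- Step A : rewrite the integral for g
  have hstepA : (∫ t in (0:ℝ)..1, P t * (2 * Yf g t * g t))
      = ∫ t in (0:ℝ)..1, (2 * F t) * (P t * G t) := by
    refine intervalIntegral.integral_congr_ae ?_
    filter_upwards [hgG, hne1] with t h1 h2 ht
    rw [Set.uIoc_of_le zero_le_one] at ht
    have hti : t ∈ Ioo (0:ℝ) 1 := ⟨ht.1, lt_of_le_of_ne ht.2 h2⟩
    rw [hYF t ⟨hti.1.le, hti.2.le⟩, h1 hti]
    ring
  -- Step B : restrict to the middle interval
  have j1 := hii _ hK 0 c le_rfl hc0 hc1.le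
  have j2 := hii _ hK c (c+b) hc0 (by linarith) hcb1
  have j3 := hii _ hK (c+b) 1 hcb0.le hcb1 le_rfl
  have hKz1 : (∫ t in (0:ℝ)..c, (2 * F t) * (P t * G t)) = 0 := by
    have heq : (∫ t in (0:ℝ)..c, (2 * F t) * (P t * G t)) = ∫ t in (0:ℝ)..c, (0:ℝ) := by
      refine intervalIntegral.integral_congr_ae ?_
      filter_upwards [hGleft] with t h2 ht
      rw [Set.uIoc_of_le hc0] at ht
      simp [h2 ht]
    rw [heq]; simp
  have hKz3 : (∫ t in (c+b)..1, (2 * F t) * (P t * G t)) = 0 := by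
    have heq : (∫ t in (c+b)..1, (2 * F t) * (P t * G t)) = ∫ t in (c+b)..1, (0:ℝ) := by
      refine intervalIntegral.integral_congr_ae ?_
      filter_upwards [hGright] with t h2 ht
      rw [Set.uIoc_of_le hcb1] at ht
      simp [h2 ht]
    rw [heq]; simp
  have hKmid : (∫ t in (0:ℝ)..1, (2 * F t) * (P t * G t))
      = ∫ t in c..(c+b), (2 * F t) * (P t * G t) := by
    have hadd1 := intervalIntegral.integral_add_adjacent_intervals j1 j2
    have hadd2 := intervalIntegral.integral_add_adjacent_intervals (j1.trans j2) j3
    rw [← hadd2, ← hadd1, hKz1, hKz3]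
    ring
  -- Step C : change of variables on the middle interval
  have hcvK := intervalIntegral.smul_integral_comp_add_mul (a := (0:ℝ)) (b := (1:ℝ))
    (fun s => (2 * F s) * (P s * G s)) b c
  simp only [mul_zero, add_zero, mul_one, smul_eq_mul] at hcvK
  -- Step D : self-similarity substitution
  have hssm : ∀ᵐ t ∂(volume : Measure ℝ), t ∈ Ioo (0:ℝ) 1 →
      P (c + b * t) = β m + d m * P t :=
    (ae_restrict_iff' measurableSet_Ioo).mp (hss m hm1 hmn)
  have hsubst : (∫ t in (0:ℝ)..1, (2 * F (c + b * t)) * (P (c + b * t) * G (c + b * t)))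
      = ∫ t in (0:ℝ)..1, (β m * ((2 * F (c + b * t)) * G (c + b * t))
          + d m * ((2 * F (c + b * t)) * (P t * G (c + b * t)))) := by
    refine intervalIntegral.integral_congr_ae ?_
    filter_upwards [hssm, hne1] with t h1 h2 ht
    rw [Set.uIoc_of_le zero_le_one] at ht
    have hti : t ∈ Ioo (0:ℝ) 1 := ⟨ht.1, lt_of_le_of_ne ht.2 h2⟩
    rw [h1 hti]
    ring
  have hsplit2 : (∫ t in (0:ℝ)..1, (β m * ((2 * F (c + b * t)) * G (c + b * t))
          + d m * ((2 * F (c + b * t)) * (P t * G (c + b * t)))))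
      = β m * (∫ t in (0:ℝ)..1, (2 * F (c + b * t)) * G (c + b * t)) + d m * W2int := by
    rw [intervalIntegral.integral_add
        ((hii _ hW1 0 1 le_rfl zero_le_one le_rfl).const_mul _)
        ((hii _ hW2 0 1 le_rfl zero_le_one le_rfl).const_mul _),
      intervalIntegral.integral_const_mul, intervalIntegral.integral_const_mul]
  -- Step E : the β-term vanishes
  have hGcc : (∫ t in Ioc c (c+b), G t) = 0 := by
    rw [← intervalIntegral.integral_of_le (by linarith : c ≤ c+b), hFdiff, hFcb, hFc, sub_zero]
  have hFGzero : (∫ x in Ioc c (c+b), F x * G x) = 0 := by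
    have hFF := fubini_FF G (hGint.integrableOn (s := Ioc c (c+b)))
    have hinner : ∀ x ∈ Ioc c (c+b), (∫ t in Ioc c x, G t) = F x := by
      intro x hx
      rw [← intervalIntegral.integral_of_le hx.1.le, hFdiff, hFc, sub_zero]
    calc (∫ x in Ioc c (c+b), F x * G x)
        = ∫ x in Ioc c (c+b), (∫ t in Ioc c x, G t) * G x :=
          (setIntegral_congr_fun measurableSet_Ioc (fun x hx => by rw [hinner x hx])).symm
      _ = 0 := by rw [hFF, hGcc]; norm_num
  have hW1zero : (∫ t in (0:ℝ)..1, (2 * F (c + b * t)) * G (c + b * t)) = 0 := by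
    have hcv := intervalIntegral.smul_integral_comp_add_mul (a := (0:ℝ)) (b := (1:ℝ))
      (fun s => (2 * F s) * G s) b c
    simp only [mul_zero, add_zero, mul_one, smul_eq_mul] at hcv
    have h2' : (∫ x in c..(c+b), (2 * F x) * G x) = 2 * ∫ x in Ioc c (c+b), F x * G x := by
      rw [intervalIntegral.integral_congr (g := fun x => 2 * (F x * G x))
        (fun x _ => by ring), intervalIntegral.integral_const_mul,
        intervalIntegral.integral_of_le (by linarith : c ≤ c+b)]
    rw [h2', hFGzero, mul_zero] at hcv
    have := mul_eq_zero.mp hcv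
    rcases this with h | h
    · exact absurd h hb.ne'
    · exact h
  -- Step F : identify the integral for gU
  have hJ : (∫ t in (0:ℝ)..1, P t * (2 * Yf gU t * gU t)) = W2int := by
    rw [hW2def]
    refine intervalIntegral.integral_congr_ae ?_
    filter_upwards [hne1, hpull _ hgG] with t h2 h3 ht
    rw [Set.uIoc_of_le zero_le_one] at ht
    have hti : t ∈ Ioo (0:ℝ) 1 := ⟨ht.1, lt_of_le_of_ne ht.2 h2⟩
    have hφti : c + b * t ∈ Ioo c (c+b) := ⟨by nlinarith [hti.1], by nlinarith [hti.2]⟩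
    have hgφ : g (c + b * t) = G (c + b * t) := h3 (hsubcc hφti)
    have hmem01 : c + b * t ∈ Icc (0:ℝ) 1 := ⟨by nlinarith [hti.1], by nlinarith [hti.2]⟩
    have hYgUt : Yf gU t = F (c + b * t) / Real.sqrt b := by
      rw [← hYgU t ⟨hti.1.le, hti.2.le⟩, hYF _ hmem01]
    have hgUt : gU t = Real.sqrt b * G (c + b * t) := by
      rw [hgU]
      simp only []
      rw [hgφ]
    rw [hYgUt, hgUt]
    field_simp
  -- conclusion
  refine ⟨hYgU, ⟨hgUL2, hYgU1⟩, hpart3, ?_⟩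
  simp only [qform]
  rw [hpart3]
  congr 1
  rw [hstepA, hKmid, ← hcvK, hsubst, hsplit2, hW1zero, hJ]
  ring
end

section
/- For a subspace V ⊆ 𝔥 and λ ∈ ℝ, let N(λ, V) denote the supremum of dim F over all subspaces F ⊆ V for which there exists ε > 0 with q_λ(y) ≤ −ε‖y‖²_𝔥 for all y ∈ F. Then for every λ ∈ ℝ one has N(λ, 𝔥₁) = N(a_m d_m λ, 𝔥), where 𝔥₁ = { y ∈ 𝔥 : y(x) = 0 for all x ∉ [α_{m−1}, α_m] }. -/
open MeasureTheory Set Filter Topology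

/-- Squared norm in `𝔥`: `‖y‖² = ∫₀¹ y'²` for `y = Yf g`. -/
noncomputable def sqNorm (g : ℝ → ℝ) : ℝ := ∫ t in (0:ℝ)..1, (g t) ^ 2

/-- `N(λ, V)`: the supremum (in `ℕ∞`) of the dimensions of subspaces `F` of `V ⊆ 𝔥`
(described by linearly independent — in `𝔥` — spanning families `v`) on which
`q_λ(y) ≤ -ε·‖y‖²_𝔥` for some `ε > 0`. -/
noncomputable def negIdx (P : ℝ → ℝ) (lam : ℝ) (V : Set (ℝ → ℝ)) : ℕ∞ :=
  sSup {N : ℕ∞ | ∃ nd : ℕ, N = (nd : ℕ∞) ∧ ∃ v : Fin nd → (ℝ → ℝ),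
    (∀ i, v i ∈ V) ∧
    (∀ c : Fin nd → ℝ, c ≠ 0 → sqNorm (∑ i, c i • v i) ≠ 0) ∧
    ∃ ε : ℝ, 0 < ε ∧ ∀ c : Fin nd → ℝ,
      qform P lam (∑ i, c i • v i) ≤ -ε * sqNorm (∑ i, c i • v i)}

/-- If the primitive of an (everywhere) integrable function vanishes on `[u,v]`,
then the function vanishes a.e. on `(u,v)`. -/
lemma aux_ae_zero {g : ℝ → ℝ} (hg : Integrable g volume)
    {u v : ℝ} (h : ∀ x ∈ Icc u v, ∫ t in u..x, g t = 0) :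
    ∀ᵐ x : ℝ, x ∈ Ioo u v → g x = 0 := by
  filter_upwards [IsUnifLocDoublingMeasure.ae_tendsto_average (μ := (volume : Measure ℝ))
    hg.locallyIntegrable 1] with x hx hxuv
  set ε := min (x - u) (v - x) with hεdef
  have hε0 : 0 < ε := lt_min (by linarith [hxuv.1]) (by linarith [hxuv.2])
  have hδlim : Tendsto (fun j : ℕ => ε / (j + 1)) atTop (𝓝[>] 0) := by
    apply tendsto_nhdsWithin_of_tendsto_nhds_of_eventually_within
    · exact tendsto_const_nhds.div_atTop (tendsto_natCast_atTop_atTop.atTop_add tendsto_const_nhds)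
    · filter_upwards with j
      have : (0:ℝ) < (j:ℝ) + 1 := by positivity
      exact div_pos hε0 this
  have hmem : ∀ᶠ j : ℕ in atTop, x ∈ Metric.closedBall x (1 * (ε / (j + 1))) := by
    filter_upwards with j
    have : (0:ℝ) < (j:ℝ) + 1 := by positivity
    simp [Metric.mem_closedBall, le_of_lt, div_pos hε0 this]
  have htend := hx (fun _ => x) (fun j : ℕ => ε / (j + 1)) hδlim hmem
  have hzero : ∀ j : ℕ, (⨍ y in Metric.closedBall x (ε / (j + 1)), g y) = 0 := by
    intro j
    have hj : (0:ℝ) < (j:ℝ) + 1 := by positivity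
    have hδpos : 0 < ε / (j + 1) := div_pos hε0 hj
    have hδle : ε / (j + 1) ≤ ε := by
      rw [div_le_iff₀ hj]
      nlinarith
    set δ := ε / (j + 1)
    have hball : Metric.closedBall x δ = Icc (x - δ) (x + δ) := Real.closedBall_eq_Icc
    have hIcc : ∫ y in Metric.closedBall x δ, g y = ∫ y in (x - δ)..(x + δ), g y := by
      rw [hball, MeasureTheory.integral_Icc_eq_integral_Ioc,
        ← intervalIntegral.integral_of_le (by linarith)]
    have hsub : ∫ y in (x-δ)..(x+δ), g y
        = (∫ t in u..(x+δ), g t) - (∫ t in u..(x-δ), g t) := by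
      rw [intervalIntegral.integral_interval_sub_left hg.intervalIntegrable
        hg.intervalIntegrable]
    have h1 : x + δ ∈ Icc u v := by
      constructor
      · have := hxuv.1; linarith
      · have : δ ≤ v - x := le_trans hδle (min_le_right _ _)
        linarith
    have h2 : x - δ ∈ Icc u v := by
      constructor
      · have : δ ≤ x - u := le_trans hδle (min_le_left _ _)
        linarith
      · have := hxuv.2; linarith
    rw [setAverage_eq, hIcc, hsub, h _ h1, h _ h2]
    simp
  have : Tendsto (fun _ : ℕ => (0:ℝ)) atTop (𝓝 (g x)) := by
    apply htend.congr
    intro j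
    simpa using hzero j
  exact tendsto_nhds_unique this tendsto_const_nhds

lemma aux_ii {F : ℝ → ℝ} (h : IntegrableOn F (Ioo (0:ℝ) 1) volume) {x y : ℝ}
    (hx : x ∈ Icc (0:ℝ) 1) (hy : y ∈ Icc (0:ℝ) 1) : IntervalIntegrable F volume x y := by
  have h' : IntegrableOn F (Ioc (0:ℝ) 1) volume := by
    unfold IntegrableOn
    rwa [← Measure.restrict_congr_set Ioo_ae_eq_Ioc]
  rw [intervalIntegrable_iff]
  refine h'.mono_set ?_
  rw [uIoc_eq_union]
  apply union_subset <;> apply Ioc_subset_Ioc <;>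
    simp [hx.1, hx.2, hy.1, hy.2, le_min_iff, max_le_iff]

lemma aux_cont {g : ℝ → ℝ} (hg : IntegrableOn g (Ioo (0:ℝ) 1) volume) :
    ContinuousOn (Yf g) (Icc (0:ℝ) 1) := by
  have h' : IntegrableOn g (Icc (0:ℝ) 1) volume := by
    rwa [integrableOn_Icc_iff_integrableOn_Ioo]
  have h2 := intervalIntegral.continuousOn_primitive (a := 0) (b := 1) (μ := volume) h'
  apply h2.congr
  intro x hx
  rw [Yf, intervalIntegral.integral_of_le hx.1]

lemma aux_bound {g : ℝ → ℝ} (hg : IntegrableOn g (Ioo (0:ℝ) 1) volume) :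
    ∃ C : ℝ, ∀ x ∈ Icc (0:ℝ) 1, |Yf g x| ≤ C :=
  isCompact_Icc.exists_bound_of_continuousOn (aux_cont hg)

lemma aux_preimage (e B : ℝ) (hB : 0 < B) (u v : ℝ) :
    (fun t : ℝ => e + B * t) ⁻¹' (Ioo (e + B * u) (e + B * v)) = Ioo u v := by
  ext t
  simp only [mem_preimage, mem_Ioo]
  constructor
  · rintro ⟨h1, h2⟩
    constructor <;> nlinarith
  · rintro ⟨h1, h2⟩
    constructor <;> nlinarith

lemma aux_map (e B : ℝ) (hB : B ≠ 0) (s : Set ℝ) :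
    Measure.map (fun t : ℝ => e + B * t) (volume.restrict ((fun t : ℝ => e + B * t) ⁻¹' s)) =
      ENNReal.ofReal |B⁻¹| • volume.restrict s := by
  have hemb : MeasurableEmbedding (fun t : ℝ => e + B * t) := by
    exact ((Homeomorph.mulLeft₀ B hB).trans (Homeomorph.addLeft e)).measurableEmbedding
  have hmapvol : Measure.map (fun t : ℝ => e + B * t) volume
      = ENNReal.ofReal |B⁻¹| • volume := by
    have h1 : (fun t : ℝ => e + B * t) = (fun t : ℝ => e + t) ∘ (fun t : ℝ => B * t) := rfl
    rw [h1, ← Measure.map_map (measurable_const_add e) (measurable_const_mul B),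
      Real.map_volume_mul_left hB, Measure.map_smul,
      (measurePreserving_add_left volume e).map_eq]
  rw [← hemb.restrict_map, hmapvol, Measure.restrict_smul]

lemma aux_Yf_mul {g : ℝ → ℝ} (hg : IntegrableOn g (Ioo (0:ℝ) 1) volume) :
    ∫ t in (0:ℝ)..1, Yf g t * g t = (Yf g 1)^2 / 2 := by
  set μ : Measure ℝ := volume.restrict (Ioo (0:ℝ) 1) with hμ
  have hgi : Integrable g μ := hg
  set W : ℝ × ℝ → ℝ := fun z => if z.1 < z.2 then g z.1 * g z.2 else 0 with hW
  set W' : ℝ × ℝ → ℝ := fun z => if z.2 < z.1 then g z.1 * g z.2 else 0 with hW'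
  have hprod : Integrable (fun z : ℝ × ℝ => g z.1 * g z.2) (μ.prod μ) := hgi.mul_prod hgi
  have hWind : W = Set.indicator {z : ℝ × ℝ | z.1 < z.2} (fun z => g z.1 * g z.2) := by
    funext z; simp [hW, Set.indicator_apply, mem_setOf_eq]
  have hW'ind : W' = Set.indicator {z : ℝ × ℝ | z.2 < z.1} (fun z => g z.1 * g z.2) := by
    funext z; simp [hW', Set.indicator_apply, mem_setOf_eq]
  have hWint : Integrable W (μ.prod μ) := by
    rw [hWind]; exact hprod.indicator (measurableSet_lt measurable_fst measurable_snd)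
  have hW'int : Integrable W' (μ.prod μ) := by
    rw [hW'ind]; exact hprod.indicator (measurableSet_lt measurable_snd measurable_fst)
  -- the two triangles have the same integral
  have hswap : ∫ z, W' z ∂(μ.prod μ) = ∫ z, W z ∂(μ.prod μ) := by
    have := MeasureTheory.integral_prod_swap (μ := μ) (ν := μ) W
    rw [← this]
    congr 1
    funext z
    simp only [hW, hW', Prod.fst_swap, Prod.snd_swap]
    by_cases h : z.2 < z.1 <;> simp [h, mul_comm]
  -- diagonal is null
  have hdiag : ∀ᵐ z ∂(μ.prod μ), z.1 ≠ z.2 := by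
    have hmeas : MeasurableSet {z : ℝ × ℝ | z.1 = z.2} :=
      measurableSet_eq_fun measurable_fst measurable_snd
    have h0 : (μ.prod μ) {z : ℝ × ℝ | z.1 = z.2} = 0 := by
      rw [Measure.prod_apply hmeas]
      have : ∀ x : ℝ, μ (Prod.mk x ⁻¹' {z : ℝ × ℝ | z.1 = z.2}) = 0 := by
        intro x
        have : (Prod.mk x ⁻¹' {z : ℝ × ℝ | z.1 = z.2}) = {x} := by
          ext y; simp [eq_comm]
        rw [this]
        exact measure_mono_null (subset_refl _) (le_antisymm
          (le_trans (Measure.restrict_le_self _) (by simp)) zero_le)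
      simp [this]
    rw [ae_iff]
    simpa using h0
  have hsum : ∫ z, (W z + W' z) ∂(μ.prod μ) = (∫ t, g t ∂μ) * (∫ t, g t ∂μ) := by
    rw [← MeasureTheory.integral_prod_mul (μ := μ) (ν := μ) g g]
    apply integral_congr_ae
    filter_upwards [hdiag] with z hz
    rcases lt_or_gt_of_ne hz with h | h
    · simp [hW, hW', h, asymm h]
    · simp [hW, hW', h, asymm h]
  have htwo : 2 * ∫ z, W z ∂(μ.prod μ) = (∫ t, g t ∂μ) * (∫ t, g t ∂μ) := by
    rw [← hsum, integral_add hWint hW'int, hswap]; ring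
  -- Fubini: the left triangle integral equals ∫ Yf g t * g t
  have hfub : ∫ z, W z ∂(μ.prod μ) = ∫ t, (Yf g t * g t) ∂μ := by
    rw [MeasureTheory.integral_prod_symm W hWint]
    apply setIntegral_congr_fun measurableSet_Ioo
    intro t ht
    show (∫ s, W (s, t) ∂μ) = Yf g t * g t
    have h1 : (fun s => W (s, t)) = Set.indicator (Iio t) (fun s => g s * g t) := by
      funext s; simp [hW, Set.indicator_apply, mem_Iio]
    rw [h1, MeasureTheory.integral_indicator measurableSet_Iio]
    rw [hμ, Measure.restrict_restrict measurableSet_Iio]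
    have h2 : Iio t ∩ Ioo 0 1 = Ioo 0 t := by
      ext s; simp only [mem_inter_iff, mem_Iio, mem_Ioo]
      constructor
      · rintro ⟨h3, h4, h5⟩; exact ⟨h4, h3⟩
      · rintro ⟨h3, h4⟩; exact ⟨h4, h3, lt_trans h4 ht.2⟩
    rw [h2, MeasureTheory.integral_mul_const]
    congr 1
    rw [Yf, intervalIntegral.integral_of_le ht.1.le, MeasureTheory.integral_Ioc_eq_integral_Ioo]
  have hYf1 : ∫ t, g t ∂μ = Yf g 1 := by
    rw [Yf, intervalIntegral.integral_of_le (by norm_num : (0:ℝ) ≤ 1),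
      MeasureTheory.integral_Ioc_eq_integral_Ioo]
  have hIcc : ∫ t in (0:ℝ)..1, Yf g t * g t = ∫ t, (Yf g t * g t) ∂μ := by
    rw [intervalIntegral.integral_of_le (by norm_num : (0:ℝ) ≤ 1),
      MeasureTheory.integral_Ioc_eq_integral_Ioo]
  rw [hIcc, ← hfub]
  have := htwo
  rw [hYf1] at this
  linarith [this]

instance : IsFiniteMeasure (volume.restrict (Ioo (0:ℝ) 1)) := by
  constructor
  rw [Measure.restrict_apply_univ, Real.volume_Ioo]
  norm_num

lemma aux_Yf_sub {g : ℝ → ℝ} (hg : IntegrableOn g (Ioo (0:ℝ) 1) volume) {x y : ℝ}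
    (hx : x ∈ Icc (0:ℝ) 1) (hy : y ∈ Icc (0:ℝ) 1) :
    ∫ t in y..x, g t = Yf g x - Yf g y := by
  have h0 : (0:ℝ) ∈ Icc (0:ℝ) 1 := by norm_num
  rw [Yf, Yf, ← intervalIntegral.integral_interval_sub_left
    (aux_ii hg h0 hx) (aux_ii hg h0 hy)]

lemma aux_ae_ne (a : ℝ) : ∀ᵐ t : ℝ ∂volume, t ≠ a := by
  rw [ae_iff]
  have : {t : ℝ | ¬ t ≠ a} = {a} := by ext t; simp
  rw [this]
  exact measure_singleton a

lemma aux_vanish {g : ℝ → ℝ} (hg : IntegrableOn g (Ioo (0:ℝ) 1) volume) {u v : ℝ}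
    (hu : 0 ≤ u) (hv : v ≤ 1) (h : ∀ x ∈ Icc u v, Yf g x = 0) :
    ∀ᵐ x : ℝ ∂volume, x ∈ Ioo u v → g x = 0 := by
  rcases le_or_gt v u with hvu | huv
  · filter_upwards with x hx
    exact absurd (lt_trans hx.1 hx.2) (not_lt.mpr hvu)
  have hg' : Integrable ((Ioo (0:ℝ) 1).indicator g) volume :=
    (integrable_indicator_iff measurableSet_Ioo).mpr hg
  have key : ∀ x ∈ Icc u v, ∫ t in u..x, (Ioo (0:ℝ) 1).indicator g t = 0 := by
    intro x hx
    have hxm : x ∈ Icc (0:ℝ) 1 := ⟨le_trans hu hx.1, le_trans hx.2 hv⟩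
    have hum : u ∈ Icc (0:ℝ) 1 := ⟨hu, le_trans (le_trans hx.1 hx.2) hv⟩
    have heq : ∫ t in u..x, (Ioo (0:ℝ) 1).indicator g t = ∫ t in u..x, g t := by
      apply intervalIntegral.integral_congr_ae
      filter_upwards [aux_ae_ne (1:ℝ)] with t ht1 htm
      rw [uIoc_of_le hx.1] at htm
      have : t ∈ Ioo (0:ℝ) 1 :=
        ⟨lt_of_le_of_lt hu htm.1, lt_of_le_of_ne (le_trans htm.2 hxm.2) ht1⟩
      rw [indicator_of_mem this]
    rw [heq, aux_Yf_sub hg hxm hum, h x hx, h u ⟨le_refl u, le_trans hx.1 hx.2⟩, sub_zero]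
  filter_upwards [aux_ae_zero hg' key] with x hx hxuv
  have hx01 : x ∈ Ioo (0:ℝ) 1 := ⟨lt_of_le_of_lt hu hxuv.1, lt_of_lt_of_le hxuv.2 hv⟩
  have := hx hxuv
  rwa [indicator_of_mem hx01] at this

lemma aux_YfL {g : ℝ → ℝ} (hg : IntegrableOn g (Ioo (0:ℝ) 1) volume) {u : ℝ}
    (hu : 0 ≤ u) (hu1 : u ≤ 1) (h : ∀ x ∈ Ico (0:ℝ) u, Yf g x = 0) : Yf g u = 0 := by
  rcases eq_or_lt_of_le hu with rfl | hu0
  · simp [Yf]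
  have cwa : ContinuousWithinAt (Yf g) (Ico 0 u) u :=
    ((aux_cont hg) u ⟨hu, hu1⟩).mono (fun x hx => ⟨hx.1, le_trans hx.2.le hu1⟩)
  haveI : (𝓝[Ico (0:ℝ) u] u).NeBot := by
    rw [← mem_closure_iff_nhdsWithin_neBot, closure_Ico (ne_of_lt hu0)]
    exact ⟨hu, le_refl u⟩
  have h2 : Tendsto (Yf g) (𝓝[Ico (0:ℝ) u] u) (𝓝 0) := by
    apply Tendsto.congr' _ (tendsto_const_nhds (α := ℝ))
    filter_upwards [self_mem_nhdsWithin] with x hx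
    exact (h x hx).symm
  exact tendsto_nhds_unique cwa h2

lemma aux_YfR' {g : ℝ → ℝ} (hg : IntegrableOn g (Ioo (0:ℝ) 1) volume) {u : ℝ}
    (hu : 0 ≤ u) (hu1 : u ≤ 1) (hY1 : Yf g 1 = 0) (h : ∀ x ∈ Ioo u 1, Yf g x = 0) :
    Yf g u = 0 := by
  rcases eq_or_lt_of_le hu1 with rfl | hu2
  · exact hY1
  have cwa : ContinuousWithinAt (Yf g) (Ioc u 1) u :=
    ((aux_cont hg) u ⟨hu, hu1⟩).mono (fun x hx => ⟨le_trans hu hx.1.le, hx.2⟩)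
  haveI : (𝓝[Ioc u (1:ℝ)] u).NeBot := by
    rw [← mem_closure_iff_nhdsWithin_neBot, closure_Ioc (ne_of_lt hu2)]
    exact ⟨le_refl u, hu1⟩
  have h2 : Tendsto (Yf g) (𝓝[Ioc u (1:ℝ)] u) (𝓝 0) := by
    apply Tendsto.congr' _ (tendsto_const_nhds (α := ℝ))
    filter_upwards [self_mem_nhdsWithin] with x hx
    rcases eq_or_lt_of_le hx.2 with rfl | hx2
    · exact hY1.symm
    · exact (h x ⟨hx.1, hx2⟩).symm
  exact tendsto_nhds_unique cwa h2

lemma aux_igOn {g : ℝ → ℝ} (hg : MemLp g 2 (volume.restrict (Ioo (0:ℝ) 1))) :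
    IntegrableOn g (Ioo (0:ℝ) 1) volume :=
  hg.integrable (by norm_num)

lemma aux_aesm_Yf {g : ℝ → ℝ} (hg : IntegrableOn g (Ioo (0:ℝ) 1) volume) :
    AEStronglyMeasurable (Yf g) (volume.restrict (Ioo (0:ℝ) 1)) :=
  ((aux_cont hg).mono Ioo_subset_Icc_self).aestronglyMeasurable measurableSet_Ioo

lemma aux_int_Yfg {g : ℝ → ℝ} (hg : MemLp g 2 (volume.restrict (Ioo (0:ℝ) 1))) :
    Integrable (fun t => Yf g t * g t) (volume.restrict (Ioo (0:ℝ) 1)) := by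
  obtain ⟨C, hC⟩ := aux_bound (aux_igOn hg)
  apply Integrable.bdd_mul (c := C) (aux_igOn hg) (aux_aesm_Yf (aux_igOn hg))
  filter_upwards [ae_restrict_mem measurableSet_Ioo] with x hx
  rw [Real.norm_eq_abs]
  exact hC x ⟨hx.1.le, hx.2.le⟩

lemma aux_int_Pg {P g : ℝ → ℝ} (hP : MemLp P 2 (volume.restrict (Ioo (0:ℝ) 1)))
    (hg : MemLp g 2 (volume.restrict (Ioo (0:ℝ) 1))) :
    Integrable (fun t => P t * g t) (volume.restrict (Ioo (0:ℝ) 1)) := by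
  have h12 : (1:ENNReal) / 1 = 1 / 2 + 1 / 2 := by
    rw [ENNReal.div_add_div_same, div_one, one_add_one_eq_two,
      ENNReal.div_self (by norm_num) (by norm_num)]
  have := (hg.smul hP : MemLp (P • g) 1 (volume.restrict (Ioo (0:ℝ) 1)))
  exact this.integrable le_rfl

lemma aux_int_P2Yfg {P g : ℝ → ℝ} (hP : MemLp P 2 (volume.restrict (Ioo (0:ℝ) 1)))
    (hg : MemLp g 2 (volume.restrict (Ioo (0:ℝ) 1))) :
    Integrable (fun t => P t * (2 * Yf g t * g t)) (volume.restrict (Ioo (0:ℝ) 1)) := by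
  obtain ⟨C, hC⟩ := aux_bound (aux_igOn hg)
  have h1 : Integrable (fun t => (2 * Yf g t) * (P t * g t))
      (volume.restrict (Ioo (0:ℝ) 1)) := by
    apply Integrable.bdd_mul (c := 2 * |C|) (aux_int_Pg hP hg)
    · exact (aestronglyMeasurable_const.mul (aux_aesm_Yf (aux_igOn hg)))
    · filter_upwards [ae_restrict_mem measurableSet_Ioo] with x hx
      have := hC x ⟨hx.1.le, hx.2.le⟩
      have h2 : |Yf g x| ≤ |C| := le_trans this (le_abs_self C)
      rw [Real.norm_eq_abs, abs_mul, abs_two]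
      exact mul_le_mul_of_nonneg_left h2 (by norm_num)
  exact h1.congr (Eventually.of_forall (fun t => by ring))

lemma aux_i2mu (F : ℝ → ℝ) :
    ∫ t in (0:ℝ)..1, F t = ∫ t, F t ∂(volume.restrict (Ioo (0:ℝ) 1)) := by
  rw [intervalIntegral.integral_of_le (by norm_num : (0:ℝ) ≤ 1),
    MeasureTheory.integral_Ioc_eq_integral_Ioo]

/-- Key self-similarity substitution for the weighted term. -/
lemma aux_ss_integral {P g : ℝ → ℝ} {cc A bb d : ℝ}
    (hP : MemLp P 2 (volume.restrict (Ioo (0:ℝ) 1)))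
    (hg : MemLp g 2 (volume.restrict (Ioo (0:ℝ) 1)))
    (hss : ∀ᵐ t ∂(volume.restrict (Ioo (0:ℝ) 1)), P (cc + A * t) = bb + d * P t)
    (hY1 : Yf g 1 = 0) :
    ∫ t in (0:ℝ)..1, P (cc + A * t) * (2 * Yf g t * g t)
      = d * ∫ t in (0:ℝ)..1, P t * (2 * Yf g t * g t) := by
  have h1 : ∫ t in (0:ℝ)..1, P (cc + A * t) * (2 * Yf g t * g t)
      = ∫ t in (0:ℝ)..1, (bb + d * P t) * (2 * Yf g t * g t) := by
    rw [aux_i2mu, aux_i2mu]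
    apply integral_congr_ae
    filter_upwards [hss] with t ht
    rw [ht]
  have h2 : ∫ t in (0:ℝ)..1, (bb + d * P t) * (2 * Yf g t * g t)
      = (2 * bb) * (∫ t in (0:ℝ)..1, Yf g t * g t)
        + d * ∫ t in (0:ℝ)..1, P t * (2 * Yf g t * g t) := by
    rw [aux_i2mu, aux_i2mu, aux_i2mu]
    rw [← MeasureTheory.integral_const_mul, ← MeasureTheory.integral_const_mul,
      ← integral_add ((aux_int_Yfg hg).const_mul (2*bb))
        ((aux_int_P2Yfg hP hg).const_mul d)]
    apply integral_congr_ae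
    filter_upwards with t
    ring
  rw [h1, h2, aux_Yf_mul (aux_igOn hg), hY1]
  ring

section S
variable {c A : ℝ}

lemma aux_sub01 (hA : 0 < A) (hc0 : 0 ≤ c) (hcA : c + A ≤ 1) :
    Ioo c (c + A) ⊆ Ioo (0:ℝ) 1 :=
  fun x hx => ⟨lt_of_le_of_lt hc0 hx.1, lt_of_lt_of_le hx.2 hcA⟩

lemma aux_pre01 (hA : 0 < A) :
    (fun t : ℝ => c + A * t) ⁻¹' (Ioo c (c + A)) = Ioo (0:ℝ) 1 := by
  have := aux_preimage c A hA 0 1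
  simpa using this

/-- Membership of the rescaled function in L². -/
lemma memS (hA : 0 < A) (hc0 : 0 ≤ c) (hcA : c + A ≤ 1) {g : ℝ → ℝ}
    (hg : MemLp g 2 (volume.restrict (Ioo (0:ℝ) 1))) :
    MemLp (fun t => g (c + A * t)) 2 (volume.restrict (Ioo (0:ℝ) 1)) := by
  have hgm : MemLp g 2 (volume.restrict (Ioo c (c + A))) :=
    hg.mono_measure (Measure.restrict_mono (aux_sub01 hA hc0 hcA) le_rfl)
  have hsm : MemLp g 2 (ENNReal.ofReal |A⁻¹| • volume.restrict (Ioo c (c + A))) :=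
    hgm.smul_measure ENNReal.ofReal_ne_top
  rw [← aux_map c A hA.ne' (Ioo c (c + A)), aux_pre01 hA] at hsm
  have haesm : AEStronglyMeasurable g
      (Measure.map (fun t : ℝ => c + A * t) (volume.restrict (Ioo (0:ℝ) 1))) := by
    rw [← aux_pre01 (c := c) hA, aux_map c A hA.ne' (Ioo c (c + A))]
    exact hgm.aestronglyMeasurable.mono_ac Measure.smul_absolutelyContinuous
  have ham : AEMeasurable (fun t : ℝ => c + A * t) (volume.restrict (Ioo (0:ℝ) 1)) :=
    (measurable_const_add c |>.comp (measurable_const_mul A)).aemeasurable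
  exact (memLp_map_measure_iff haesm ham).mp hsm

/-- Yf of the rescaled function. -/
lemma YfS (hA : 0 < A) (hc0 : 0 ≤ c) (hcA : c + A ≤ 1) {g : ℝ → ℝ}
    (hg : IntegrableOn g (Ioo (0:ℝ) 1) volume) (hYc : Yf g c = 0)
    {x : ℝ} (hx : x ∈ Icc (0:ℝ) 1) :
    Yf (fun t => g (c + A * t)) x = A⁻¹ * Yf g (c + A * x) := by
  have hcAx : c + A * x ∈ Icc (0:ℝ) 1 := by
    constructor
    · have : 0 ≤ A * x := mul_nonneg hA.le hx.1
      linarith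
    · have : A * x ≤ A := by nlinarith [hx.2]
      linarith
  have hc : c ∈ Icc (0:ℝ) 1 := ⟨hc0, by linarith⟩
  have h1 := intervalIntegral.integral_comp_add_mul (a := 0) (b := x) g hA.ne' c
  rw [Yf, h1]
  rw [show c + A * 0 = c by ring]
  rw [aux_Yf_sub hg hcAx hc, hYc, sub_zero, smul_eq_mul]
end S

section S2
variable {c A : ℝ}

/-- Full transfer lemma, S direction. -/
lemma transferS {P g : ℝ → ℝ} {bb d lam : ℝ} (hA : 0 < A) (hc0 : 0 ≤ c) (hcA : c + A ≤ 1)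
    (hP : MemLp P 2 (volume.restrict (Ioo (0:ℝ) 1)))
    (hss : ∀ᵐ t ∂(volume.restrict (Ioo (0:ℝ) 1)), P (c + A * t) = bb + d * P t)
    (hd : d ≠ 0)
    (hg : MemLp g 2 (volume.restrict (Ioo (0:ℝ) 1))) (hY1 : Yf g 1 = 0)
    (hsupp : ∀ x ∈ Icc (0:ℝ) 1, x ∉ Icc c (c + A) → Yf g x = 0) :
    Yf (fun t => g (c + A * t)) 1 = 0 ∧
    sqNorm (fun t => g (c + A * t)) = A⁻¹ * sqNorm g ∧
    qform P (A * d * lam) (fun t => g (c + A * t)) = A⁻¹ * qform P lam g := by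
  have hgi : IntegrableOn g (Ioo (0:ℝ) 1) volume := aux_igOn hg
  have hc1 : c ≤ 1 := by linarith
  have hcA0 : 0 ≤ c + A := by linarith
  have hYc : Yf g c = 0 := by
    apply aux_YfL hgi hc0 hc1
    intro x hx
    exact hsupp x ⟨hx.1, le_trans hx.2.le hc1⟩ (fun hmem => absurd hmem.1 (not_le.mpr hx.2))
  have hYcA : Yf g (c + A) = 0 := by
    apply aux_YfR' hgi hcA0 hcA hY1
    intro x hx
    exact hsupp x ⟨le_trans hcA0 hx.1.le, hx.2.le⟩
      (fun hmem => absurd hmem.2 (not_le.mpr hx.1))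
  have hvL : ∀ᵐ x : ℝ ∂volume, x ∈ Ioo 0 c → g x = 0 := by
    apply aux_vanish hgi le_rfl hc1
    intro x hx
    rcases eq_or_lt_of_le hx.2 with rfl | hxc
    · exact hYc
    · exact hsupp x ⟨hx.1, le_trans hx.2 hc1⟩ (fun hmem => absurd hmem.1 (not_le.mpr hxc))
  have hvR : ∀ᵐ x : ℝ ∂volume, x ∈ Ioo (c + A) 1 → g x = 0 := by
    apply aux_vanish hgi hcA0 le_rfl
    intro x hx
    rcases eq_or_lt_of_le hx.1 with heq | hxc
    · rw [← heq]; exact hYcA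
    · rcases eq_or_lt_of_le hx.2 with rfl | hx1
      · exact hY1
      · exact hsupp x ⟨le_trans hcA0 hx.1, hx.2⟩ (fun hmem => absurd hmem.2 (not_le.mpr hxc))
  have hcm : c ∈ Icc (0:ℝ) 1 := ⟨hc0, hc1⟩
  have hcAm : c + A ∈ Icc (0:ℝ) 1 := ⟨hcA0, hcA⟩
  have h0m : (0:ℝ) ∈ Icc (0:ℝ) 1 := by norm_num
  have h1m : (1:ℝ) ∈ Icc (0:ℝ) 1 := by norm_num
  have hYfS1 : Yf (fun t => g (c + A * t)) 1 = 0 := by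
    rw [YfS hA hc0 hcA hgi hYc h1m, mul_one, hYcA, mul_zero]
  have hg2i : IntegrableOn (fun t => g t ^ 2) (Ioo (0:ℝ) 1) volume := hg.integrable_sq
  have hsq0c : ∫ t in (0:ℝ)..c, g t ^ 2 = 0 := by
    have h0 : ∫ t in (0:ℝ)..c, g t ^ 2 = ∫ t in (0:ℝ)..c, (0:ℝ) := by
      apply intervalIntegral.integral_congr_ae
      filter_upwards [hvL, aux_ae_ne c] with t hvt htc htm
      rw [uIoc_of_le hc0] at htm
      rw [hvt ⟨htm.1, lt_of_le_of_ne htm.2 htc⟩]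
      ring
    rw [h0]; simp
  have hsqcA1 : ∫ t in (c + A)..1, g t ^ 2 = 0 := by
    have h0 : ∫ t in (c + A)..1, g t ^ 2 = ∫ t in (c + A)..1, (0:ℝ) := by
      apply intervalIntegral.integral_congr_ae
      filter_upwards [hvR, aux_ae_ne (1:ℝ)] with t hvt ht1 htm
      rw [uIoc_of_le hcA] at htm
      rw [hvt ⟨htm.1, lt_of_le_of_ne htm.2 ht1⟩]
      ring
    rw [h0]; simp
  have hsplit : ∫ t in c..(c + A), g t ^ 2 = ∫ t in (0:ℝ)..1, g t ^ 2 := by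
    rw [← intervalIntegral.integral_add_adjacent_intervals (a := (0:ℝ)) (b := c)
        (c := (1:ℝ)) (aux_ii hg2i h0m hcm) (aux_ii hg2i hcm h1m),
      ← intervalIntegral.integral_add_adjacent_intervals (a := c) (b := c + A)
        (c := (1:ℝ)) (aux_ii hg2i hcm hcAm) (aux_ii hg2i hcAm h1m),
      hsq0c, hsqcA1]
    ring
  have hsqS : (∫ t in (0:ℝ)..1, g (c + A * t) ^ 2) = A⁻¹ * ∫ t in (0:ℝ)..1, g t ^ 2 := by
    have h1 := intervalIntegral.integral_comp_add_mul (a := 0) (b := 1)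
      (fun u => g u ^ 2) hA.ne' c
    rw [h1, show c + A * 0 = c by ring, show c + A * 1 = c + A by ring,
      hsplit, smul_eq_mul]
  set Ψ : ℝ → ℝ := fun u => (2 * A⁻¹ * d⁻¹) * ((P u - bb) * (Yf g u * g u)) with hΨdef
  have hΨint : IntegrableOn Ψ (Ioo (0:ℝ) 1) volume := by
    have h1 : Integrable (fun u => (A⁻¹ * d⁻¹) * (P u * (2 * Yf g u * g u))
        - (2 * A⁻¹ * d⁻¹ * bb) * (Yf g u * g u)) (volume.restrict (Ioo (0:ℝ) 1)) :=
      ((aux_int_P2Yfg hP hg).const_mul _).sub ((aux_int_Yfg hg).const_mul _)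
    exact h1.congr (Eventually.of_forall (fun t => by rw [hΨdef]; ring))
  have hss' : ∀ᵐ t : ℝ ∂volume, t ∈ Ioo (0:ℝ) 1 → P (c + A * t) = bb + d * P t :=
    (ae_restrict_iff' measurableSet_Ioo).mp hss
  have hstep1 : ∫ t in (0:ℝ)..1, P t * (2 * Yf (fun s => g (c + A * s)) t
        * (g (c + A * t)))
      = ∫ t in (0:ℝ)..1, Ψ (c + A * t) := by
    apply intervalIntegral.integral_congr_ae
    filter_upwards [hss', aux_ae_ne (1:ℝ)] with t hsst ht1 htm
    rw [uIoc_of_le (by norm_num : (0:ℝ) ≤ 1)] at htm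
    have htIoo : t ∈ Ioo (0:ℝ) 1 := ⟨htm.1, lt_of_le_of_ne htm.2 ht1⟩
    have htIcc : t ∈ Icc (0:ℝ) 1 := ⟨htIoo.1.le, htIoo.2.le⟩
    rw [YfS hA hc0 hcA hgi hYc htIcc]
    have hPt : P t = d⁻¹ * (P (c + A * t) - bb) := by
      rw [hsst htIoo]
      field_simp
      ring
    rw [hPt, hΨdef]
    ring
  have hstep2 : ∫ t in (0:ℝ)..1, Ψ (c + A * t) = A⁻¹ * ∫ u in c..(c + A), Ψ u := by
    have h1 := intervalIntegral.integral_comp_add_mul (a := 0) (b := 1) Ψ hA.ne' c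
    rw [h1, show c + A * 0 = c by ring, show c + A * 1 = c + A by ring, smul_eq_mul]
  have hΨ0c : ∫ t in (0:ℝ)..c, Ψ t = 0 := by
    have h0 : ∫ t in (0:ℝ)..c, Ψ t = ∫ t in (0:ℝ)..c, (0:ℝ) := by
      apply intervalIntegral.integral_congr_ae
      filter_upwards [hvL, aux_ae_ne c] with t hvt htc htm
      rw [uIoc_of_le hc0] at htm
      rw [hΨdef]
      simp [hvt ⟨htm.1, lt_of_le_of_ne htm.2 htc⟩]
    rw [h0]; simp
  have hΨcA1 : ∫ t in (c + A)..1, Ψ t = 0 := by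
    have h0 : ∫ t in (c + A)..1, Ψ t = ∫ t in (c + A)..1, (0:ℝ) := by
      apply intervalIntegral.integral_congr_ae
      filter_upwards [hvR, aux_ae_ne (1:ℝ)] with t hvt ht1 htm
      rw [uIoc_of_le hcA] at htm
      rw [hΨdef]
      simp [hvt ⟨htm.1, lt_of_le_of_ne htm.2 ht1⟩]
    rw [h0]; simp
  have hΨsplit : ∫ u in c..(c + A), Ψ u = ∫ u in (0:ℝ)..1, Ψ u := by
    rw [← intervalIntegral.integral_add_adjacent_intervals (a := (0:ℝ)) (b := c)
        (c := (1:ℝ)) (aux_ii hΨint h0m hcm) (aux_ii hΨint hcm h1m),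
      ← intervalIntegral.integral_add_adjacent_intervals (a := c) (b := c + A)
        (c := (1:ℝ)) (aux_ii hΨint hcm hcAm) (aux_ii hΨint hcAm h1m),
      hΨ0c, hΨcA1]
    ring
  have hΨ01 : ∫ u in (0:ℝ)..1, Ψ u
      = (A⁻¹ * d⁻¹) * ∫ t in (0:ℝ)..1, P t * (2 * Yf g t * g t) := by
    have hsplit2 : ∫ u in (0:ℝ)..1, Ψ u
        = (A⁻¹ * d⁻¹) * (∫ t in (0:ℝ)..1, P t * (2 * Yf g t * g t))
          - (2 * A⁻¹ * d⁻¹ * bb) * ∫ t in (0:ℝ)..1, Yf g t * g t := by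
      rw [← intervalIntegral.integral_const_mul, ← intervalIntegral.integral_const_mul,
        ← intervalIntegral.integral_sub ((aux_ii (aux_int_P2Yfg hP hg) h0m h1m).const_mul _)
          ((aux_ii (aux_int_Yfg hg) h0m h1m).const_mul _)]
      apply intervalIntegral.integral_congr
      intro t _
      rw [hΨdef]
      ring
    rw [hsplit2, aux_Yf_mul hgi, hY1]
    ring
  have hterm2 : ∫ t in (0:ℝ)..1, P t * (2 * Yf (fun s => g (c + A * s)) t
        * (g (c + A * t)))
      = (A⁻¹ * A⁻¹ * d⁻¹) * ∫ t in (0:ℝ)..1, P t * (2 * Yf g t * g t) := by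
    rw [hstep1, hstep2, hΨsplit, hΨ01]
    ring
  refine ⟨hYfS1, hsqS, ?_⟩
  show (∫ t in (0:ℝ)..1, (g (c + A * t)) ^ 2)
      + (A * d * lam) * (∫ t in (0:ℝ)..1, P t * (2 * Yf (fun s => g (c + A * s)) t
        * (g (c + A * t)))) = A⁻¹ * qform P lam g
  rw [hterm2, hsqS, qform]
  have hA' : A ≠ 0 := hA.ne'
  field_simp
  ring
end S2

section T
variable {c A : ℝ}

/-- The T transform: extension by zero of the rescaled function. -/
noncomputable def Tf (c A : ℝ) (g : ℝ → ℝ) : ℝ → ℝ :=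
  fun x => (Ioo c (c + A)).indicator (fun y => g (-(c/A) + A⁻¹ * y)) x

lemma aux_idA (hA : 0 < A) (t : ℝ) : c + A * (-(c/A) + A⁻¹ * t) = t := by
  field_simp
  ring

lemma aux_idB (hA : 0 < A) : -(c/A) + A⁻¹ * c = 0 := by field_simp; ring

lemma aux_idC (hA : 0 < A) : -(c/A) + A⁻¹ * (c + A) = 1 := by
  have : A ≠ 0 := hA.ne'
  field_simp
  ring

lemma aux_pre10 (hA : 0 < A) :
    (fun x : ℝ => -(c/A) + A⁻¹ * x) ⁻¹' (Ioo (0:ℝ) 1) = Ioo c (c + A) := by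
  have h := aux_preimage (-(c/A)) A⁻¹ (inv_pos.mpr hA) c (c + A)
  rw [aux_idB hA, aux_idC hA] at h
  exact h.symm ▸ h

instance fincA (c A : ℝ) : IsFiniteMeasure (volume.restrict (Ioo c (c + A))) := by
  constructor
  rw [Measure.restrict_apply_univ, Real.volume_Ioo]
  exact ENNReal.ofReal_lt_top

/-- L² membership of the inner rescaled function on (c, c+A). -/
lemma memT' (hA : 0 < A) {g : ℝ → ℝ}
    (hg : MemLp g 2 (volume.restrict (Ioo (0:ℝ) 1))) :
    MemLp (fun x => g (-(c/A) + A⁻¹ * x)) 2 (volume.restrict (Ioo c (c + A))) := by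
  have hB : (A⁻¹ : ℝ) ≠ 0 := (inv_pos.mpr hA).ne'
  have hsm : MemLp g 2 (ENNReal.ofReal |A⁻¹⁻¹| • volume.restrict (Ioo (0:ℝ) 1)) :=
    hg.smul_measure ENNReal.ofReal_ne_top
  rw [← aux_map (-(c/A)) A⁻¹ hB (Ioo (0:ℝ) 1), aux_pre10 hA] at hsm
  have haesm : AEStronglyMeasurable g
      (Measure.map (fun x : ℝ => -(c/A) + A⁻¹ * x) (volume.restrict (Ioo c (c + A)))) := by
    rw [← aux_pre10 (c := c) hA, aux_map (-(c/A)) A⁻¹ hB (Ioo (0:ℝ) 1)]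
    exact hg.aestronglyMeasurable.mono_ac Measure.smul_absolutelyContinuous
  have ham : AEMeasurable (fun x : ℝ => -(c/A) + A⁻¹ * x)
      (volume.restrict (Ioo c (c + A))) :=
    (measurable_const_add _ |>.comp (measurable_const_mul _)).aemeasurable
  exact (memLp_map_measure_iff haesm ham).mp hsm

lemma memT (hA : 0 < A) (hc0 : 0 ≤ c) (hcA : c + A ≤ 1) {g : ℝ → ℝ}
    (hg : MemLp g 2 (volume.restrict (Ioo (0:ℝ) 1))) :
    MemLp (Tf c A g) 2 (volume.restrict (Ioo (0:ℝ) 1)) := by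
  rw [show Tf c A g = (Ioo c (c + A)).indicator (fun y => g (-(c/A) + A⁻¹ * y)) from rfl,
    memLp_indicator_iff_restrict measurableSet_Ioo,
    Measure.restrict_restrict measurableSet_Ioo,
    inter_eq_self_of_subset_left (aux_sub01 hA hc0 hcA)]
  exact memT' hA hg

lemma Tf_glob (hA : 0 < A) (hc0 : 0 ≤ c) (hcA : c + A ≤ 1) {g : ℝ → ℝ}
    (hg : MemLp g 2 (volume.restrict (Ioo (0:ℝ) 1))) :
    Integrable (Tf c A g) volume := by
  rw [show Tf c A g = (Ioo c (c + A)).indicator (fun y => g (-(c/A) + A⁻¹ * y)) from rfl,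
    integrable_indicator_iff measurableSet_Ioo]
  exact (memT' hA hg).integrable (by norm_num)

lemma YfT1 (hA : 0 < A) (hc0 : 0 ≤ c) {g : ℝ → ℝ} {x : ℝ} (hx0 : 0 ≤ x) (hxc : x ≤ c) :
    Yf (Tf c A g) x = 0 := by
  rw [Yf]
  have heq : EqOn (Tf c A g) (fun _ => (0:ℝ)) (uIcc 0 x) := by
    intro t ht
    rw [uIcc_of_le hx0] at ht
    apply indicator_of_notMem
    intro hmem
    exact absurd hmem.1 (not_lt.mpr (le_trans ht.2 hxc))
  rw [intervalIntegral.integral_congr heq]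
  simp

lemma YfT2 (hA : 0 < A) (hc0 : 0 ≤ c) (hcA : c + A ≤ 1) {g : ℝ → ℝ}
    (hg : MemLp g 2 (volume.restrict (Ioo (0:ℝ) 1)))
    {x : ℝ} (hx : x ∈ Icc c (c + A)) :
    Yf (Tf c A g) x = A * Yf g (-(c/A) + A⁻¹ * x) := by
  have hglob := Tf_glob hA hc0 hcA hg
  have hadd := intervalIntegral.integral_add_adjacent_intervals
    (a := (0:ℝ)) (b := c) (c := x) hglob.intervalIntegrable hglob.intervalIntegrable
  have h0c : ∫ t in (0:ℝ)..c, Tf c A g t = 0 := by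
    have := YfT1 (g := g) hA hc0 hc0 (le_refl c)
    rwa [Yf] at this
  have hcx : ∫ t in c..x, Tf c A g t
      = ∫ t in c..x, g (-(c/A) + A⁻¹ * t) := by
    apply intervalIntegral.integral_congr_ae
    filter_upwards [aux_ae_ne (c + A)] with t htne htm
    rw [uIoc_of_le hx.1] at htm
    have htIoo : t ∈ Ioo c (c + A) :=
      ⟨htm.1, lt_of_le_of_ne (le_trans htm.2 hx.2) htne⟩
    exact indicator_of_mem htIoo _
  have hcv : ∫ t in c..x, g (-(c/A) + A⁻¹ * t)
      = A * ∫ u in (0:ℝ)..(-(c/A) + A⁻¹ * x), g u := by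
    have h1 := intervalIntegral.integral_comp_add_mul (a := c) (b := x) g
      (inv_pos.mpr hA).ne' (-(c/A))
    rw [h1, aux_idB hA, inv_inv, smul_eq_mul]
  rw [Yf, ← hadd, h0c, hcx, hcv, zero_add, Yf]

lemma YfT3 (hA : 0 < A) (hc0 : 0 ≤ c) (hcA : c + A ≤ 1) {g : ℝ → ℝ}
    (hg : MemLp g 2 (volume.restrict (Ioo (0:ℝ) 1)))
    {x : ℝ} (hx : c + A ≤ x) :
    Yf (Tf c A g) x = A * Yf g 1 := by
  have hglob := Tf_glob hA hc0 hcA hg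
  have hadd := intervalIntegral.integral_add_adjacent_intervals
    (a := (0:ℝ)) (b := c + A) (c := x) hglob.intervalIntegrable hglob.intervalIntegrable
  have h1 : ∫ t in (0:ℝ)..(c + A), Tf c A g t = A * Yf g 1 := by
    have := YfT2 hA hc0 hcA hg (x := c + A) ⟨by linarith, le_refl _⟩
    rw [Yf] at this
    rw [this, aux_idC hA]
  have h2 : ∫ t in (c + A)..x, Tf c A g t = 0 := by
    have heq : EqOn (Tf c A g) (fun _ => (0:ℝ)) (uIcc (c + A) x) := by
      intro t ht
      rw [uIcc_of_le hx] at ht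
      apply indicator_of_notMem
      intro hmem
      exact absurd hmem.2 (not_lt.mpr ht.1)
    rw [intervalIntegral.integral_congr heq]
    simp
  rw [Yf, ← hadd, h1, h2, add_zero]
end T

section T2
variable {c A : ℝ}

lemma transferT {P g : ℝ → ℝ} {bb d lam : ℝ} (hA : 0 < A) (hc0 : 0 ≤ c) (hcA : c + A ≤ 1)
    (hP : MemLp P 2 (volume.restrict (Ioo (0:ℝ) 1)))
    (hss : ∀ᵐ t ∂(volume.restrict (Ioo (0:ℝ) 1)), P (c + A * t) = bb + d * P t)
    (hg : MemLp g 2 (volume.restrict (Ioo (0:ℝ) 1))) (hY1 : Yf g 1 = 0) :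
    Yf (Tf c A g) 1 = 0 ∧
    (∀ x ∈ Icc (0:ℝ) 1, x ∉ Icc c (c + A) → Yf (Tf c A g) x = 0) ∧
    sqNorm (Tf c A g) = A * sqNorm g ∧
    qform P lam (Tf c A g) = A * qform P (A * d * lam) g := by
  have hc1 : c ≤ 1 := by linarith
  have hcA0 : 0 ≤ c + A := by linarith
  have hcm : c ∈ Icc (0:ℝ) 1 := ⟨hc0, hc1⟩
  have hcAm : c + A ∈ Icc (0:ℝ) 1 := ⟨hcA0, hcA⟩
  have h0m : (0:ℝ) ∈ Icc (0:ℝ) 1 := by norm_num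
  have h1m : (1:ℝ) ∈ Icc (0:ℝ) 1 := by norm_num
  have hmem := memT hA hc0 hcA hg
  have hY1T : Yf (Tf c A g) 1 = 0 := by
    rw [YfT3 hA hc0 hcA hg hcA, hY1, mul_zero]
  have hsuppT : ∀ x ∈ Icc (0:ℝ) 1, x ∉ Icc c (c + A) → Yf (Tf c A g) x = 0 := by
    intro x hx hnot
    rcases not_and_or.mp (fun h => hnot ⟨h.1, h.2⟩) with h | h
    · exact YfT1 hA hc0 hx.1 (le_of_not_ge h)
    · rw [YfT3 hA hc0 hcA hg (le_of_not_ge h), hY1, mul_zero]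
  -- square integrand computations
  have hT2i : IntegrableOn (fun t => Tf c A g t ^ 2) (Ioo (0:ℝ) 1) volume :=
    hmem.integrable_sq
  have hzeroL : ∀ F : ℝ → ℝ, (∀ t, Tf c A g t = 0 → F t = 0) →
      ∫ t in (0:ℝ)..c, F t = 0 := by
    intro F hF
    have heq : EqOn F (fun _ => (0:ℝ)) (uIcc 0 c) := by
      intro t ht
      rw [uIcc_of_le hc0] at ht
      apply hF
      apply indicator_of_notMem
      intro hmemt
      exact absurd hmemt.1 (not_lt.mpr ht.2)
    rw [intervalIntegral.integral_congr heq]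
    simp
  have hzeroR : ∀ F : ℝ → ℝ, (∀ t, Tf c A g t = 0 → F t = 0) →
      ∫ t in (c + A)..1, F t = 0 := by
    intro F hF
    have heq : EqOn F (fun _ => (0:ℝ)) (uIcc (c + A) 1) := by
      intro t ht
      rw [uIcc_of_le hcA] at ht
      apply hF
      apply indicator_of_notMem
      intro hmemt
      exact absurd hmemt.2 (not_lt.mpr ht.1)
    rw [intervalIntegral.integral_congr heq]
    simp
  have hsplit : ∀ F : ℝ → ℝ, IntegrableOn F (Ioo (0:ℝ) 1) volume →
      (∀ t, Tf c A g t = 0 → F t = 0) →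
      ∫ t in (0:ℝ)..1, F t = ∫ t in c..(c + A), F t := by
    intro F hFi hF
    rw [← intervalIntegral.integral_add_adjacent_intervals (a := (0:ℝ)) (b := c)
        (c := (1:ℝ)) (aux_ii hFi h0m hcm) (aux_ii hFi hcm h1m),
      ← intervalIntegral.integral_add_adjacent_intervals (a := c) (b := c + A)
        (c := (1:ℝ)) (aux_ii hFi hcm hcAm) (aux_ii hFi hcAm h1m),
      hzeroL F hF, hzeroR F hF]
    ring
  -- sqNorm
  have hcc : c ≤ c + A := by linarith
  have hsq : (∫ t in (0:ℝ)..1, Tf c A g t ^ 2) = A * ∫ t in (0:ℝ)..1, g t ^ 2 := by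
    have h1 : ∫ t in (0:ℝ)..1, Tf c A g t ^ 2 = ∫ t in c..(c + A), Tf c A g t ^ 2 :=
      hsplit _ hT2i (fun t ht => by rw [ht]; ring)
    have h2 : ∫ t in c..(c + A), Tf c A g t ^ 2
        = ∫ t in c..(c + A), g (-(c/A) + A⁻¹ * t) ^ 2 := by
      apply intervalIntegral.integral_congr_ae
      filter_upwards [aux_ae_ne (c + A)] with t htne htm
      rw [uIoc_of_le hcc] at htm
      have htIoo : t ∈ Ioo c (c + A) := ⟨htm.1, lt_of_le_of_ne htm.2 htne⟩
      rw [show Tf c A g t = g (-(c/A) + A⁻¹ * t) from indicator_of_mem htIoo _]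
    have h3 := intervalIntegral.integral_comp_add_mul (a := c) (b := c + A)
      (fun u => g u ^ 2) (inv_pos.mpr hA).ne' (-(c/A))
    rw [h1, h2, h3, aux_idB hA, aux_idC hA, inv_inv, smul_eq_mul]
  -- weighted term
  set Φ : ℝ → ℝ := fun u => A * (P (c + A * u) * (2 * Yf g u * g u)) with hΦdef
  have hq2 : ∫ t in (0:ℝ)..1, P t * (2 * Yf (Tf c A g) t * Tf c A g t)
      = A * (A * (d * ∫ t in (0:ℝ)..1, P t * (2 * Yf g t * g t))) := by
    have hint : IntegrableOn (fun t => P t * (2 * Yf (Tf c A g) t * Tf c A g t))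
        (Ioo (0:ℝ) 1) volume := aux_int_P2Yfg hP hmem
    have h1 : ∫ t in (0:ℝ)..1, P t * (2 * Yf (Tf c A g) t * Tf c A g t)
        = ∫ t in c..(c + A), P t * (2 * Yf (Tf c A g) t * Tf c A g t) :=
      hsplit _ hint (fun t ht => by rw [ht]; ring)
    have h2 : ∫ t in c..(c + A), P t * (2 * Yf (Tf c A g) t * Tf c A g t)
        = ∫ t in c..(c + A), Φ (-(c/A) + A⁻¹ * t) := by
      apply intervalIntegral.integral_congr_ae
      filter_upwards [aux_ae_ne (c + A)] with t htne htm
      rw [uIoc_of_le hcc] at htm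
      have htIoo : t ∈ Ioo c (c + A) := ⟨htm.1, lt_of_le_of_ne htm.2 htne⟩
      have htIcc : t ∈ Icc c (c + A) := ⟨htIoo.1.le, htIoo.2.le⟩
      rw [show Tf c A g t = g (-(c/A) + A⁻¹ * t) from indicator_of_mem htIoo _,
        YfT2 hA hc0 hcA hg htIcc, hΦdef]
      simp only []
      rw [aux_idA hA t]
      ring
    have h3 := intervalIntegral.integral_comp_add_mul (a := c) (b := c + A)
      Φ (inv_pos.mpr hA).ne' (-(c/A))
    have h4 : ∫ u in (0:ℝ)..1, Φ u
        = A * (d * ∫ t in (0:ℝ)..1, P t * (2 * Yf g t * g t)) := by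
      have h5 : ∫ u in (0:ℝ)..1, Φ u
          = A * ∫ u in (0:ℝ)..1, P (c + A * u) * (2 * Yf g u * g u) := by
        rw [hΦdef]
        exact intervalIntegral.integral_const_mul _ _
      rw [h5, aux_ss_integral hP hg hss hY1]
    rw [h1, h2, h3, aux_idB hA, aux_idC hA, inv_inv, smul_eq_mul, h4]
  refine ⟨hY1T, hsuppT, hsq, ?_⟩
  show (∫ t in (0:ℝ)..1, Tf c A g t ^ 2)
      + lam * (∫ t in (0:ℝ)..1, P t * (2 * Yf (Tf c A g) t * Tf c A g t))
    = A * qform P (A * d * lam) g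
  rw [hsq, hq2, qform]
  ring
end T2

lemma Yf_sum {nd : ℕ} (v : Fin nd → (ℝ → ℝ))
    (hv : ∀ i, MemLp (v i) 2 (volume.restrict (Ioo (0:ℝ) 1)))
    (cv : Fin nd → ℝ) {x : ℝ} (hx : x ∈ Icc (0:ℝ) 1) :
    Yf (∑ i, cv i • v i) x = ∑ i, cv i * Yf (v i) x := by
  have h1 : (fun t => (∑ i, cv i • v i) t) = (fun t => ∑ i, cv i * v i t) := by
    funext t
    rw [Finset.sum_apply]
    congr 1
  rw [Yf, show (∑ i, cv i • v i) = (fun t => ∑ i, cv i * v i t) from h1,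
    intervalIntegral.integral_finset_sum]
  · congr 1
    funext i
    rw [Yf, intervalIntegral.integral_const_mul]
  · intro i _
    exact (aux_ii (aux_igOn (hv i)) (by norm_num) hx).const_mul (cv i)

lemma sum_S {nd : ℕ} (c A : ℝ) (v : Fin nd → (ℝ → ℝ)) (cv : Fin nd → ℝ) :
    (∑ i, cv i • (fun t => v i (c + A * t))) = fun t => (∑ i, cv i • v i) (c + A * t) := by
  funext t
  rw [Finset.sum_apply, Finset.sum_apply]
  congr 1

lemma sum_T {nd : ℕ} (c A : ℝ) (v : Fin nd → (ℝ → ℝ)) (cv : Fin nd → ℝ) :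
    (∑ i, cv i • Tf c A (v i)) = Tf c A (∑ i, cv i • v i) := by
  funext x
  rw [Finset.sum_apply]
  by_cases hx : x ∈ Ioo c (c + A)
  · rw [show Tf c A (∑ i, cv i • v i) x
        = (∑ i, cv i • v i) (-(c/A) + A⁻¹ * x) from indicator_of_mem hx _,
      Finset.sum_apply]
    congr 1
    funext i
    rw [Pi.smul_apply, show Tf c A (v i) x
        = v i (-(c/A) + A⁻¹ * x) from indicator_of_mem hx _]
    rfl
  · rw [show Tf c A (∑ i, cv i • v i) x = 0 from indicator_of_notMem hx _]
    apply Finset.sum_eq_zero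
    intro i _
    rw [Pi.smul_apply, show Tf c A (v i) x = 0 from indicator_of_notMem hx _]
    simp

theorem statement7
    (n m : ℕ) (hn : 2 ≤ n) (hm1 : 1 ≤ m) (hmn : m ≤ n)
    (a β d : ℕ → ℝ) (α : ℕ → ℝ)
    (ha : ∀ k, 1 ≤ k → k ≤ n → 0 < a k)
    (hsum : ∑ k ∈ Finset.Icc 1 n, a k = 1)
    (hα0 : α 0 = 0)
    (hα : ∀ k, 1 ≤ k → k ≤ n → α k = α (k - 1) + a k)
    (hd : ∀ k, 1 ≤ k → k ≤ n → k ≠ m → d k = 0)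
    (hdm : d m ≠ 0)
    (hcontr : a m * |d m| < 1)
    (P : ℝ → ℝ)
    (hP : MemLp P 2 (volume.restrict (Ioo (0:ℝ) 1)))
    (hss : ∀ k, 1 ≤ k → k ≤ n →
      ∀ᵐ t ∂(volume.restrict (Ioo (0:ℝ) 1)),
        P (α (k - 1) + a k * t) = β k + d k * P t)
    (lam : ℝ) :
    -- `N(λ, 𝔥₁) = N(a_m d_m λ, 𝔥)`
    negIdx P lam
        {g : ℝ → ℝ | InH g ∧
          ∀ x ∈ Icc (0:ℝ) 1, x ∉ Icc (α (m - 1)) (α m) → Yf g x = 0}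
      = negIdx P (a m * d m * lam) {g : ℝ → ℝ | InH g} := by
  classical
  have hA : 0 < a m := ha m hm1 hmn
  have hαm : α m = α (m - 1) + a m := hα m hm1 hmn
  have hαsum : ∀ k, k ≤ n → α k = ∑ j ∈ Finset.Icc 1 k, a j := by
    intro k
    induction k with
    | zero => intro _; simp [hα0]
    | succ k ih =>
      intro hk
      rw [hα (k + 1) (by omega) hk, Finset.sum_Icc_succ_top (by omega : 1 ≤ k + 1),
        ← ih (by omega)]
      simp
  have hc0 : 0 ≤ α (m - 1) := by
    rw [hαsum (m - 1) (by omega)]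
    apply Finset.sum_nonneg
    intro j hj
    rw [Finset.mem_Icc] at hj
    exact (ha j hj.1 (by omega)).le
  have hcA : α (m - 1) + a m ≤ 1 := by
    rw [← hαm, hαsum m hmn, ← hsum]
    apply Finset.sum_le_sum_of_subset_of_nonneg
    · exact Finset.Icc_subset_Icc_right hmn
    · intro j hj _
      rw [Finset.mem_Icc] at hj
      exact (ha j hj.1 hj.2).le
  have hssm : ∀ᵐ t ∂(volume.restrict (Ioo (0:ℝ) 1)),
      P (α (m - 1) + a m * t) = β m + d m * P t := hss m hm1 hmn
  set c := α (m - 1) with hcdef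
  set A := a m with hAdef
  have hIcc : Icc (α (m - 1)) (α m) = Icc c (c + A) := by rw [hαm]
  rw [hIcc]
  have h1m : (1:ℝ) ∈ Icc (0:ℝ) 1 := by norm_num
  unfold negIdx
  congr 1
  ext N
  simp only [mem_setOf_eq]
  constructor
  · rintro ⟨nd, rfl, v, hmem, hnd, ε, hε, hq⟩
    have hsupp : ∀ i, ∀ x ∈ Icc (0:ℝ) 1, x ∉ Icc c (c + A) → Yf (v i) x = 0 :=
      fun i => (hmem i).2
    refine ⟨nd, rfl, fun i => (fun t => v i (c + A * t)), ?_, ?_, ε, hε, ?_⟩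
    · intro i
      exact ⟨memS hA hc0 hcA (hmem i).1.1,
        (transferS (lam := lam) hA hc0 hcA hP hssm hdm (hmem i).1.1 (hmem i).1.2
          (hsupp i)).1⟩
    · intro cv hcv
      rw [sum_S]
      have hwmem : MemLp (∑ i, cv i • v i) 2 (volume.restrict (Ioo (0:ℝ) 1)) :=
        memLp_finset_sum' _ (fun i _ => ((hmem i).1.1).const_smul (cv i))
      have hwY1 : Yf (∑ i, cv i • v i) 1 = 0 := by
        rw [Yf_sum v (fun i => (hmem i).1.1) cv h1m]
        apply Finset.sum_eq_zero
        intro i _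
        rw [(hmem i).1.2, mul_zero]
      have hwsupp : ∀ x ∈ Icc (0:ℝ) 1, x ∉ Icc c (c + A) →
          Yf (∑ i, cv i • v i) x = 0 := by
        intro x hx hnx
        rw [Yf_sum v (fun i => (hmem i).1.1) cv hx]
        apply Finset.sum_eq_zero
        intro i _
        rw [hsupp i x hx hnx, mul_zero]
      rw [(transferS (lam := lam) hA hc0 hcA hP hssm hdm hwmem hwY1 hwsupp).2.1]
      exact mul_ne_zero (inv_ne_zero hA.ne') (hnd cv hcv)
    · intro cv
      rw [sum_S]
      have hwmem : MemLp (∑ i, cv i • v i) 2 (volume.restrict (Ioo (0:ℝ) 1)) :=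
        memLp_finset_sum' _ (fun i _ => ((hmem i).1.1).const_smul (cv i))
      have hwY1 : Yf (∑ i, cv i • v i) 1 = 0 := by
        rw [Yf_sum v (fun i => (hmem i).1.1) cv h1m]
        apply Finset.sum_eq_zero
        intro i _
        rw [(hmem i).1.2, mul_zero]
      have hwsupp : ∀ x ∈ Icc (0:ℝ) 1, x ∉ Icc c (c + A) →
          Yf (∑ i, cv i • v i) x = 0 := by
        intro x hx hnx
        rw [Yf_sum v (fun i => (hmem i).1.1) cv hx]
        apply Finset.sum_eq_zero
        intro i _
        rw [hsupp i x hx hnx, mul_zero]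
      have ht := transferS (lam := lam) hA hc0 hcA hP hssm hdm hwmem hwY1 hwsupp
      rw [ht.2.2, ht.2.1]
      have := hq cv
      calc A⁻¹ * qform P lam (∑ i, cv i • v i)
          ≤ A⁻¹ * (-ε * sqNorm (∑ i, cv i • v i)) :=
            mul_le_mul_of_nonneg_left this (inv_nonneg.mpr hA.le)
        _ = -ε * (A⁻¹ * sqNorm (∑ i, cv i • v i)) := by ring
  · rintro ⟨nd, rfl, v, hmem, hnd, ε, hε, hq⟩
    refine ⟨nd, rfl, fun i => Tf c A (v i), ?_, ?_, ε, hε, ?_⟩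
    · intro i
      have ht := transferT (lam := lam) (bb := β m) (d := d m)
        hA hc0 hcA hP hssm (hmem i).1 (hmem i).2
      exact ⟨⟨memT hA hc0 hcA (hmem i).1, ht.1⟩, ht.2.1⟩
    · intro cv hcv
      rw [sum_T]
      have hwmem : MemLp (∑ i, cv i • v i) 2 (volume.restrict (Ioo (0:ℝ) 1)) :=
        memLp_finset_sum' _ (fun i _ => ((hmem i).1).const_smul (cv i))
      have hwY1 : Yf (∑ i, cv i • v i) 1 = 0 := by
        rw [Yf_sum v (fun i => (hmem i).1) cv h1m]
        apply Finset.sum_eq_zero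
        intro i _
        rw [(hmem i).2, mul_zero]
      rw [(transferT (lam := lam) (bb := β m) (d := d m)
        hA hc0 hcA hP hssm hwmem hwY1).2.2.1]
      exact mul_ne_zero hA.ne' (hnd cv hcv)
    · intro cv
      rw [sum_T]
      have hwmem : MemLp (∑ i, cv i • v i) 2 (volume.restrict (Ioo (0:ℝ) 1)) :=
        memLp_finset_sum' _ (fun i _ => ((hmem i).1).const_smul (cv i))
      have hwY1 : Yf (∑ i, cv i • v i) 1 = 0 := by
        rw [Yf_sum v (fun i => (hmem i).1) cv h1m]
        apply Finset.sum_eq_zero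
        intro i _
        rw [(hmem i).2, mul_zero]
      have ht := transferT (lam := lam) (bb := β m) (d := d m)
        hA hc0 hcA hP hssm hwmem hwY1
      rw [ht.2.2.2, ht.2.2.1]
      have := hq cv
      calc A * qform P (A * d m * lam) (∑ i, cv i • v i)
          ≤ A * (-ε * sqNorm (∑ i, cv i • v i)) :=
            mul_le_mul_of_nonneg_left this hA.le
        _ = -ε * (A * sqNorm (∑ i, cv i • v i)) := by ring
end
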